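/- arXiv:2105.13799 — 8 statements merged into one kernel-verified Lean document; each statement's English description precedes it below -/
import Mathlib

section
/- Suppose the relative local error quadratures satisfy ε_{k,i} ≤ ε̂_i and the scaling weights satisfy w_i ≤ ŵ_i for every mesh segment k and every state i, and set E := Σᵢ Mᵢ(ŵᵢ+1)ε̂ᵢ (the weighted norm of the vector with entries (ŵᵢ+1)ε̂ᵢ). If Δ > E + θ̂, then the minimum inter-update time τ̲_u := (Δ − E − θ̂)/(E/(σh) + L_xΔ + v̂) is strictly positive, and the first event time t* := inf{t ∈ (0, t_f] : ‖δ(t)‖_M ≥ Δ} of the event-triggered scheme (with t* := t_f if no such time exists) satisfies t* ≥ min{τ̲_u, t_f}; in particular ‖δ(t)‖_M ≤ Δ for all t ∈ [0, min{τ̲_u, t_f}]. -/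
open Set MeasureTheory intervalIntegral
open scoped Classical

/-- **Minimum inter-update time under relative local error bounds (Theorem 1).**
Setting: plant `x` satisfies `ẋ = f(t,x,u) + v` (in Carathéodory/integral form) on `[0, t_f]`,
`f` is Lipschitz in the state with constant `Lx` w.r.t. the weighted norm
`‖z‖_M = ∑ i, M i * |z i|`, `‖v t‖_M ≤ v̂`; a mesh `0 = s 0 < … < s K = t_f` has resolution `h`
and quasi-uniformity `σ`; the approximate trajectory `x̃` is continuous, C¹ on each open mesh
segment with derivative `x̃'`, and starts within `θ̂` of the plant state.  If the relative local
error quadratures satisfy `ε_{k,i} = η_{k,i}/(w i + 1) ≤ ε̂ i`, the scaling weights satisfy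
`0 ≤ w i ≤ ŵ i`, `E = ∑ i, M i * (ŵ i + 1) * ε̂ i`, and `Δ > E + θ̂`, then
`τ̲ᵤ = (Δ - E - θ̂)/(E/(σh) + Lx Δ + v̂)` is strictly positive, the first event time
`t* = inf {t ∈ (0, t_f] | ‖δ t‖_M ≥ Δ}` (or `t_f` if there is none) satisfies
`t* ≥ min τ̲ᵤ t_f`, and `‖δ t‖_M ≤ Δ` for all `t ∈ [0, min τ̲ᵤ t_f]`, where `δ = x̃ - x`. -/
theorem min_inter_update_time_relative_error
    (n m : ℕ) (hn : 0 < n)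
    (tf : ℝ) (htf : 0 < tf)
    (f : ℝ → (Fin n → ℝ) → (Fin m → ℝ) → Fin n → ℝ)
    (u : ℝ → Fin m → ℝ) (v : ℝ → Fin n → ℝ)
    (M : Fin n → ℝ) (hM : ∀ i, 0 < M i)
    (Lx vhat θhat : ℝ) (hLx : 0 < Lx)
    (hLip : ∀ t z₁ z₂ uu,
      ∑ i, M i * |f t z₁ uu i - f t z₂ uu i| ≤ Lx * ∑ i, M i * |z₁ i - z₂ i|)
    (hv : ∀ t, ∑ i, M i * |v t i| ≤ vhat)
    -- mesh with resolution h and quasi-uniformity σ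
    (σ h : ℝ) (hσ0 : 0 < σ) (hσ1 : σ ≤ 1) (hh : 0 < h)
    (K : ℕ) (hK : 0 < K)
    (s : ℕ → ℝ) (hs0 : s 0 = 0) (hsK : s K = tf)
    (hseg : ∀ k < K, σ * h ≤ s (k + 1) - s k ∧ s (k + 1) - s k ≤ h)
    -- plant trajectory: absolutely continuous Carathéodory solution of the ODE
    (x : ℝ → Fin n → ℝ)
    (hxint : ∀ i, IntervalIntegrable (fun τ => f τ (x τ) (u τ) i + v τ i) volume 0 tf)
    (hx : ∀ t ∈ Icc (0 : ℝ) tf, ∀ i,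
      x t i = x 0 i + ∫ τ in (0 : ℝ)..t, (f τ (x τ) (u τ) i + v τ i))
    -- approximate (predicted) trajectory: continuous, piecewise C¹ on the mesh
    (xt xt' : ℝ → Fin n → ℝ)
    (hxtc : ∀ i, ContinuousOn (fun t => xt t i) (Icc (0 : ℝ) tf))
    (hxtd : ∀ k < K, ∀ t ∈ Ioo (s k) (s (k + 1)), ∀ i,
      HasDerivAt (fun τ => xt τ i) (xt' t i) t)
    (hxt'int : ∀ i, IntervalIntegrable (fun τ => xt' τ i) volume 0 tf)
    (hfxtint : ∀ i, IntervalIntegrable (fun τ => f τ (xt τ) (u τ) i) volume 0 tf)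
    (hxtFTC : ∀ t ∈ Icc (0 : ℝ) tf, ∀ i, xt t i = xt 0 i + ∫ τ in (0 : ℝ)..t, xt' τ i)
    -- initialization at the noisy measurement
    (hθ : ∑ i, M i * |xt 0 i - x 0 i| ≤ θhat)
    -- accuracy certificates: relative local error quadratures and scaling weights
    (w what εhat : Fin n → ℝ) (hw0 : ∀ i, 0 ≤ w i) (hww : ∀ i, w i ≤ what i)
    (hquad : ∀ k < K, ∀ i,
      (∫ τ in s k..s (k + 1), |xt' τ i - f τ (xt τ) (u τ) i|) / (w i + 1) ≤ εhat i)
    (E : ℝ) (hE : E = ∑ i, M i * ((what i + 1) * εhat i))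
    (Δ : ℝ) (hΔ : E + θhat < Δ)
    (τu : ℝ) (hτu : τu = (Δ - E - θhat) / (E / (σ * h) + Lx * Δ + vhat))
    (S : Set ℝ) (hS : S = {t | t ∈ Ioc (0 : ℝ) tf ∧ Δ ≤ ∑ i, M i * |xt t i - x t i|})
    (tstar : ℝ) (htstar : tstar = if S.Nonempty then sInf S else tf) :
    0 < τu ∧ min τu tf ≤ tstar ∧
      ∀ t ∈ Icc (0 : ℝ) (min τu tf), ∑ i, M i * |xt t i - x t i| ≤ Δ := by
  have h0tf : (0:ℝ) ≤ tf := htf.le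
  have hσh : 0 < σ * h := mul_pos hσ0 hh
  have hsum_nonneg : ∀ (y : Fin n → ℝ), 0 ≤ ∑ i, M i * |y i| :=
    fun y => Finset.sum_nonneg fun i _ => mul_nonneg (hM i).le (abs_nonneg _)
  have hθ0 : 0 ≤ θhat := le_trans (hsum_nonneg fun i => xt 0 i - x 0 i) hθ
  have hv0 : 0 ≤ vhat := le_trans (hsum_nonneg fun i => v 0 i) (hv 0)
  have hstep : ∀ k, k < K → σ * h ≤ s (k+1) - s k := fun k hk => (hseg k hk).1
  -- mesh monotonicity facts
  have hs_ge : ∀ N, N ≤ K → (N : ℝ) * (σ * h) ≤ s N := by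
    intro N
    induction N with
    | zero => intro _; simp [hs0]
    | succ mm ih =>
      intro hmK
      have h1 := hstep mm (by omega)
      have h2 := ih (by omega)
      have h3 : ((mm+1 : ℕ) : ℝ) * (σ * h) = (mm : ℝ) * (σ * h) + σ * h := by push_cast; ring
      linarith
  have hs_mono : ∀ b, b ≤ K → ∀ a, a ≤ b → s a ≤ s b := by
    intro b
    induction b with
    | zero => intro _ a ha; simp [Nat.le_zero.mp ha]
    | succ mm ih =>
      intro hbK a ha
      rcases Nat.lt_or_ge a (mm+1) with h' | h'
      · have h1 := ih (by omega) a (by omega)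
        have h2 := hstep mm (by omega)
        linarith
      · have : a = mm + 1 := by omega
        simp [this]
  have hs_le_tf : ∀ N, N ≤ K → s N ≤ tf := by
    intro N hN
    have := hs_mono K le_rfl N hN
    rwa [hsK] at this
  have hs_nonneg : ∀ N, N ≤ K → 0 ≤ s N := by
    intro N hN
    have := hs_mono N hN 0 (Nat.zero_le _)
    rwa [hs0] at this
  have hwpos : ∀ i, (0:ℝ) < w i + 1 := fun i => by have := hw0 i; linarith
  have hε0 : ∀ i, 0 ≤ εhat i := by
    intro i
    have h1 := hquad 0 hK i
    have h2 : 0 ≤ ∫ τ in (s 0)..(s (0+1)), |xt' τ i - f τ (xt τ) (u τ) i| :=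
      intervalIntegral.integral_nonneg (by have := hstep 0 hK; linarith)
        (fun τ _ => abs_nonneg _)
    exact le_trans (div_nonneg h2 (hwpos i).le) h1
  have hE0 : 0 ≤ E := by
    rw [hE]
    refine Finset.sum_nonneg fun i _ => mul_nonneg (hM i).le (mul_nonneg ?_ (hε0 i))
    have := hw0 i; have := hww i; linarith
  have hΔ0 : 0 < Δ := lt_of_le_of_lt (by linarith) hΔ
  set C := E / (σ * h) + Lx * Δ + vhat with hC
  have hC0 : 0 < C := by
    have h1 : 0 ≤ E / (σ*h) := div_nonneg hE0 hσh.le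
    have h2 := mul_pos hLx hΔ0
    rw [hC]; linarith
  have hτupos : 0 < τu := by
    rw [hτu]; exact div_pos (by linarith) hC0
  have hCτu : C * τu = Δ - E - θhat := by
    rw [hτu]; field_simp
  -- integrability helpers
  have hmonoI : ∀ {φ : ℝ → ℝ}, IntervalIntegrable φ volume 0 tf →
      ∀ a b : ℝ, 0 ≤ a → a ≤ b → b ≤ tf → IntervalIntegrable φ volume a b := by
    intro φ hφ a b ha hab hb
    apply hφ.mono_set
    rw [uIcc_of_le hab, uIcc_of_le h0tf]
    exact Icc_subset_Icc ha hb
  have hefint : ∀ i, IntervalIntegrable (fun τ => |xt' τ i - f τ (xt τ) (u τ) i|) volume 0 tf :=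
    fun i => ((hxt'int i).sub (hfxtint i)).abs
  have hGint : ∀ i, IntervalIntegrable
      (fun τ => |f τ (xt τ) (u τ) i - (f τ (x τ) (u τ) i + v τ i)|) volume 0 tf :=
    fun i => ((hfxtint i).sub (hxint i)).abs
  -- per-segment local error bound
  have hsegE : ∀ k, k < K →
      ∑ i, M i * ∫ τ in (s k)..(s (k+1)), |xt' τ i - f τ (xt τ) (u τ) i| ≤ E := by
    intro k hk
    rw [hE]
    refine Finset.sum_le_sum fun i _ => mul_le_mul_of_nonneg_left ?_ (hM i).le
    have h1 := hquad k hk i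
    have h2 : (∫ τ in (s k)..(s (k+1)), |xt' τ i - f τ (xt τ) (u τ) i|) ≤ εhat i * (w i + 1) :=
      (div_le_iff₀ (hwpos i)).mp h1
    have h3 : εhat i * (w i + 1) ≤ (what i + 1) * εhat i := by
      nlinarith [mul_nonneg (hε0 i) (sub_nonneg.mpr (hww i))]
    linarith
  -- total local error bound up to time t
  have hLE : ∀ t, 0 ≤ t → t ≤ tf →
      ∑ i, M i * ∫ τ in (0:ℝ)..t, |xt' τ i - f τ (xt τ) (u τ) i| ≤ E + E / (σ * h) * t := by
    intro t ht0 httf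
    have hex : ∃ N, t ≤ s N := ⟨K, by rw [hsK]; exact httf⟩
    set N := Nat.find hex with hNdef
    have hN : t ≤ s N := Nat.find_spec hex
    have hNK : N ≤ K := Nat.find_le (by rw [hsK]; exact httf)
    have hsNtf : s N ≤ tf := hs_le_tf N hNK
    have step1 : ∀ i, (∫ τ in (0:ℝ)..t, |xt' τ i - f τ (xt τ) (u τ) i|) ≤
        ∫ τ in (0:ℝ)..s N, |xt' τ i - f τ (xt τ) (u τ) i| := by
      intro i
      have hadd := intervalIntegral.integral_add_adjacent_intervals
        (hmonoI (hefint i) 0 t le_rfl ht0 httf) (hmonoI (hefint i) t (s N) ht0 hN hsNtf)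
      have h2 : 0 ≤ ∫ τ in t..s N, |xt' τ i - f τ (xt τ) (u τ) i| :=
        intervalIntegral.integral_nonneg hN (fun τ _ => abs_nonneg _)
      linarith
    have step2 : ∀ i, (∫ τ in (0:ℝ)..s N, |xt' τ i - f τ (xt τ) (u τ) i|) =
        ∑ k ∈ Finset.range N, ∫ τ in (s k)..(s (k+1)), |xt' τ i - f τ (xt τ) (u τ) i| := by
      intro i
      have := intervalIntegral.sum_integral_adjacent_intervals (a := s) (n := N)
        (fun k hk => hmonoI (hefint i) (s k) (s (k+1)) (hs_nonneg k (by omega))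
          (by have := hstep k (by omega); linarith) (hs_le_tf (k+1) (by omega)))
      rw [hs0] at this
      exact this.symm
    have hNE : (N : ℝ) * E ≤ E + E / (σ * h) * t := by
      rcases Nat.eq_zero_or_pos N with h0 | hpos
      · rw [h0]
        simp only [Nat.cast_zero, zero_mul]
        have : 0 ≤ E / (σ * h) * t := mul_nonneg (div_nonneg hE0 hσh.le) ht0
        linarith
      · obtain ⟨mm, hNm⟩ : ∃ mm, N = mm + 1 := ⟨N - 1, by omega⟩
        have hm : ¬ t ≤ s mm := Nat.find_min hex (by rw [← hNdef]; omega)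
        have hsm : (mm : ℝ) * (σ * h) ≤ s mm := hs_ge mm (by omega)
        have hmt : (mm : ℝ) ≤ t / (σ * h) := (le_div_iff₀ hσh).mpr (by push_neg at hm; linarith)
        have h2 : (mm : ℝ) * E ≤ (t / (σ * h)) * E := mul_le_mul_of_nonneg_right hmt hE0
        have h3 : (t / (σ * h)) * E = E / (σ * h) * t := by ring
        have h4 : ((N : ℕ) : ℝ) = (mm : ℝ) + 1 := by rw [hNm]; push_cast; ring
        rw [h4]
        nlinarith
    calc ∑ i, M i * ∫ τ in (0:ℝ)..t, |xt' τ i - f τ (xt τ) (u τ) i|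
        ≤ ∑ i, M i * ∑ k ∈ Finset.range N, ∫ τ in (s k)..(s (k+1)),
            |xt' τ i - f τ (xt τ) (u τ) i| := by
          refine Finset.sum_le_sum fun i _ => mul_le_mul_of_nonneg_left ?_ (hM i).le
          rw [← step2 i]; exact step1 i
      _ = ∑ k ∈ Finset.range N, ∑ i, M i * ∫ τ in (s k)..(s (k+1)),
            |xt' τ i - f τ (xt τ) (u τ) i| := by
          simp_rw [Finset.mul_sum]
          exact Finset.sum_comm
      _ ≤ ∑ k ∈ Finset.range N, E :=
          Finset.sum_le_sum fun k hk =>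
            hsegE k (lt_of_lt_of_le (Finset.mem_range.mp hk) hNK)
      _ = (N : ℝ) * E := by simp [Finset.sum_const, nsmul_eq_mul]
      _ ≤ E + E / (σ * h) * t := hNE
  -- pointwise Lipschitz + disturbance bound
  have hptw : ∀ τ, ∑ i, M i * |f τ (xt τ) (u τ) i - (f τ (x τ) (u τ) i + v τ i)| ≤
      Lx * (∑ i, M i * |xt τ i - x τ i|) + vhat := by
    intro τ
    have h1 : ∀ i, |f τ (xt τ) (u τ) i - (f τ (x τ) (u τ) i + v τ i)| ≤
        |f τ (xt τ) (u τ) i - f τ (x τ) (u τ) i| + |v τ i| := by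
      intro i
      have he : f τ (xt τ) (u τ) i - (f τ (x τ) (u τ) i + v τ i) =
          (f τ (xt τ) (u τ) i - f τ (x τ) (u τ) i) - v τ i := by ring
      rw [he]; exact abs_sub _ _
    calc ∑ i, M i * |f τ (xt τ) (u τ) i - (f τ (x τ) (u τ) i + v τ i)|
        ≤ ∑ i, (M i * |f τ (xt τ) (u τ) i - f τ (x τ) (u τ) i| + M i * |v τ i|) := by
          refine Finset.sum_le_sum fun i _ => ?_
          rw [← mul_add]
          exact mul_le_mul_of_nonneg_left (h1 i) (hM i).le
      _ = (∑ i, M i * |f τ (xt τ) (u τ) i - f τ (x τ) (u τ) i|) + ∑ i, M i * |v τ i| :=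
          Finset.sum_add_distrib
      _ ≤ Lx * (∑ i, M i * |xt τ i - x τ i|) + vhat :=
          add_le_add (hLip τ (xt τ) (x τ) (u τ)) (hv τ)
  -- the key a priori bound
  have hkey : ∀ t, 0 ≤ t → t ≤ tf →
      (∀ τ ∈ Ioo (0:ℝ) t, ∑ i, M i * |xt τ i - x τ i| ≤ Δ) →
      ∑ i, M i * |xt t i - x t i| ≤ θhat + E + C * t := by
    intro t ht0 httf hb
    have hid : ∀ i, xt t i - x t i = (xt 0 i - x 0 i) +
        ∫ τ in (0:ℝ)..t, (xt' τ i - (f τ (x τ) (u τ) i + v τ i)) := by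
      intro i
      have e1 := hxtFTC t ⟨ht0, httf⟩ i
      have e2 := hx t ⟨ht0, httf⟩ i
      have e3 : (∫ τ in (0:ℝ)..t, (xt' τ i - (f τ (x τ) (u τ) i + v τ i))) =
          (∫ τ in (0:ℝ)..t, xt' τ i) - ∫ τ in (0:ℝ)..t, (f τ (x τ) (u τ) i + v τ i) :=
        intervalIntegral.integral_sub (hmonoI (hxt'int i) 0 t le_rfl ht0 httf)
          (hmonoI (hxint i) 0 t le_rfl ht0 httf)
      rw [e1, e2, e3]; ring
    have habs : ∀ i, |xt t i - x t i| ≤ |xt 0 i - x 0 i| +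
        ((∫ τ in (0:ℝ)..t, |xt' τ i - f τ (xt τ) (u τ) i|) +
         ∫ τ in (0:ℝ)..t, |f τ (xt τ) (u τ) i - (f τ (x τ) (u τ) i + v τ i)|) := by
      intro i
      rw [hid i]
      refine le_trans (abs_add_le _ _) (add_le_add le_rfl ?_)
      refine le_trans (intervalIntegral.abs_integral_le_integral_abs ht0) ?_
      rw [← intervalIntegral.integral_add (hmonoI (hefint i) 0 t le_rfl ht0 httf)
        (hmonoI (hGint i) 0 t le_rfl ht0 httf)]
      refine intervalIntegral.integral_mono_on ht0
        ((hmonoI ((hxt'int i).sub (hxint i)) 0 t le_rfl ht0 httf).abs)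
        ((hmonoI (hefint i) 0 t le_rfl ht0 httf).add
          (hmonoI (hGint i) 0 t le_rfl ht0 httf)) ?_
      intro τ _
      have he : xt' τ i - (f τ (x τ) (u τ) i + v τ i) =
          (xt' τ i - f τ (xt τ) (u τ) i) +
            (f τ (xt τ) (u τ) i - (f τ (x τ) (u τ) i + v τ i)) := by ring
      rw [he]; exact abs_add_le _ _
    have hG3 : ∑ i, M i * ∫ τ in (0:ℝ)..t,
        |f τ (xt τ) (u τ) i - (f τ (x τ) (u τ) i + v τ i)| ≤ (Lx * Δ + vhat) * t := by
      have hswap : ∑ i, M i * ∫ τ in (0:ℝ)..t,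
          |f τ (xt τ) (u τ) i - (f τ (x τ) (u τ) i + v τ i)| =
          ∫ τ in (0:ℝ)..t, ∑ i, M i * |f τ (xt τ) (u τ) i - (f τ (x τ) (u τ) i + v τ i)| := by
        rw [intervalIntegral.integral_finset_sum
          (fun i _ => ((hmonoI (hGint i) 0 t le_rfl ht0 httf).const_mul (M i)))]
        exact Finset.sum_congr rfl fun i _ =>
          (intervalIntegral.integral_const_mul _ _).symm
      rw [hswap, intervalIntegral.integral_of_le ht0, integral_Ioc_eq_integral_Ioo]
      have hint1 : IntegrableOn
          (fun τ => ∑ i, M i * |f τ (xt τ) (u τ) i - (f τ (x τ) (u τ) i + v τ i)|)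
          (Ioo (0:ℝ) t) volume := by
        refine IntegrableOn.mono_set ?_ Ioo_subset_Ioc_self
        exact MeasureTheory.integrable_finset_sum _
          (fun i _ => ((hmonoI (hGint i) 0 t le_rfl ht0 httf).1).const_mul (M i))
      have hle : (∫ τ in Ioo (0:ℝ) t,
          ∑ i, M i * |f τ (xt τ) (u τ) i - (f τ (x τ) (u τ) i + v τ i)|) ≤
          ∫ _ in Ioo (0:ℝ) t, (Lx * Δ + vhat) := by
        refine setIntegral_mono_on hint1 (integrableOn_const measure_Ioo_lt_top.ne)
          measurableSet_Ioo ?_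
        intro τ hτ
        refine le_trans (hptw τ) ?_
        have := hb τ hτ
        nlinarith
      have hconst : (∫ _ in Ioo (0:ℝ) t, (Lx * Δ + vhat)) = (Lx * Δ + vhat) * t := by
        rw [setIntegral_const]
        rw [measureReal_def, Real.volume_Ioo]
        rw [ENNReal.toReal_ofReal (by linarith)]
        rw [smul_eq_mul]
        ring
      linarith
    calc ∑ i, M i * |xt t i - x t i|
        ≤ ∑ i, M i * (|xt 0 i - x 0 i| +
            ((∫ τ in (0:ℝ)..t, |xt' τ i - f τ (xt τ) (u τ) i|) +
             ∫ τ in (0:ℝ)..t, |f τ (xt τ) (u τ) i - (f τ (x τ) (u τ) i + v τ i)|)) :=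
          Finset.sum_le_sum fun i _ => mul_le_mul_of_nonneg_left (habs i) (hM i).le
      _ = (∑ i, M i * |xt 0 i - x 0 i|) +
            ((∑ i, M i * ∫ τ in (0:ℝ)..t, |xt' τ i - f τ (xt τ) (u τ) i|) +
             ∑ i, M i * ∫ τ in (0:ℝ)..t,
               |f τ (xt τ) (u τ) i - (f τ (x τ) (u τ) i + v τ i)|) := by
          simp_rw [mul_add]
          rw [Finset.sum_add_distrib, Finset.sum_add_distrib]
      _ ≤ θhat + ((E + E / (σ * h) * t) + (Lx * Δ + vhat) * t) :=
          add_le_add hθ (add_le_add (hLE t ht0 httf) hG3)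
      _ = θhat + E + C * t := by rw [hC]; ring
  -- continuity of the prediction error norm
  have hxcont : ∀ i, ContinuousOn (fun t => x t i) (Icc (0:ℝ) tf) := by
    intro i
    have h1 : ContinuousOn
        (fun t => x 0 i + ∫ τ in (0:ℝ)..t, (f τ (x τ) (u τ) i + v τ i)) (Icc (0:ℝ) tf) := by
      refine continuousOn_const.add ?_
      have := intervalIntegral.continuousOn_primitive_interval' (hxint i)
        (a := 0) left_mem_uIcc
      rwa [uIcc_of_le h0tf] at this
    exact h1.congr fun t ht => hx t ht i
  have hgcont : ContinuousOn (fun t => ∑ i, M i * |xt t i - x t i|) (Icc (0:ℝ) tf) := by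
    have : ∀ (F : Finset (Fin n)),
        ContinuousOn (fun t => ∑ i ∈ F, M i * |xt t i - x t i|) (Icc (0:ℝ) tf) := by
      intro F
      induction F using Finset.induction with
      | empty => simpa using continuousOn_const
      | @insert j F hnot ih =>
        simp_rw [Finset.sum_insert hnot]
        exact (continuousOn_const.mul ((hxtc j).sub (hxcont j)).abs).add ih
    exact this Finset.univ
  set T := min τu tf with hT
  have hT0 : 0 < T := lt_min hτupos htf
  have hTtf : T ≤ tf := min_le_right _ _
  have hTτu : T ≤ τu := min_le_left _ _
  -- the main claim
  have main : ∀ t ∈ Icc (0:ℝ) T, ∑ i, M i * |xt t i - x t i| ≤ Δ := by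
    by_contra hcon
    push_neg at hcon
    obtain ⟨t₀, ht₀, ht₀Δ⟩ := hcon
    set B := {t ∈ Icc (0:ℝ) T | Δ ≤ ∑ i, M i * |xt t i - x t i|} with hBdef
    have hBne : B.Nonempty := ⟨t₀, ht₀, ht₀Δ.le⟩
    have hBbdd : BddBelow B := ⟨0, fun b hb => hb.1.1⟩
    have hBclosed : IsClosed B := by
      have h1 : B = Icc (0:ℝ) T ∩ (fun t => ∑ i, M i * |xt t i - x t i|) ⁻¹' Ici Δ := by
        ext τ; simp [hBdef, Set.mem_sep_iff]
      rw [h1]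
      exact (hgcont.mono (Icc_subset_Icc le_rfl hTtf)).preimage_isClosed_of_isClosed
        isClosed_Icc isClosed_Ici
    set c := sInf B with hc
    have hcB : c ∈ B := hBclosed.csInf_mem hBne hBbdd
    have hcT : c ∈ Icc (0:ℝ) T := hcB.1
    have hclt : ∀ τ, 0 ≤ τ → τ < c → ∑ i, M i * |xt τ i - x τ i| < Δ := by
      intro τ hτ0 hlt
      by_contra hge
      push_neg at hge
      have hτB : τ ∈ B := ⟨⟨hτ0, le_trans hlt.le hcT.2⟩, hge⟩
      exact absurd (csInf_le hBbdd hτB) (not_le.mpr hlt)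
    have hck := hkey c hcT.1 (le_trans hcT.2 hTtf)
      (fun τ hτ => (hclt τ hτ.1.le hτ.2).le)
    have h1 : C * τu ≤ C * c := by
      have h2 := hcB.2
      rw [hCτu]
      linarith
    have hcτu : τu ≤ c := le_of_mul_le_mul_left h1 hC0
    have hceq : c = T := le_antisymm hcT.2 (le_trans hTτu hcτu)
    have hct₀ : c ≤ t₀ := csInf_le hBbdd ⟨ht₀, ht₀Δ.le⟩
    have ht₀c : t₀ = c := le_antisymm (hceq ▸ ht₀.2) hct₀
    have hfin : ∑ i, M i * |xt c i - x c i| ≤ Δ := by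
      have h3 : C * c ≤ C * τu :=
        mul_le_mul_of_nonneg_left (by rw [hceq]; exact hTτu) hC0.le
      linarith [hck, hCτu.le]
    rw [ht₀c] at ht₀Δ
    linarith
  refine ⟨hτupos, ?_, fun t ht => main t ht⟩
  rw [htstar]
  split_ifs with hSne
  · refine le_csInf hSne ?_
    intro b hb
    rw [hS] at hb
    obtain ⟨⟨hb0, hbtf⟩, hbΔ⟩ := hb
    by_contra hlt
    push_neg at hlt
    have hbkey := hkey b hb0.le hbtf
      (fun τ hτ => main τ ⟨hτ.1.le, le_trans hτ.2.le hlt.le⟩)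
    have h2 : C * b < C * τu := mul_lt_mul_of_pos_left (lt_of_lt_of_le hlt hTτu) hC0
    linarith [hCτu.le, hCτu.ge]
  · exact min_le_right _ _
end

section
/- Fix t ∈ [0, t_f] and suppose the prediction error satisfies ‖δ(τ)‖_M ≤ Δ for all τ ∈ [0, t]. If the relative local error quadratures satisfy ε_{k,i} ≤ ε̂_i and the scaling weights satisfy w_i ≤ ŵ_i for every mesh segment k and every state i, and E := Σᵢ Mᵢ(ŵᵢ+1)ε̂ᵢ, then ‖δ(t)‖_M ≤ (t/(σh) + 1)·E + θ̂ + t(L_xΔ + v̂). -/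
open Set MeasureTheory intervalIntegral

set_option maxHeartbeats 1000000

/-- **Prediction-error growth bound from relative local error quadratures.**
Setting as in the paper: plant `x` satisfies `ẋ = f(t,x,u) + v` (integral form) on `[0, t_f]`,
`f` is Lipschitz in the state with constant `Lx` w.r.t. the weighted norm
`‖z‖_M = ∑ i, M i * |z i|`, `‖v t‖_M ≤ v̂`; a mesh `0 = s 0 < … < s K = t_f` has resolution `h`
and quasi-uniformity `σ`; the approximate trajectory `x̃` is continuous, C¹ on each open mesh
segment with derivative `x̃'`, and starts within `θ̂` of the plant state.  Fix `t ∈ [0, t_f]`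
and suppose `‖δ τ‖_M ≤ Δ` for all `τ ∈ [0, t]`, where `δ = x̃ - x`.  If the relative local
error quadratures satisfy `η_{k,i}/(w i + 1) ≤ ε̂ i`, the weights satisfy `0 ≤ w i ≤ ŵ i`, and
`E = ∑ i, M i * (ŵ i + 1) * ε̂ i`, then
`‖δ t‖_M ≤ (t/(σh) + 1) E + θ̂ + t (Lx Δ + v̂)`. -/
theorem prediction_error_bound_relative_error
    (n m : ℕ) (hn : 0 < n)
    (tf : ℝ) (htf : 0 < tf)
    (f : ℝ → (Fin n → ℝ) → (Fin m → ℝ) → Fin n → ℝ)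
    (u : ℝ → Fin m → ℝ) (v : ℝ → Fin n → ℝ)
    (M : Fin n → ℝ) (hM : ∀ i, 0 < M i)
    (Lx vhat θhat : ℝ)
    (hLip : ∀ t z₁ z₂ uu,
      ∑ i, M i * |f t z₁ uu i - f t z₂ uu i| ≤ Lx * ∑ i, M i * |z₁ i - z₂ i|)
    (hv : ∀ t, ∑ i, M i * |v t i| ≤ vhat)
    -- mesh with resolution h and quasi-uniformity σ
    (σ h : ℝ) (hσ0 : 0 < σ) (hσ1 : σ ≤ 1) (hh : 0 < h)
    (K : ℕ) (hK : 0 < K)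
    (s : ℕ → ℝ) (hs0 : s 0 = 0) (hsK : s K = tf)
    (hseg : ∀ k < K, σ * h ≤ s (k + 1) - s k ∧ s (k + 1) - s k ≤ h)
    -- plant trajectory: absolutely continuous Carathéodory solution of the ODE
    (x : ℝ → Fin n → ℝ)
    (hxint : ∀ i, IntervalIntegrable (fun τ => f τ (x τ) (u τ) i + v τ i) volume 0 tf)
    (hx : ∀ t ∈ Icc (0 : ℝ) tf, ∀ i,
      x t i = x 0 i + ∫ τ in (0 : ℝ)..t, (f τ (x τ) (u τ) i + v τ i))
    -- approximate (predicted) trajectory: continuous, piecewise C¹ on the mesh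
    (xt xt' : ℝ → Fin n → ℝ)
    (hxtc : ∀ i, ContinuousOn (fun t => xt t i) (Icc (0 : ℝ) tf))
    (hxtd : ∀ k < K, ∀ t ∈ Ioo (s k) (s (k + 1)), ∀ i,
      HasDerivAt (fun τ => xt τ i) (xt' t i) t)
    (hxt'int : ∀ i, IntervalIntegrable (fun τ => xt' τ i) volume 0 tf)
    (hfxtint : ∀ i, IntervalIntegrable (fun τ => f τ (xt τ) (u τ) i) volume 0 tf)
    (hxtFTC : ∀ t ∈ Icc (0 : ℝ) tf, ∀ i, xt t i = xt 0 i + ∫ τ in (0 : ℝ)..t, xt' τ i)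
    -- initialization at the noisy measurement
    (hθ : ∑ i, M i * |xt 0 i - x 0 i| ≤ θhat)
    -- accuracy certificates: relative local error quadratures and scaling weights
    (w what εhat : Fin n → ℝ) (hw0 : ∀ i, 0 ≤ w i) (hww : ∀ i, w i ≤ what i)
    (hquad : ∀ k < K, ∀ i,
      (∫ τ in s k..s (k + 1), |xt' τ i - f τ (xt τ) (u τ) i|) / (w i + 1) ≤ εhat i)
    (E : ℝ) (hE : E = ∑ i, M i * ((what i + 1) * εhat i))
    (Δ : ℝ)
    -- the fixed time and the event-triggering guarantee up to it
    (t : ℝ) (ht : t ∈ Icc (0 : ℝ) tf)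
    (hδ : ∀ τ ∈ Icc (0 : ℝ) t, ∑ i, M i * |xt τ i - x τ i| ≤ Δ) :
    ∑ i, M i * |xt t i - x t i| ≤ (t / (σ * h) + 1) * E + θhat + t * (Lx * Δ + vhat) := by
  classical
  obtain ⟨ht0, httf⟩ := ht
  have hσh : 0 < σ * h := mul_pos hσ0 hh
  -- mesh point monotonicity and lower bounds
  have hstep : ∀ k < K, s k ≤ s (k + 1) := by
    intro k hk; have h1 := (hseg k hk).1; nlinarith
  have hs_mono : ∀ j k, j ≤ k → k ≤ K → s j ≤ s k := by
    intro j k hjk hkK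
    induction k with
    | zero => interval_cases j; rfl
    | succ k ih =>
      rcases Nat.lt_or_ge j (k + 1) with hc | hc
      · exact le_trans (ih (Nat.lt_succ_iff.mp hc) (by omega)) (hstep k (by omega))
      · have : j = k + 1 := by omega
        rw [this]
  have hs_lb : ∀ k ≤ K, σ * h * k ≤ s k := by
    intro k hkK
    induction k with
    | zero => simp [hs0]
    | succ k ih =>
      have h1 := (hseg k (by omega)).1
      have h2 := ih (by omega)
      push_cast
      nlinarith
  have hs_mem : ∀ k ≤ K, s k ∈ Icc (0 : ℝ) tf := by
    intro k hkK
    constructor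
    · rw [← hs0]; exact hs_mono 0 k (Nat.zero_le k) hkK
    · rw [← hsK]; exact hs_mono k K hkK le_rfl
  -- subset facts for restricting integrability
  have hsub : uIcc (0 : ℝ) t ⊆ uIcc (0 : ℝ) tf :=
    uIcc_subset_uIcc (by rw [uIcc_of_le htf.le]; exact ⟨le_rfl, htf.le⟩)
      (by rw [uIcc_of_le htf.le]; exact ⟨ht0, httf⟩)
  have hsubseg : ∀ a b : ℝ, a ∈ Icc (0:ℝ) tf → b ∈ Icc (0:ℝ) tf →
      uIcc a b ⊆ uIcc (0 : ℝ) tf := by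
    intro a b hab hbb
    exact uIcc_subset_uIcc (by rw [uIcc_of_le htf.le]; exact hab)
      (by rw [uIcc_of_le htf.le]; exact hbb)
  -- integrability of the pieces
  have hai : ∀ i, IntervalIntegrable (fun τ => xt' τ i - f τ (xt τ) (u τ) i) volume 0 tf :=
    fun i => (hxt'int i).sub (hfxtint i)
  have hgi : ∀ i, IntervalIntegrable
      (fun τ => xt' τ i - (f τ (x τ) (u τ) i + v τ i)) volume 0 tf :=
    fun i => (hxt'int i).sub (hxint i)
  have hri : ∀ i, IntervalIntegrable
      (fun τ => f τ (xt τ) (u τ) i - f τ (x τ) (u τ) i - v τ i) volume 0 tf := by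
    intro i
    have heq : (fun τ => f τ (xt τ) (u τ) i - f τ (x τ) (u τ) i - v τ i) =
        (fun τ => (xt' τ i - (f τ (x τ) (u τ) i + v τ i)) -
          (xt' τ i - f τ (xt τ) (u τ) i)) := by funext τ; ring
    rw [heq]
    exact (hgi i).sub (hai i)
  -- the key identity
  have hδeq : ∀ i, xt t i - x t i = (xt 0 i - x 0 i) +
      ∫ τ in (0:ℝ)..t, (xt' τ i - (f τ (x τ) (u τ) i + v τ i)) := by
    intro i
    rw [hxtFTC t ⟨ht0, httf⟩ i, hx t ⟨ht0, httf⟩ i,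
      intervalIntegral.integral_sub ((hxt'int i).mono_set hsub) ((hxint i).mono_set hsub)]
    ring
  -- per-component bound
  have hBi : ∀ i, |xt t i - x t i| ≤ |xt 0 i - x 0 i| +
      ((∫ τ in (0:ℝ)..t, |xt' τ i - f τ (xt τ) (u τ) i|) +
       ∫ τ in (0:ℝ)..t, |f τ (xt τ) (u τ) i - f τ (x τ) (u τ) i - v τ i|) := by
    intro i
    rw [hδeq i]
    refine le_trans (abs_add_le _ _) (add_le_add le_rfl ?_)
    calc |∫ τ in (0:ℝ)..t, (xt' τ i - (f τ (x τ) (u τ) i + v τ i))|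
        ≤ ∫ τ in (0:ℝ)..t, |xt' τ i - (f τ (x τ) (u τ) i + v τ i)| :=
          intervalIntegral.abs_integral_le_integral_abs ht0
      _ ≤ ∫ τ in (0:ℝ)..t, (|xt' τ i - f τ (xt τ) (u τ) i| +
            |f τ (xt τ) (u τ) i - f τ (x τ) (u τ) i - v τ i|) := by
          refine intervalIntegral.integral_mono_on ht0
            ((hgi i).abs.mono_set hsub)
            (((hai i).abs.add (hri i).abs).mono_set hsub) ?_
          intro τ _
          have : xt' τ i - (f τ (x τ) (u τ) i + v τ i) =
              (xt' τ i - f τ (xt τ) (u τ) i) +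
              (f τ (xt τ) (u τ) i - f τ (x τ) (u τ) i - v τ i) := by ring
          rw [this]
          exact abs_add_le _ _
      _ = (∫ τ in (0:ℝ)..t, |xt' τ i - f τ (xt τ) (u τ) i|) +
          ∫ τ in (0:ℝ)..t, |f τ (xt τ) (u τ) i - f τ (x τ) (u τ) i - v τ i| :=
          intervalIntegral.integral_add ((hai i).abs.mono_set hsub)
            ((hri i).abs.mono_set hsub)
  -- nonnegativity of Lipschitz constant
  have hLx0 : 0 ≤ Lx := by
    have h1 := hLip 0 (fun _ => (1:ℝ)) (fun _ => (0:ℝ)) (fun _ => (0:ℝ))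
    have h2 : (0:ℝ) ≤ ∑ i, M i * |f 0 (fun _ => (1:ℝ)) (fun _ => (0:ℝ)) i -
        f 0 (fun _ => (0:ℝ)) (fun _ => (0:ℝ)) i| :=
      Finset.sum_nonneg fun i _ => mul_nonneg (hM i).le (abs_nonneg _)
    have h3 : (0:ℝ) < ∑ i : Fin n, M i := by
      refine Finset.sum_pos (fun i _ => hM i) ?_
      have : Nonempty (Fin n) := Fin.pos_iff_nonempty.mp hn
      exact Finset.univ_nonempty
    simp only [sub_zero, abs_one, mul_one] at h1
    nlinarith
  -- bound on the Lipschitz + disturbance part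
  have hR : (∑ i, M i * ∫ τ in (0:ℝ)..t,
      |f τ (xt τ) (u τ) i - f τ (x τ) (u τ) i - v τ i|) ≤ t * (Lx * Δ + vhat) := by
    have h1 : (∑ i, M i * ∫ τ in (0:ℝ)..t,
        |f τ (xt τ) (u τ) i - f τ (x τ) (u τ) i - v τ i|) =
        ∫ τ in (0:ℝ)..t, ∑ i, M i *
          |f τ (xt τ) (u τ) i - f τ (x τ) (u τ) i - v τ i| := by
      rw [intervalIntegral.integral_finset_sum
        (fun i _ => ((hri i).abs.mono_set hsub).const_mul (M i))]
      simp_rw [intervalIntegral.integral_const_mul]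
    rw [h1]
    have h2 : ∫ τ in (0:ℝ)..t, (Lx * Δ + vhat) = t * (Lx * Δ + vhat) := by
      simp [intervalIntegral.integral_const]; ring
    rw [← h2]
    have hint3 : IntervalIntegrable (fun τ => ∑ i, M i *
        |f τ (xt τ) (u τ) i - f τ (x τ) (u τ) i - v τ i|) volume 0 t := by
      have h4 := IntervalIntegrable.sum Finset.univ
        (f := fun i τ => M i * |f τ (xt τ) (u τ) i - f τ (x τ) (u τ) i - v τ i|)
        (fun i _ => ((hri i).abs.mono_set hsub).const_mul (M i))
      have heq : (fun τ => ∑ i, M i *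
          |f τ (xt τ) (u τ) i - f τ (x τ) (u τ) i - v τ i|) =
          ∑ i : Fin n, fun τ => M i *
            |f τ (xt τ) (u τ) i - f τ (x τ) (u τ) i - v τ i| := by
        funext τ; simp
      rw [heq]; exact h4
    refine intervalIntegral.integral_mono_on ht0 hint3 intervalIntegrable_const ?_
    intro τ hτ
    have htri : ∀ i, |f τ (xt τ) (u τ) i - f τ (x τ) (u τ) i - v τ i| ≤
        |f τ (xt τ) (u τ) i - f τ (x τ) (u τ) i| + |v τ i| := fun i => abs_sub _ _
    calc ∑ i, M i * |f τ (xt τ) (u τ) i - f τ (x τ) (u τ) i - v τ i|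
        ≤ ∑ i, M i * (|f τ (xt τ) (u τ) i - f τ (x τ) (u τ) i| + |v τ i|) :=
          Finset.sum_le_sum fun i _ =>
            mul_le_mul_of_nonneg_left (htri i) (hM i).le
      _ = (∑ i, M i * |f τ (xt τ) (u τ) i - f τ (x τ) (u τ) i|) +
          ∑ i, M i * |v τ i| := by
          simp [mul_add, Finset.sum_add_distrib]
      _ ≤ Lx * (∑ i, M i * |xt τ i - x τ i|) + vhat :=
          add_le_add (hLip τ (xt τ) (x τ) (u τ)) (hv τ)
      _ ≤ Lx * Δ + vhat := by
          have := hδ τ hτ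
          nlinarith
  -- the number of mesh segments needed to cover [0, t]
  have hex : ∃ k, t ≤ s k := ⟨K, by rw [hsK]; exact httf⟩
  set N := Nat.find hex with hNdef
  have hN1 : t ≤ s N := Nat.find_spec hex
  have hNK : N ≤ K := Nat.find_le (by rw [hsK]; exact httf)
  have hNmin : ∀ k < N, s k < t := fun k hk => lt_of_not_ge (Nat.find_min hex hk)
  -- εhat is nonnegative
  have hε0 : ∀ i, 0 ≤ εhat i := by
    intro i
    refine le_trans (div_nonneg ?_ ?_) (hquad 0 hK i)
    · exact intervalIntegral.integral_nonneg (hstep 0 hK) (fun τ _ => abs_nonneg _)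
    · linarith [hw0 i]
  -- quadrature bound on each segment
  have hseg_bd : ∀ k < K, ∀ i,
      (∫ τ in s k..s (k + 1), |xt' τ i - f τ (xt τ) (u τ) i|) ≤
        (what i + 1) * εhat i := by
    intro k hk i
    have hwpos : (0:ℝ) < w i + 1 := by linarith [hw0 i]
    have h1 := (div_le_iff₀ hwpos).mp (hquad k hk i)
    nlinarith [hε0 i, hww i, hw0 i]
  -- bound on the local-error integral for each component
  have hA_i : ∀ i, (∫ τ in (0:ℝ)..t, |xt' τ i - f τ (xt τ) (u τ) i|) ≤
      (N:ℝ) * ((what i + 1) * εhat i) := by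
    intro i
    have hintseg : ∀ k < N, IntervalIntegrable
        (fun τ => |xt' τ i - f τ (xt τ) (u τ) i|) volume (s k) (s (k + 1)) :=
      fun k hk => (hai i).abs.mono_set
        (hsubseg _ _ (hs_mem k (by omega)) (hs_mem (k + 1) (by omega)))
    have hsplit := intervalIntegral.sum_integral_adjacent_intervals hintseg
    rw [hs0] at hsplit
    have hle : (∫ τ in (0:ℝ)..t, |xt' τ i - f τ (xt τ) (u τ) i|) ≤
        ∫ τ in (0:ℝ)..(s N), |xt' τ i - f τ (xt τ) (u τ) i| := by
      have hadd := intervalIntegral.integral_add_adjacent_intervals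
        ((hai i).abs.mono_set hsub)
        ((hai i).abs.mono_set (hsubseg t (s N) ⟨ht0, httf⟩ (hs_mem N hNK)))
      have h2 : 0 ≤ ∫ τ in t..(s N), |xt' τ i - f τ (xt τ) (u τ) i| :=
        intervalIntegral.integral_nonneg hN1 (fun τ _ => abs_nonneg _)
      linarith
    calc (∫ τ in (0:ℝ)..t, |xt' τ i - f τ (xt τ) (u τ) i|)
        ≤ ∫ τ in (0:ℝ)..(s N), |xt' τ i - f τ (xt τ) (u τ) i| := hle
      _ = ∑ k ∈ Finset.range N, ∫ τ in s k..s (k + 1),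
            |xt' τ i - f τ (xt τ) (u τ) i| := hsplit.symm
      _ ≤ ∑ k ∈ Finset.range N, (what i + 1) * εhat i :=
          Finset.sum_le_sum fun k hk =>
            hseg_bd k (lt_of_lt_of_le (Finset.mem_range.mp hk) hNK) i
      _ = (N:ℝ) * ((what i + 1) * εhat i) := by
          rw [Finset.sum_const, Finset.card_range, nsmul_eq_mul]
  -- assemble the local error part
  have hA : (∑ i, M i * ∫ τ in (0:ℝ)..t, |xt' τ i - f τ (xt τ) (u τ) i|) ≤
      (N:ℝ) * E := by
    rw [hE, Finset.mul_sum]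
    refine Finset.sum_le_sum fun i _ => ?_
    calc M i * ∫ τ in (0:ℝ)..t, |xt' τ i - f τ (xt τ) (u τ) i|
        ≤ M i * ((N:ℝ) * ((what i + 1) * εhat i)) :=
          mul_le_mul_of_nonneg_left (hA_i i) (hM i).le
      _ = (N:ℝ) * (M i * ((what i + 1) * εhat i)) := by ring
  -- bound on N
  have hNle : (N:ℝ) ≤ t / (σ * h) + 1 := by
    rcases Nat.eq_zero_or_pos N with h0 | hpos
    · rw [h0]
      have : 0 ≤ t / (σ * h) := div_nonneg ht0 hσh.le
      push_cast
      linarith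
    · have hlt := hNmin (N - 1) (by omega)
      have hlb := hs_lb (N - 1) (by omega)
      have hcast : ((N - 1 : ℕ) : ℝ) = (N:ℝ) - 1 := by
        rw [Nat.cast_sub hpos]; norm_num
      rw [hcast] at hlb
      have h4 : ((N:ℝ) - 1) * (σ * h) < t := by nlinarith
      have h5 : (N:ℝ) - 1 < t / (σ * h) := (lt_div_iff₀ hσh).mpr h4
      linarith
  have hE0 : 0 ≤ E := by
    rw [hE]
    refine Finset.sum_nonneg fun i _ => ?_
    exact mul_nonneg (hM i).le
      (mul_nonneg (by linarith [hw0 i, hww i]) (hε0 i))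
  -- final assembly
  calc ∑ i, M i * |xt t i - x t i|
      ≤ ∑ i, M i * (|xt 0 i - x 0 i| +
          ((∫ τ in (0:ℝ)..t, |xt' τ i - f τ (xt τ) (u τ) i|) +
           ∫ τ in (0:ℝ)..t, |f τ (xt τ) (u τ) i - f τ (x τ) (u τ) i - v τ i|)) :=
        Finset.sum_le_sum fun i _ => mul_le_mul_of_nonneg_left (hBi i) (hM i).le
    _ = (∑ i, M i * |xt 0 i - x 0 i|) +
        (∑ i, M i * ∫ τ in (0:ℝ)..t, |xt' τ i - f τ (xt τ) (u τ) i|) +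
        ∑ i, M i * ∫ τ in (0:ℝ)..t,
          |f τ (xt τ) (u τ) i - f τ (x τ) (u τ) i - v τ i| := by
        simp [mul_add, Finset.sum_add_distrib, add_assoc]
    _ ≤ θhat + (N:ℝ) * E + t * (Lx * Δ + vhat) := by
        exact add_le_add (add_le_add hθ hA) hR
    _ ≤ (t / (σ * h) + 1) * E + θhat + t * (Lx * Δ + vhat) := by
        have : (N:ℝ) * E ≤ (t / (σ * h) + 1) * E :=
          mul_le_mul_of_nonneg_right hNle hE0
        linarith
end

section
/- Suppose the absolute local error quadratures satisfy η_{k,i} ≤ η̂_i for every mesh segment k and every state i, and set H := Σᵢ Mᵢη̂ᵢ. If Δ > H + θ̂, then the minimum inter-update time τ̲_u := (Δ − H − θ̂)/(H/(σh) + L_xΔ + v̂) is strictly positive, and the first event time t* := inf{t ∈ (0, t_f] : ‖δ(t)‖_M ≥ Δ} (with t* := t_f if no such time exists) satisfies t* ≥ min{τ̲_u, t_f}; in particular ‖δ(t)‖_M ≤ Δ for all t ∈ [0, min{τ̲_u, t_f}]. -/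
open Set MeasureTheory intervalIntegral
open scoped Classical

set_option maxHeartbeats 1000000 in
/-- **Minimum inter-update time under absolute local error bounds (Corollary 1).**
Setting: plant `x` satisfies `ẋ = f(t,x,u) + v` (integral form) on `[0, t_f]`, `f` is Lipschitz
in the state with constant `Lx` w.r.t. the weighted norm `‖z‖_M = ∑ i, M i * |z i|`,
`‖v t‖_M ≤ v̂`; a mesh `0 = s 0 < … < s K = t_f` has resolution `h` and quasi-uniformity `σ`;
the approximate trajectory `x̃` is continuous, C¹ on each open mesh segment with derivative
`x̃'`, and starts within `θ̂` of the plant state.  If the absolute local error quadratures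
satisfy `η_{k,i} ≤ η̂ i`, `H = ∑ i, M i * η̂ i`, and `Δ > H + θ̂`, then
`τ̲ᵤ = (Δ - H - θ̂)/(H/(σh) + Lx Δ + v̂)` is strictly positive, the first event time
`t* = inf {t ∈ (0, t_f] | ‖δ t‖_M ≥ Δ}` (or `t_f` if there is none) satisfies
`t* ≥ min τ̲ᵤ t_f`, and `‖δ t‖_M ≤ Δ` for all `t ∈ [0, min τ̲ᵤ t_f]`, where `δ = x̃ - x`. -/
theorem min_inter_update_time_absolute_error
    (n m : ℕ) (hn : 0 < n)
    (tf : ℝ) (htf : 0 < tf)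
    (f : ℝ → (Fin n → ℝ) → (Fin m → ℝ) → Fin n → ℝ)
    (u : ℝ → Fin m → ℝ) (v : ℝ → Fin n → ℝ)
    (M : Fin n → ℝ) (hM : ∀ i, 0 < M i)
    (Lx vhat θhat : ℝ) (hLx : 0 < Lx)
    (hLip : ∀ t z₁ z₂ uu,
      ∑ i, M i * |f t z₁ uu i - f t z₂ uu i| ≤ Lx * ∑ i, M i * |z₁ i - z₂ i|)
    (hv : ∀ t, ∑ i, M i * |v t i| ≤ vhat)
    -- mesh with resolution h and quasi-uniformity σ
    (σ h : ℝ) (hσ0 : 0 < σ) (hσ1 : σ ≤ 1) (hh : 0 < h)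
    (K : ℕ) (hK : 0 < K)
    (s : ℕ → ℝ) (hs0 : s 0 = 0) (hsK : s K = tf)
    (hseg : ∀ k < K, σ * h ≤ s (k + 1) - s k ∧ s (k + 1) - s k ≤ h)
    -- plant trajectory: absolutely continuous Carathéodory solution of the ODE
    (x : ℝ → Fin n → ℝ)
    (hxint : ∀ i, IntervalIntegrable (fun τ => f τ (x τ) (u τ) i + v τ i) volume 0 tf)
    (hx : ∀ t ∈ Icc (0 : ℝ) tf, ∀ i,
      x t i = x 0 i + ∫ τ in (0 : ℝ)..t, (f τ (x τ) (u τ) i + v τ i))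
    -- approximate (predicted) trajectory: continuous, piecewise C¹ on the mesh
    (xt xt' : ℝ → Fin n → ℝ)
    (hxtc : ∀ i, ContinuousOn (fun t => xt t i) (Icc (0 : ℝ) tf))
    (hxtd : ∀ k < K, ∀ t ∈ Ioo (s k) (s (k + 1)), ∀ i,
      HasDerivAt (fun τ => xt τ i) (xt' t i) t)
    (hxt'int : ∀ i, IntervalIntegrable (fun τ => xt' τ i) volume 0 tf)
    (hfxtint : ∀ i, IntervalIntegrable (fun τ => f τ (xt τ) (u τ) i) volume 0 tf)
    (hxtFTC : ∀ t ∈ Icc (0 : ℝ) tf, ∀ i, xt t i = xt 0 i + ∫ τ in (0 : ℝ)..t, xt' τ i)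
    -- initialization at the noisy measurement
    (hθ : ∑ i, M i * |xt 0 i - x 0 i| ≤ θhat)
    -- accuracy certificates: absolute local error quadratures
    (ηhat : Fin n → ℝ)
    (hquad : ∀ k < K, ∀ i,
      (∫ τ in s k..s (k + 1), |xt' τ i - f τ (xt τ) (u τ) i|) ≤ ηhat i)
    (H : ℝ) (hH : H = ∑ i, M i * ηhat i)
    (Δ : ℝ) (hΔ : H + θhat < Δ)
    (τu : ℝ) (hτu : τu = (Δ - H - θhat) / (H / (σ * h) + Lx * Δ + vhat))
    (S : Set ℝ) (hS : S = {t | t ∈ Ioc (0 : ℝ) tf ∧ Δ ≤ ∑ i, M i * |xt t i - x t i|})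
    (tstar : ℝ) (htstar : tstar = if S.Nonempty then sInf S else tf) :
    0 < τu ∧ min τu tf ≤ tstar ∧
      ∀ t ∈ Icc (0 : ℝ) (min τu tf), ∑ i, M i * |xt t i - x t i| ≤ Δ := by
  classical
  set N : ℝ → ℝ := fun t => ∑ i, M i * |xt t i - x t i| with hN
  have hNθ : N 0 ≤ θhat := hθ
  have hθ0 : 0 ≤ θhat :=
    le_trans (Finset.sum_nonneg fun i _ => mul_nonneg (hM i).le (abs_nonneg _)) hθ
  have hv0 : 0 ≤ vhat :=
    le_trans (Finset.sum_nonneg fun i _ => mul_nonneg (hM i).le (abs_nonneg _)) (hv 0)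
  have hσh : 0 < σ * h := mul_pos hσ0 hh
  have hs01 : s 0 ≤ s 1 := by have := (hseg 0 hK).1; linarith
  have hη0 : ∀ i, 0 ≤ ηhat i := fun i =>
    le_trans (intervalIntegral.integral_nonneg hs01 fun τ _ => abs_nonneg _) (hquad 0 hK i)
  have hH0 : 0 ≤ H := hH ▸ Finset.sum_nonneg fun i _ => mul_nonneg (hM i).le (hη0 i)
  have hΔ0 : 0 < Δ := by linarith
  set D : ℝ := H / (σ * h) + Lx * Δ + vhat with hD
  have hD0 : 0 < D := by
    have h1 : 0 ≤ H / (σ * h) := div_nonneg hH0 hσh.le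
    have h2 : 0 < Lx * Δ := mul_pos hLx hΔ0
    rw [hD]; linarith
  have hτu0 : 0 < τu := by rw [hτu]; exact div_pos (by linarith) hD0
  -- mesh facts
  have hstep : ∀ k < K, s k + σ * h ≤ s (k + 1) := fun k hk => by
    have := (hseg k hk).1; linarith
  have hmono : ∀ k ≤ K, ∀ j ≤ k, s j ≤ s k := by
    intro k
    induction k with
    | zero => intro _ j hj; interval_cases j; exact le_rfl
    | succ k ih =>
      intro hk j hj
      rcases eq_or_lt_of_le hj with h1 | h1
      · rw [h1]
      · have h2 := ih (by omega) j (by omega)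
        have h3 := hstep k (by omega)
        linarith
  have hsmem : ∀ k ≤ K, s k ∈ Icc (0 : ℝ) tf := by
    intro k hk
    constructor
    · have := hmono k hk 0 (Nat.zero_le _); rw [hs0] at this; linarith
    · have := hmono K le_rfl k hk; rw [hsK] at this; linarith
  have hlow : ∀ j ≤ K, (j : ℝ) * (σ * h) ≤ s j := by
    intro j
    induction j with
    | zero => intro _; simp [hs0]
    | succ j ih =>
      intro hj
      have h1 := ih (by omega)
      have h2 := hstep j (by omega)
      have h3 : ((j + 1 : ℕ) : ℝ) * (σ * h) = (j : ℝ) * (σ * h) + σ * h := by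
        push_cast; ring
      linarith
  -- restriction of integrability to subintervals
  have hsubI : ∀ {F : ℝ → ℝ}, IntervalIntegrable F volume 0 tf →
      ∀ a b : ℝ, a ∈ Icc (0 : ℝ) tf → b ∈ Icc (0 : ℝ) tf →
      IntervalIntegrable F volume a b := by
    intro F hF a b ha hb
    refine hF.mono_set ?_
    rw [uIcc_of_le htf.le]
    exact uIcc_subset_Icc ha hb
  -- continuity of the weighted error norm
  have hxc : ∀ i, ContinuousOn (fun t => x t i) (Icc (0 : ℝ) tf) := by
    intro i
    have h1 : ContinuousOn
        (fun b => x 0 i + ∫ τ in (0 : ℝ)..b, (f τ (x τ) (u τ) i + v τ i))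
        (Icc (0 : ℝ) tf) := by
      have h2 := intervalIntegral.continuousOn_primitive_interval'
        (hxint i) (left_mem_uIcc (a := (0:ℝ)) (b := tf))
      rw [uIcc_of_le htf.le] at h2
      exact continuousOn_const.add h2
    exact h1.congr fun t ht => hx t ht i
  have hNc : ContinuousOn N (Icc (0 : ℝ) tf) := by
    rw [hN]
    apply continuousOn_finset_sum
    intro i _
    exact continuousOn_const.mul ((hxtc i).sub (hxc i)).abs
  have hmem0 : (0 : ℝ) ∈ Icc (0 : ℝ) tf := ⟨le_rfl, htf.le⟩
  have hsumInt : ∀ (G : Fin n → ℝ → ℝ) (a b : ℝ),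
      (∀ i, IntervalIntegrable (G i) volume a b) →
      IntervalIntegrable (fun τ => ∑ i, G i τ) volume a b := by
    intro G a b hG
    have h1 := IntervalIntegrable.sum (μ := volume) (a := a) (b := b)
      Finset.univ (f := G) fun i _ => hG i
    have h2 : (∑ i, G i) = fun τ => ∑ i, G i τ := by
      ext τ; simp
    rwa [h2] at h1
  -- KEY a-priori estimate
  have key : ∀ t ∈ Icc (0 : ℝ) tf, (∀ τ ∈ Icc (0 : ℝ) t, N τ ≤ Δ) →
      N t ≤ θhat + H + t * D := by
    intro t ht hb
    obtain ⟨ht0, httf⟩ := ht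
    have hmemt : t ∈ Icc (0 : ℝ) tf := ⟨ht0, httf⟩
    have hgtf : ∀ i, IntervalIntegrable
        (fun τ => xt' τ i - (f τ (x τ) (u τ) i + v τ i)) volume 0 tf :=
      fun i => (hxt'int i).sub (hxint i)
    have hεtf : ∀ i, IntervalIntegrable
        (fun τ => |xt' τ i - f τ (xt τ) (u τ) i|) volume 0 tf :=
      fun i => ((hxt'int i).sub (hfxtint i)).abs
    have hg_i : ∀ i, IntervalIntegrable
        (fun τ => xt' τ i - (f τ (x τ) (u τ) i + v τ i)) volume 0 t :=
      fun i => hsubI (hgtf i) 0 t hmem0 hmemt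
    have hε_i : ∀ i, IntervalIntegrable
        (fun τ => |xt' τ i - f τ (xt τ) (u τ) i|) volume 0 t :=
      fun i => hsubI (hεtf i) 0 t hmem0 hmemt
    -- representation of the prediction error
    have hrep : ∀ i, xt t i - x t i
        = (xt 0 i - x 0 i) + ∫ τ in (0 : ℝ)..t, (xt' τ i - (f τ (x τ) (u τ) i + v τ i)) := by
      intro i
      have e3 : (∫ τ in (0 : ℝ)..t, (xt' τ i - (f τ (x τ) (u τ) i + v τ i)))
          = (∫ τ in (0 : ℝ)..t, xt' τ i) - ∫ τ in (0 : ℝ)..t, (f τ (x τ) (u τ) i + v τ i) :=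
        intervalIntegral.integral_sub (hsubI (hxt'int i) 0 t hmem0 hmemt)
          (hsubI (hxint i) 0 t hmem0 hmemt)
      rw [hx t hmemt i, hxtFTC t hmemt i, e3]; ring
    -- step 1
    have step1 : N t ≤ θhat
        + ∫ τ in (0 : ℝ)..t, ∑ i, M i * |xt' τ i - (f τ (x τ) (u τ) i + v τ i)| := by
      have h1 : ∀ i, |xt t i - x t i| ≤ |xt 0 i - x 0 i|
          + ∫ τ in (0 : ℝ)..t, |xt' τ i - (f τ (x τ) (u τ) i + v τ i)| := by
        intro i
        rw [hrep i]
        refine le_trans (abs_add_le _ _) (add_le_add_right ?_ _)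
        exact intervalIntegral.abs_integral_le_integral_abs ht0
      have h2 : N t ≤ (∑ i, M i * |xt 0 i - x 0 i|)
          + ∑ i, M i * ∫ τ in (0 : ℝ)..t, |xt' τ i - (f τ (x τ) (u τ) i + v τ i)| := by
        rw [hN, ← Finset.sum_add_distrib]
        refine Finset.sum_le_sum fun i _ => ?_
        rw [← mul_add]
        exact mul_le_mul_of_nonneg_left (h1 i) (hM i).le
      have h3 : (∑ i, M i * ∫ τ in (0 : ℝ)..t, |xt' τ i - (f τ (x τ) (u τ) i + v τ i)|)
          = ∫ τ in (0 : ℝ)..t, ∑ i, M i * |xt' τ i - (f τ (x τ) (u τ) i + v τ i)| := by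
        rw [intervalIntegral.integral_finset_sum
          (fun i _ => ((hg_i i).abs.const_mul (M i)))]
        simp_rw [intervalIntegral.integral_const_mul]
      calc N t ≤ _ := h2
        _ ≤ θhat + ∑ i, M i * ∫ τ in (0 : ℝ)..t, |xt' τ i - (f τ (x τ) (u τ) i + v τ i)| :=
            add_le_add_left hθ _
        _ = _ := by rw [h3]
    -- step 2: pointwise bound on the integrand
    have step2 : (∫ τ in (0 : ℝ)..t, ∑ i, M i * |xt' τ i - (f τ (x τ) (u τ) i + v τ i)|)
        ≤ (∫ τ in (0 : ℝ)..t, ∑ i, M i * |xt' τ i - f τ (xt τ) (u τ) i|)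
          + t * (Lx * Δ + vhat) := by
      have hint1 : IntervalIntegrable
          (fun τ => ∑ i, M i * |xt' τ i - (f τ (x τ) (u τ) i + v τ i)|) volume 0 t :=
        hsumInt _ 0 t fun i => (hg_i i).abs.const_mul (M i)
      have hint2 : IntervalIntegrable
          (fun τ => (∑ i, M i * |xt' τ i - f τ (xt τ) (u τ) i|) + (Lx * Δ + vhat)) volume 0 t :=
        (hsumInt _ 0 t fun i => (hε_i i).const_mul (M i)).add
          intervalIntegrable_const
      have hmono2 := intervalIntegral.integral_mono_on ht0 hint1 hint2 ?_
      · have hconst : (∫ τ in (0 : ℝ)..t,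
            ((∑ i, M i * |xt' τ i - f τ (xt τ) (u τ) i|) + (Lx * Δ + vhat)))
            = (∫ τ in (0 : ℝ)..t, ∑ i, M i * |xt' τ i - f τ (xt τ) (u τ) i|)
              + t * (Lx * Δ + vhat) := by
          rw [intervalIntegral.integral_add
            (hsumInt _ 0 t fun i => (hε_i i).const_mul (M i))
            intervalIntegrable_const, intervalIntegral.integral_const]
          simp
        rw [hconst] at hmono2
        exact hmono2
      · intro τ hτ
        have e1 : ∀ i, |xt' τ i - (f τ (x τ) (u τ) i + v τ i)|
            ≤ |xt' τ i - f τ (xt τ) (u τ) i|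
              + |f τ (xt τ) (u τ) i - f τ (x τ) (u τ) i| + |v τ i| := by
          intro i
          have e2 : xt' τ i - (f τ (x τ) (u τ) i + v τ i)
              = (xt' τ i - f τ (xt τ) (u τ) i)
                + (f τ (xt τ) (u τ) i - f τ (x τ) (u τ) i) + (-(v τ i)) := by ring
          rw [e2]
          refine le_trans (abs_add_le _ _) ?_
          rw [abs_neg]
          exact add_le_add_left (abs_add_le _ _) _
        have e3 : (∑ i, M i * |xt' τ i - (f τ (x τ) (u τ) i + v τ i)|)
            ≤ (∑ i, M i * |xt' τ i - f τ (xt τ) (u τ) i|)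
              + (∑ i, M i * |f τ (xt τ) (u τ) i - f τ (x τ) (u τ) i|)
              + ∑ i, M i * |v τ i| := by
          rw [← Finset.sum_add_distrib, ← Finset.sum_add_distrib]
          refine Finset.sum_le_sum fun i _ => ?_
          rw [← mul_add, ← mul_add]
          exact mul_le_mul_of_nonneg_left (e1 i) (hM i).le
        have e4 := hLip τ (xt τ) (x τ) (u τ)
        have e5 : N τ ≤ Δ := hb τ hτ
        have e6 : Lx * (∑ i, M i * |xt τ i - x τ i|) ≤ Lx * Δ := by
          refine mul_le_mul_of_nonneg_left ?_ hLx.le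
          exact e5
        have e7 := hv τ
        linarith
    -- step 3: bound the accumulated quadrature via the mesh
    have hex : ∃ j, t ≤ s j := ⟨K, by rw [hsK]; exact httf⟩
    set j := Nat.find hex with hj
    have hjt : t ≤ s j := Nat.find_spec hex
    have hjK : j ≤ K := Nat.find_le (by rw [hsK]; exact httf)
    have hsjmem : s j ∈ Icc (0 : ℝ) tf := hsmem j hjK
    have hQi : ∀ i, (∫ τ in (0 : ℝ)..t, |xt' τ i - f τ (xt τ) (u τ) i|)
        ≤ (j : ℝ) * ηhat i := by
      intro i
      have h1 : (∫ τ in (0 : ℝ)..t, |xt' τ i - f τ (xt τ) (u τ) i|)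
          ≤ ∫ τ in (0 : ℝ)..(s j), |xt' τ i - f τ (xt τ) (u τ) i| := by
        have hsplit := intervalIntegral.integral_add_adjacent_intervals
          (hsubI (hεtf i) 0 t hmem0 hmemt) (hsubI (hεtf i) t (s j) hmemt hsjmem)
        have hpos : 0 ≤ ∫ τ in t..(s j), |xt' τ i - f τ (xt τ) (u τ) i| :=
          intervalIntegral.integral_nonneg hjt fun _ _ => abs_nonneg _
        linarith
      have h2 : (∫ τ in (0 : ℝ)..(s j), |xt' τ i - f τ (xt τ) (u τ) i|)
          = ∑ k ∈ Finset.range j, ∫ τ in s k..s (k + 1), |xt' τ i - f τ (xt τ) (u τ) i| := by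
        rw [intervalIntegral.sum_integral_adjacent_intervals
          (fun k hk => hsubI (hεtf i) (s k) (s (k + 1))
            (hsmem k (by omega)) (hsmem (k + 1) (by omega))), hs0]
      have h3 : (∑ k ∈ Finset.range j, ∫ τ in s k..s (k + 1), |xt' τ i - f τ (xt τ) (u τ) i|)
          ≤ ∑ _k ∈ Finset.range j, ηhat i :=
        Finset.sum_le_sum fun k hk => hquad k (by have := Finset.mem_range.mp hk; omega) i
      rw [Finset.sum_const, Finset.card_range, nsmul_eq_mul] at h3
      calc (∫ τ in (0 : ℝ)..t, |xt' τ i - f τ (xt τ) (u τ) i|) ≤ _ := h1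
        _ = _ := h2
        _ ≤ (j : ℝ) * ηhat i := h3
    have hjbound : (j : ℝ) * H ≤ H + t * (H / (σ * h)) := by
      rcases Nat.eq_zero_or_pos j with h0 | h0
      · rw [h0]
        simp only [Nat.cast_zero, zero_mul]
        have : 0 ≤ t * (H / (σ * h)) := mul_nonneg ht0 (div_nonneg hH0 hσh.le)
        linarith
      · have hj1 : j - 1 < j := by omega
        have hnotle : ¬ t ≤ s (j - 1) := Nat.find_min hex hj1
        push_neg at hnotle
        have hlow' := hlow (j - 1) (by omega)
        have hcast : ((j - 1 : ℕ) : ℝ) = (j : ℝ) - 1 := by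
          have : (1 : ℕ) ≤ j := h0
          push_cast [this]; ring
        rw [hcast] at hlow'
        have hjt' : ((j : ℝ) - 1) * (σ * h) ≤ t := le_of_lt (lt_of_le_of_lt hlow' hnotle)
        have hfrac : (j : ℝ) ≤ t / (σ * h) + 1 := by
          have := (le_div_iff₀ hσh).mpr hjt'
          linarith
        have : (j : ℝ) * H ≤ (t / (σ * h) + 1) * H :=
          mul_le_mul_of_nonneg_right hfrac hH0
        calc (j : ℝ) * H ≤ (t / (σ * h) + 1) * H := this
          _ = H + t * (H / (σ * h)) := by ring
    have hQ : (∫ τ in (0 : ℝ)..t, ∑ i, M i * |xt' τ i - f τ (xt τ) (u τ) i|)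
        ≤ H + t * (H / (σ * h)) := by
      have hswap : (∫ τ in (0 : ℝ)..t, ∑ i, M i * |xt' τ i - f τ (xt τ) (u τ) i|)
          = ∑ i, M i * ∫ τ in (0 : ℝ)..t, |xt' τ i - f τ (xt τ) (u τ) i| := by
        rw [intervalIntegral.integral_finset_sum
          (fun i _ => (hε_i i).const_mul (M i))]
        simp_rw [intervalIntegral.integral_const_mul]
      rw [hswap]
      have h4 : (∑ i, M i * ∫ τ in (0 : ℝ)..t, |xt' τ i - f τ (xt τ) (u τ) i|)
          ≤ ∑ i, M i * ((j : ℝ) * ηhat i) :=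
        Finset.sum_le_sum fun i _ => mul_le_mul_of_nonneg_left (hQi i) (hM i).le
      have h5 : (∑ i, M i * ((j : ℝ) * ηhat i)) = (j : ℝ) * H := by
        rw [hH, Finset.mul_sum]
        exact Finset.sum_congr rfl fun i _ => by ring
      linarith
    have htD : t * D = t * (H / (σ * h)) + t * (Lx * Δ + vhat) := by rw [hD]; ring
    refine le_trans step1 ?_
    refine le_trans (add_le_add_right step2 θhat) ?_
    refine le_trans (add_le_add_right (add_le_add_left hQ _) θhat) ?_
    exact le_of_eq (by rw [htD]; ring)
  -- equality τu * D = Δ - H - θhat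
  have hτuD : τu * D = Δ - H - θhat := by
    rw [hτu]; field_simp
  -- main case analysis
  have main : min τu tf ≤ tstar ∧ ∀ t ∈ Icc (0 : ℝ) (min τu tf), N t ≤ Δ := by
    by_cases hne : S.Nonempty
    · have htseq : tstar = sInf S := by rw [htstar, if_pos hne]
      have hbdd : BddBelow S := ⟨0, fun y hy => by
        rw [hS] at hy; exact hy.1.1.le⟩
      have hC : IsClosed (Icc (0 : ℝ) tf ∩ N ⁻¹' Ici Δ) :=
        hNc.preimage_isClosed_of_isClosed isClosed_Icc isClosed_Ici
      have hSsub : S ⊆ Icc (0 : ℝ) tf ∩ N ⁻¹' Ici Δ := by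
        rw [hS]; intro y hy
        exact ⟨⟨hy.1.1.le, hy.1.2⟩, hy.2⟩
      have hmemC : tstar ∈ Icc (0 : ℝ) tf ∩ N ⁻¹' Ici Δ := by
        rw [htseq]
        exact (hC.closure_subset_iff.mpr hSsub) (csInf_mem_closure hne hbdd)
      obtain ⟨⟨hts0, htstf⟩, htsΔ⟩ := hmemC
      have htspos : 0 < tstar := by
        rcases eq_or_lt_of_le hts0 with heq | hlt
        · exfalso
          have : Δ ≤ N 0 := by rw [heq]; exact htsΔ
          linarith
        · exact hlt
      have hlt : ∀ τ, 0 ≤ τ → τ < tstar → N τ < Δ := by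
        intro τ h0 hτ
        rcases eq_or_lt_of_le h0 with heq | hpos
        · rw [← heq]; linarith
        · by_contra hcon
          push_neg at hcon
          have hτS : τ ∈ S := by
            rw [hS]; exact ⟨⟨hpos, le_trans hτ.le htstf⟩, hcon⟩
          have := csInf_le hbdd hτS
          rw [← htseq] at this
          linarith
      have htsle : N tstar ≤ Δ := by
        have hC' : IsClosed (Icc (0 : ℝ) tf ∩ N ⁻¹' Iic Δ) :=
          hNc.preimage_isClosed_of_isClosed isClosed_Icc isClosed_Iic
        have hsub' : Ico (0 : ℝ) tstar ⊆ Icc (0 : ℝ) tf ∩ N ⁻¹' Iic Δ := fun τ hτ =>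
          ⟨⟨hτ.1, le_trans hτ.2.le htstf⟩, (hlt τ hτ.1 hτ.2).le⟩
        have hcl : tstar ∈ closure (Ico (0 : ℝ) tstar) := by
          rw [closure_Ico htspos.ne]
          exact right_mem_Icc.mpr htspos.le
        exact ((hC'.closure_subset_iff.mpr hsub') hcl).2
      have hbnd : ∀ τ, 0 ≤ τ → τ ≤ tstar → N τ ≤ Δ := by
        intro τ h0 h1
        rcases eq_or_lt_of_le h1 with heq | h
        · rw [heq]; exact htsle
        · exact (hlt τ h0 h).le
      have hkey := key tstar ⟨hts0, htstf⟩ fun τ hτ => hbnd τ hτ.1 hτ.2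
      have hτle : τu ≤ tstar := by
        have htsΔ' : Δ ≤ N tstar := htsΔ
        have h1 : Δ - H - θhat ≤ tstar * D := by linarith [hkey, htsΔ']
        rw [hτu, div_le_iff₀ hD0]
        linarith
      constructor
      · exact le_trans (min_le_left _ _) (htseq ▸ hτle)
      · intro t ht
        exact hbnd t ht.1 (le_trans ht.2 (le_trans (min_le_left _ _) hτle))
    · have hts : tstar = tf := by rw [htstar, if_neg hne]
      have hforall : ∀ t, 0 < t → t ≤ tf → N t < Δ := by
        intro t h0 h1
        by_contra hc
        push_neg at hc
        exact hne ⟨t, by rw [hS]; exact ⟨⟨h0, h1⟩, hc⟩⟩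
      constructor
      · rw [hts]; exact min_le_right _ _
      · intro t ht
        rcases eq_or_lt_of_le ht.1 with heq | hpos
        · rw [← heq]; linarith
        · exact (hforall t hpos (le_trans ht.2 (min_le_right _ _))).le
  exact ⟨hτu0, main.1, main.2⟩
end

section
/- Suppose every mesh segment T_k contains a collocation point t_k^c with (d/dt)x̃(t_k^c) = f(t_k^c, x̃(t_k^c), u(t_k^c)), such that |(d/dt)x̃_i(τ) − (d/dt)x̃_i(t_k^c)| ≤ L_{p,k}|τ − t_k^c| and |f_i(τ, x̃(τ), u(τ)) − f_i(t_k^c, x̃(t_k^c), u(t_k^c))| ≤ L_x‖x̃(τ) − x̃(t_k^c)‖_M for all τ ∈ T_k and every state i. Define ζ(t) := Σ_{k∈K_t} ∫_{T_k} (L_{p,k}|τ − t_k^c| + L_x‖x̃(τ) − x̃(t_k^c)‖_M) dτ and m₁ := Σᵢ Mᵢ. Then the prediction error satisfies ‖δ(t)‖_M ≤ (m₁·ζ(t) + θ̂ + v̂t)·e^{L_x t} for every t ∈ [0, t_f]; consequently, ‖δ(τ)‖_M ≤ Δ for every τ ∈ [0, t_f] such that (m₁·ζ(τ) + θ̂ +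 v̂τ)e^{L_xτ} ≤ Δ (the collocation-triggering guarantee). -/
open Set MeasureTheory intervalIntegral
open scoped Classical

private lemma intervalIntegrable_fun_sum {n : ℕ} (G : Fin n → ℝ → ℝ) {a b : ℝ}
    (hG : ∀ i, IntervalIntegrable (G i) volume a b) :
    IntervalIntegrable (fun σ2 => ∑ i, G i σ2) volume a b := by
  have h := IntervalIntegrable.sum (μ := volume) (a := a) (b := b) Finset.univ
    (f := G) (fun i _ => hG i)
  rwa [Finset.sum_fn] at h

set_option maxHeartbeats 1600000 in
/-- **Collocation triggering (CT) guarantee (Theorem 2).**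
Setting: plant `x` satisfies `ẋ = f(t,x,u) + v` (integral form) on `[0, t_f]`, `f` is Lipschitz
in the state with constant `Lx ≥ 0` w.r.t. the weighted norm `‖z‖_M = ∑ i, M i * |z i|`,
`‖v t‖_M ≤ v̂`; the approximate trajectory `x̃` is continuous, C¹ on each open mesh segment with
derivative `x̃'`, and starts within `θ̂` of the plant state.  Each mesh segment `(s k, s (k+1))`
contains a collocation point `c k` at which the dynamics hold exactly, the derivative of the
approximating polynomial has Lipschitz constant `Lp k` there, and the dynamics satisfy the
stated Lipschitz bound along `x̃`.  With
`ζ t = ∑_{k ∈ K_t} ∫_{T_k} (Lp k |τ - c k| + Lx ‖x̃ τ - x̃ (c k)‖_M) dτ` and `m₁ = ∑ i, M i`,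
the prediction error `δ = x̃ - x` satisfies
`‖δ t‖_M ≤ (m₁ ζ t + θ̂ + v̂ t) exp (Lx t)` for all `t ∈ [0, t_f]`; consequently
`‖δ τ‖_M ≤ Δ` whenever `(m₁ ζ τ + θ̂ + v̂ τ) exp (Lx τ) ≤ Δ`. -/
theorem collocation_triggering_guarantee
    (n m : ℕ) (hn : 0 < n)
    (tf : ℝ) (htf : 0 < tf)
    (f : ℝ → (Fin n → ℝ) → (Fin m → ℝ) → Fin n → ℝ)
    (u : ℝ → Fin m → ℝ) (v : ℝ → Fin n → ℝ)
    (M : Fin n → ℝ) (hM : ∀ i, 0 < M i)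
    (Lx vhat θhat : ℝ) (hLx : 0 ≤ Lx)
    (hLip : ∀ t z₁ z₂ uu,
      ∑ i, M i * |f t z₁ uu i - f t z₂ uu i| ≤ Lx * ∑ i, M i * |z₁ i - z₂ i|)
    (hv : ∀ t, ∑ i, M i * |v t i| ≤ vhat)
    -- mesh with resolution h and quasi-uniformity σ
    (σ h : ℝ) (hσ0 : 0 < σ) (hσ1 : σ ≤ 1) (hh : 0 < h)
    (K : ℕ) (hK : 0 < K)
    (s : ℕ → ℝ) (hs0 : s 0 = 0) (hsK : s K = tf)
    (hseg : ∀ k < K, σ * h ≤ s (k + 1) - s k ∧ s (k + 1) - s k ≤ h)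
    -- plant trajectory: absolutely continuous Carathéodory solution of the ODE
    (x : ℝ → Fin n → ℝ)
    (hxint : ∀ i, IntervalIntegrable (fun τ => f τ (x τ) (u τ) i + v τ i) volume 0 tf)
    (hx : ∀ t ∈ Icc (0 : ℝ) tf, ∀ i,
      x t i = x 0 i + ∫ τ in (0 : ℝ)..t, (f τ (x τ) (u τ) i + v τ i))
    -- approximate (predicted) trajectory: continuous, piecewise C¹ on the mesh
    (xt xt' : ℝ → Fin n → ℝ)
    (hxtc : ∀ i, ContinuousOn (fun t => xt t i) (Icc (0 : ℝ) tf))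
    (hxtd : ∀ k < K, ∀ t ∈ Ioo (s k) (s (k + 1)), ∀ i,
      HasDerivAt (fun τ => xt τ i) (xt' t i) t)
    (hxt'int : ∀ i, IntervalIntegrable (fun τ => xt' τ i) volume 0 tf)
    (hfxtint : ∀ i, IntervalIntegrable (fun τ => f τ (xt τ) (u τ) i) volume 0 tf)
    (hxtFTC : ∀ t ∈ Icc (0 : ℝ) tf, ∀ i, xt t i = xt 0 i + ∫ τ in (0 : ℝ)..t, xt' τ i)
    -- initialization at the noisy measurement
    (hθ : ∑ i, M i * |xt 0 i - x 0 i| ≤ θhat)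
    -- collocation points and polynomial Lipschitz data on each segment
    (c : ℕ → ℝ) (Lp : ℕ → ℝ)
    (hcmem : ∀ k < K, c k ∈ Ioo (s k) (s (k + 1)))
    (hcol : ∀ k < K, ∀ i, xt' (c k) i = f (c k) (xt (c k)) (u (c k)) i)
    (hLp : ∀ k < K, ∀ τ ∈ Ioo (s k) (s (k + 1)), ∀ i,
      |xt' τ i - xt' (c k) i| ≤ Lp k * |τ - c k|)
    (hfL : ∀ k < K, ∀ τ ∈ Ioo (s k) (s (k + 1)), ∀ i,
      |f τ (xt τ) (u τ) i - f (c k) (xt (c k)) (u (c k)) i| ≤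
        Lx * ∑ j, M j * |xt τ j - xt (c k) j|)
    (Δ : ℝ)
    -- the accumulated collocation error majorant ζ
    (ζ : ℝ → ℝ)
    (hζ : ∀ t, ζ t = ∑ k ∈ (Finset.range K).filter (fun k => s k < t),
      ∫ τ in s k..s (k + 1), (Lp k * |τ - c k| + Lx * ∑ j, M j * |xt τ j - xt (c k) j|)) :
    (∀ t ∈ Icc (0 : ℝ) tf,
      ∑ i, M i * |xt t i - x t i| ≤
        ((∑ i, M i) * ζ t + θhat + vhat * t) * Real.exp (Lx * t)) ∧
    (∀ τ ∈ Icc (0 : ℝ) tf,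
      ((∑ i, M i) * ζ τ + θhat + vhat * τ) * Real.exp (Lx * τ) ≤ Δ →
        ∑ i, M i * |xt τ i - x τ i| ≤ Δ) := by
  classical
  have htf0 : (0:ℝ) ≤ tf := htf.le
  have hm₁ : (0:ℝ) ≤ ∑ i, M i := Finset.sum_nonneg fun i _ => (hM i).le
  have hθ0 : 0 ≤ θhat :=
    le_trans (Finset.sum_nonneg fun i _ => mul_nonneg (hM i).le (abs_nonneg _)) hθ
  have hv0 : 0 ≤ vhat :=
    le_trans (Finset.sum_nonneg fun i _ => mul_nonneg (hM i).le (abs_nonneg _)) (hv 0)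
  -- mesh monotonicity
  have hslt : ∀ k < K, s k < s (k + 1) := by
    intro k hk
    have h1 := (hseg k hk).1
    nlinarith [mul_pos hσ0 hh]
  have hsmono : ∀ k ≤ K, ∀ j ≤ k, s j ≤ s k := by
    intro k
    induction k with
    | zero => intro _ j hj; simp [Nat.le_zero.mp hj]
    | succ k ih =>
      intro hkK j hj
      rcases Nat.eq_or_lt_of_le hj with rfl | hj'
      · exact le_rfl
      · exact le_trans (ih (Nat.le_of_succ_le hkK) j (Nat.lt_succ_iff.mp hj'))
          (hslt k (Nat.lt_of_succ_le hkK)).le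
  have hsmem : ∀ k ≤ K, s k ∈ Icc (0:ℝ) tf := fun k hk =>
    ⟨by rw [← hs0]; exact hsmono k hk 0 (Nat.zero_le _),
     by rw [← hsK]; exact hsmono K le_rfl k hk⟩
  -- Lp is nonnegative
  have hLp0 : ∀ k < K, 0 ≤ Lp k := by
    intro k hk
    obtain ⟨h1, h2⟩ := hcmem k hk
    have hmem : (s k + c k) / 2 ∈ Ioo (s k) (s (k+1)) :=
      ⟨by linarith, by linarith⟩
    have hb := hLp k hk ((s k + c k) / 2) hmem ⟨0, hn⟩
    have habs : 0 < |(s k + c k) / 2 - c k| := by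
      rw [abs_pos]
      intro hcon
      have : (s k + c k) / 2 = c k := by linarith
      linarith
    nlinarith [abs_nonneg (xt' ((s k + c k) / 2) ⟨0, hn⟩ - xt' (c k) ⟨0, hn⟩)]
  -- continuity of the plant trajectory
  have hxc : ∀ i, ContinuousOn (fun t => x t i) (Icc (0:ℝ) tf) := by
    intro i
    have hprim : ContinuousOn
        (fun t => x 0 i + ∫ τ in (0:ℝ)..t, (f τ (x τ) (u τ) i + v τ i)) (Icc 0 tf) := by
      apply ContinuousOn.add continuousOn_const
      have := intervalIntegral.continuousOn_primitive_interval (μ := volume) (a := (0:ℝ))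
        (b := tf) ((intervalIntegrable_iff' (μ := volume) (a := (0:ℝ)) (b := tf)).mp (hxint i))
      rwa [uIcc_of_le htf0] at this
    exact hprim.congr fun t ht => hx t ht i
  -- weighted prediction error
  set dlt : ℝ → ℝ := fun τ => ∑ i, M i * |xt τ i - x τ i| with hdlt
  have hdltc : ContinuousOn dlt (Icc (0:ℝ) tf) :=
    continuousOn_finset_sum _ fun i _ =>
      continuousOn_const.mul (((hxtc i).sub (hxc i)).abs)
  have hdlt0 : ∀ τ, 0 ≤ dlt τ := fun τ =>
    Finset.sum_nonneg fun i _ => mul_nonneg (hM i).le (abs_nonneg _)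
  -- continuous extension of dlt
  set p : ℝ → ℝ := fun τ => max 0 (min τ tf) with hp
  have hpc : Continuous p := continuous_const.max (continuous_id.min continuous_const)
  have hpmem : ∀ τ, p τ ∈ Icc (0:ℝ) tf := fun τ =>
    ⟨le_max_left _ _, max_le htf0 (min_le_right _ _)⟩
  have hpid : ∀ τ ∈ Icc (0:ℝ) tf, p τ = τ := by
    intro τ hτ
    rw [hp]
    dsimp only
    rw [min_eq_left hτ.2, max_eq_right hτ.1]
  set D : ℝ → ℝ := fun τ => dlt (p τ) with hDdef
  have hDc : Continuous D := hdltc.comp_continuous hpc hpmem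
  have hDeq : ∀ τ ∈ Icc (0:ℝ) tf, D τ = dlt τ := by
    intro τ hτ
    rw [hDdef]
    dsimp only
    rw [hpid τ hτ]
  have hD0 : ∀ τ, 0 ≤ D τ := fun τ => hdlt0 _
  -- local error magnitude
  set F : ℝ → ℝ := fun σ2 => ∑ i, M i * |xt' σ2 i - f σ2 (xt σ2) (u σ2) i| with hFdef
  have hF0 : ∀ σ2, 0 ≤ F σ2 := fun σ2 =>
    Finset.sum_nonneg fun i _ => mul_nonneg (hM i).le (abs_nonneg _)
  have hFint : IntervalIntegrable F volume 0 tf :=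
    intervalIntegrable_fun_sum _ fun i =>
      (((hxt'int i).sub (hfxtint i)).abs).const_mul (M i)
  have hFsub : ∀ a b : ℝ, a ∈ Icc (0:ℝ) tf → b ∈ Icc (0:ℝ) tf →
      IntervalIntegrable F volume a b := by
    intro a b ha hb
    refine hFint.mono_set ?_
    exact Set.uIcc_subset_uIcc (by rwa [Set.uIcc_of_le htf0])
      (by rwa [Set.uIcc_of_le htf0])
  -- segment majorant
  set g : ℕ → ℝ → ℝ :=
    fun k σ2 => Lp k * |σ2 - c k| + Lx * ∑ j, M j * |xt σ2 j - xt (c k) j| with hgdef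
  have hsubIcc : ∀ k < K, Icc (s k) (s (k+1)) ⊆ Icc (0:ℝ) tf := fun k hk =>
    Icc_subset_Icc (hsmem k hk.le).1 (hsmem (k+1) hk).2
  have hgcont : ∀ k < K, ContinuousOn (g k) (Icc (s k) (s (k+1))) := by
    intro k hk
    apply ContinuousOn.add
    · exact continuousOn_const.mul ((continuousOn_id.sub continuousOn_const).abs)
    · exact continuousOn_const.mul (continuousOn_finset_sum _ fun j _ =>
        continuousOn_const.mul ((((hxtc j).mono (hsubIcc k hk)).sub continuousOn_const).abs))
  have hgint : ∀ k < K, IntervalIntegrable (g k) volume (s k) (s (k+1)) := fun k hk =>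
    ContinuousOn.intervalIntegrable
      (by rw [uIcc_of_le (hslt k hk).le]; exact hgcont k hk)
  have hg0 : ∀ k < K, ∀ σ2, 0 ≤ g k σ2 := fun k hk σ2 =>
    add_nonneg (mul_nonneg (hLp0 k hk) (abs_nonneg _))
      (mul_nonneg hLx (Finset.sum_nonneg fun j _ => mul_nonneg (hM j).le (abs_nonneg _)))
  -- pointwise bound on each open segment
  have hFg : ∀ k < K, ∀ σ2 ∈ Ioo (s k) (s (k+1)), F σ2 ≤ (∑ i, M i) * g k σ2 := by
    intro k hk σ2 hσ2
    have hbd : ∀ i, |xt' σ2 i - f σ2 (xt σ2) (u σ2) i| ≤ g k σ2 := by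
      intro i
      have h1 : |xt' σ2 i - f σ2 (xt σ2) (u σ2) i| ≤
          |xt' σ2 i - xt' (c k) i| +
            |f σ2 (xt σ2) (u σ2) i - f (c k) (xt (c k)) (u (c k)) i| := by
        have e : xt' σ2 i - f σ2 (xt σ2) (u σ2) i =
            (xt' σ2 i - xt' (c k) i) -
              (f σ2 (xt σ2) (u σ2) i - f (c k) (xt (c k)) (u (c k)) i) := by
          rw [hcol k hk i]; ring
        rw [e]
        exact abs_sub _ _
      exact le_trans h1 (add_le_add (hLp k hk σ2 hσ2 i) (hfL k hk σ2 hσ2 i))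
    calc F σ2 ≤ ∑ i, M i * g k σ2 :=
          Finset.sum_le_sum fun i _ => mul_le_mul_of_nonneg_left (hbd i) (hM i).le
      _ = (∑ i, M i) * g k σ2 := (Finset.sum_mul _ _ _).symm
  -- integral bound on each segment
  have hsegbd : ∀ k < K, (∫ σ2 in s k..s (k+1), F σ2) ≤
      ∫ σ2 in s k..s (k+1), (∑ i, M i) * g k σ2 := by
    intro k hk
    apply intervalIntegral.integral_mono_ae_restrict (hslt k hk).le
      (hFsub _ _ (hsmem k hk.le) (hsmem (k+1) hk)) ((hgint k hk).const_mul _)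
    rw [Filter.EventuallyLE, ae_restrict_iff' measurableSet_Icc]
    have h2 : ∀ᵐ σ2 : ℝ, σ2 ∉ ({s k, s (k+1)} : Set ℝ) :=
      measure_eq_zero_iff_ae_notMem.mp ((Set.to_countable _).measure_zero _)
    filter_upwards [h2] with σ2 hσ2 hmem2
    simp only [Set.mem_insert_iff, Set.mem_singleton_iff, not_or] at hσ2
    exact hFg k hk σ2
      ⟨lt_of_le_of_ne hmem2.1 (Ne.symm hσ2.1), lt_of_le_of_ne hmem2.2 hσ2.2⟩
  -- accumulated bound along the mesh
  have hclaimA : ∀ j ≤ K, (∫ σ2 in (0:ℝ)..s j, F σ2) ≤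
      ∑ k ∈ Finset.range j, ∫ σ2 in s k..s (k+1), (∑ i, M i) * g k σ2 := by
    intro j
    induction j with
    | zero => intro _; rw [hs0]; simp
    | succ j ih =>
      intro hjK
      have hjK' : j < K := Nat.lt_of_succ_le hjK
      have e1 : (∫ σ2 in (0:ℝ)..s (j+1), F σ2) =
          (∫ σ2 in (0:ℝ)..s j, F σ2) + ∫ σ2 in s j..s (j+1), F σ2 :=
        (intervalIntegral.integral_add_adjacent_intervals
          (hFsub 0 (s j) ⟨le_rfl, htf0⟩ (hsmem j hjK'.le))
          (hFsub (s j) (s (j+1)) (hsmem j hjK'.le) (hsmem (j+1) hjK))).symm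
      rw [e1, Finset.sum_range_succ]
      exact add_le_add (ih hjK'.le) (hsegbd j hjK')
  -- main estimate
  have main : ∀ t ∈ Icc (0:ℝ) tf,
      dlt t ≤ ((∑ i, M i) * ζ t + θhat + vhat * t) * Real.exp (Lx * t) := by
    intro t ht
    have hex : ∃ j, t ≤ s j := ⟨K, by rw [hsK]; exact ht.2⟩
    have hNK : Nat.find hex ≤ K := Nat.find_min' hex (by rw [hsK]; exact ht.2)
    have htsN : t ≤ s (Nat.find hex) := Nat.find_spec hex
    have hkN : ∀ k, k < Nat.find hex → s k < t := fun k hk => not_le.mp (Nat.find_min hex hk)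
    have hζval : (∑ i, M i) * ζ t =
        ∑ k ∈ (Finset.range K).filter (fun k => s k < t),
          ∫ σ2 in s k..s (k+1), (∑ i, M i) * g k σ2 := by
      rw [hζ t, Finset.mul_sum]
      refine Finset.sum_congr rfl fun k hk => ?_
      rw [intervalIntegral.integral_const_mul]
    have hsum0 : ∀ k ∈ (Finset.range K).filter (fun k => s k < t),
        0 ≤ ∫ σ2 in s k..s (k+1), (∑ i, M i) * g k σ2 := by
      intro k hk
      have hkK : k < K := Finset.mem_range.mp (Finset.mem_filter.mp hk).1
      exact intervalIntegral.integral_nonneg (hslt k hkK).le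
        fun σ2 _ => mul_nonneg hm₁ (hg0 k hkK σ2)
    have hFbound : (∫ σ2 in (0:ℝ)..t, F σ2) ≤ (∑ i, M i) * ζ t := by
      have h1 : (∫ σ2 in (0:ℝ)..t, F σ2) ≤ ∫ σ2 in (0:ℝ)..s (Nat.find hex), F σ2 :=
        intervalIntegral.integral_mono_interval le_rfl ht.1 htsN
          (Filter.Eventually.of_forall hF0)
          (hFsub 0 (s (Nat.find hex)) ⟨le_rfl, htf0⟩ (hsmem _ hNK))
      refine h1.trans ((hclaimA _ hNK).trans ?_)
      rw [hζval]
      refine Finset.sum_le_sum_of_subset_of_nonneg ?_ fun k hk _ => hsum0 k hk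
      intro k hk
      rw [Finset.mem_range] at hk
      rw [Finset.mem_filter, Finset.mem_range]
      exact ⟨lt_of_lt_of_le hk hNK, hkN k hk⟩
    have hA0 : 0 ≤ (∑ i, M i) * ζ t + θhat + vhat * t := by
      have hz : 0 ≤ (∑ i, M i) * ζ t := by
        rw [hζval]; exact Finset.sum_nonneg hsum0
      have hvt : 0 ≤ vhat * t := mul_nonneg hv0 ht.1
      linarith
    -- key integral inequality
    have hkey : ∀ τ ∈ Icc (0:ℝ) t,
        D τ ≤ ((∑ i, M i) * ζ t + θhat + vhat * t) + Lx * ∫ σ2 in (0:ℝ)..τ, D σ2 := by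
      intro τ hτ
      have hτf : τ ∈ Icc (0:ℝ) tf := ⟨hτ.1, hτ.2.trans ht.2⟩
      have hsub : ∀ {φ : ℝ → ℝ}, IntervalIntegrable φ volume 0 tf →
          IntervalIntegrable φ volume 0 τ := fun hφ =>
        hφ.mono_set (Set.uIcc_subset_uIcc
          (by rw [Set.uIcc_of_le htf0]; exact Set.left_mem_Icc.mpr htf0)
          (by rw [Set.uIcc_of_le htf0]; exact hτf))
      have hGint : ∀ i, IntervalIntegrable
          (fun σ2 => xt' σ2 i - (f σ2 (x σ2) (u σ2) i + v σ2 i)) volume 0 τ :=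
        fun i => hsub ((hxt'int i).sub (hxint i))
      have hstep2 : dlt τ ≤ θhat +
          ∫ σ2 in (0:ℝ)..τ, ∑ i, M i * |xt' σ2 i - (f σ2 (x σ2) (u σ2) i + v σ2 i)| := by
        have h1 : ∀ i, |xt τ i - x τ i| ≤ |xt 0 i - x 0 i| +
            ∫ σ2 in (0:ℝ)..τ, |xt' σ2 i - (f σ2 (x σ2) (u σ2) i + v σ2 i)| := by
          intro i
          have e : xt τ i - x τ i = (xt 0 i - x 0 i) +
              ∫ σ2 in (0:ℝ)..τ, (xt' σ2 i - (f σ2 (x σ2) (u σ2) i + v σ2 i)) := by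
            rw [intervalIntegral.integral_sub (hsub (hxt'int i)) (hsub (hxint i))]
            rw [hxtFTC τ hτf i, hx τ hτf i]
            ring
          rw [e]
          exact (abs_add_le _ _).trans (add_le_add le_rfl
            (intervalIntegral.abs_integral_le_integral_abs hτ.1))
        calc dlt τ ≤ ∑ i, M i * (|xt 0 i - x 0 i| +
              ∫ σ2 in (0:ℝ)..τ, |xt' σ2 i - (f σ2 (x σ2) (u σ2) i + v σ2 i)|) :=
              Finset.sum_le_sum fun i _ => mul_le_mul_of_nonneg_left (h1 i) (hM i).le
          _ = (∑ i, M i * |xt 0 i - x 0 i|) +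
              ∑ i, M i * ∫ σ2 in (0:ℝ)..τ, |xt' σ2 i - (f σ2 (x σ2) (u σ2) i + v σ2 i)| := by
              rw [← Finset.sum_add_distrib]
              exact Finset.sum_congr rfl fun i _ => mul_add _ _ _
          _ ≤ θhat + ∑ i, ∫ σ2 in (0:ℝ)..τ,
                M i * |xt' σ2 i - (f σ2 (x σ2) (u σ2) i + v σ2 i)| := by
              refine add_le_add hθ (le_of_eq ?_)
              exact Finset.sum_congr rfl fun i _ =>
                (intervalIntegral.integral_const_mul _ _).symm
          _ = θhat + ∫ σ2 in (0:ℝ)..τ,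
                ∑ i, M i * |xt' σ2 i - (f σ2 (x σ2) (u σ2) i + v σ2 i)| := by
              rw [intervalIntegral.integral_finset_sum]
              intro i _
              exact ((hGint i).abs).const_mul (M i)
      have hptwise : ∀ σ2 ∈ Icc (0:ℝ) τ,
          (∑ i, M i * |xt' σ2 i - (f σ2 (x σ2) (u σ2) i + v σ2 i)|) ≤
            F σ2 + Lx * D σ2 + vhat := by
        intro σ2 hσ2
        have hσf : σ2 ∈ Icc (0:ℝ) tf := ⟨hσ2.1, hσ2.2.trans hτf.2⟩
        have htri : ∀ i, |xt' σ2 i - (f σ2 (x σ2) (u σ2) i + v σ2 i)| ≤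
            |xt' σ2 i - f σ2 (xt σ2) (u σ2) i| +
              (|f σ2 (xt σ2) (u σ2) i - f σ2 (x σ2) (u σ2) i| + |v σ2 i|) := by
          intro i
          have e : xt' σ2 i - (f σ2 (x σ2) (u σ2) i + v σ2 i) =
              (xt' σ2 i - f σ2 (xt σ2) (u σ2) i) +
                ((f σ2 (xt σ2) (u σ2) i - f σ2 (x σ2) (u σ2) i) + -(v σ2 i)) := by ring
          rw [e]
          exact (abs_add_le _ _).trans (add_le_add le_rfl
            ((abs_add_le _ _).trans (add_le_add le_rfl (le_of_eq (abs_neg _)))))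
        calc (∑ i, M i * |xt' σ2 i - (f σ2 (x σ2) (u σ2) i + v σ2 i)|)
            ≤ ∑ i, M i * (|xt' σ2 i - f σ2 (xt σ2) (u σ2) i| +
                (|f σ2 (xt σ2) (u σ2) i - f σ2 (x σ2) (u σ2) i| + |v σ2 i|)) :=
              Finset.sum_le_sum fun i _ => mul_le_mul_of_nonneg_left (htri i) (hM i).le
          _ = F σ2 + ((∑ i, M i * |f σ2 (xt σ2) (u σ2) i - f σ2 (x σ2) (u σ2) i|) +
                ∑ i, M i * |v σ2 i|) := by
              rw [hFdef]
              simp only [mul_add, Finset.sum_add_distrib]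
          _ ≤ F σ2 + (Lx * dlt σ2 + vhat) :=
              add_le_add le_rfl (add_le_add (hLip σ2 (xt σ2) (x σ2) (u σ2)) (hv σ2))
          _ = F σ2 + Lx * D σ2 + vhat := by rw [hDeq σ2 hσf]; ring
      have hDint : IntervalIntegrable D volume 0 τ := hDc.intervalIntegrable 0 τ
      have hmono3 : (∫ σ2 in (0:ℝ)..τ,
            ∑ i, M i * |xt' σ2 i - (f σ2 (x σ2) (u σ2) i + v σ2 i)|) ≤
          ∫ σ2 in (0:ℝ)..τ, (F σ2 + Lx * D σ2 + vhat) := by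
        apply intervalIntegral.integral_mono_on hτ.1
          (intervalIntegrable_fun_sum _ fun i => ((hGint i).abs).const_mul (M i))
          (((hFsub 0 τ ⟨le_rfl, htf0⟩ hτf).add (hDint.const_mul Lx)).add
            intervalIntegrable_const)
          hptwise
      have heval : (∫ σ2 in (0:ℝ)..τ, (F σ2 + Lx * D σ2 + vhat)) =
          (∫ σ2 in (0:ℝ)..τ, F σ2) + Lx * (∫ σ2 in (0:ℝ)..τ, D σ2) + vhat * τ := by
        rw [intervalIntegral.integral_add
            ((hFsub 0 τ ⟨le_rfl, htf0⟩ hτf).add (hDint.const_mul Lx))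
            intervalIntegrable_const,
          intervalIntegral.integral_add (hFsub 0 τ ⟨le_rfl, htf0⟩ hτf)
            (hDint.const_mul Lx),
          intervalIntegral.integral_const_mul, intervalIntegral.integral_const]
        simp [smul_eq_mul]
        ring
      have hτF : (∫ σ2 in (0:ℝ)..τ, F σ2) ≤ (∑ i, M i) * ζ t :=
        le_trans (intervalIntegral.integral_mono_interval le_rfl hτ.1 hτ.2
          (Filter.Eventually.of_forall hF0) (hFsub 0 t ⟨le_rfl, htf0⟩ ht)) hFbound
      have hvτ : vhat * τ ≤ vhat * t := mul_le_mul_of_nonneg_left hτ.2 hv0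
      rw [hDeq τ hτf]
      have := hstep2.trans (add_le_add le_rfl (hmono3.trans (le_of_eq heval)))
      linarith
    -- Grönwall's inequality
    set ψ : ℝ → ℝ :=
      fun τ => ((∑ i, M i) * ζ t + θhat + vhat * t) + Lx * ∫ σ2 in (0:ℝ)..τ, D σ2 with hψ
    have hψd : ∀ τ : ℝ, HasDerivAt ψ (Lx * D τ) τ := by
      intro τ
      have h1 : HasDerivAt (fun b => ∫ σ2 in (0:ℝ)..b, D σ2) (D τ) τ :=
        intervalIntegral.integral_hasDerivAt_right (hDc.intervalIntegrable 0 τ)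
          (hDc.stronglyMeasurableAtFilter _ _) hDc.continuousAt
      exact (h1.const_mul Lx).const_add _
    have hgron := norm_le_gronwallBound_of_norm_deriv_right_le
      (f := ψ) (f' := fun τ => Lx * D τ)
      (δ := (∑ i, M i) * ζ t + θhat + vhat * t) (K := Lx) (ε := 0) (a := 0) (b := t)
      (fun τ _ => (hψd τ).continuousAt.continuousWithinAt)
      (fun τ _ => (hψd τ).hasDerivWithinAt)
      (by
        rw [hψ]
        simp only [intervalIntegral.integral_same, mul_zero, add_zero]
        rw [Real.norm_eq_abs, abs_of_nonneg hA0])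
      (fun τ hτ => by
        have hψτ : D τ ≤ ψ τ := hkey τ ⟨hτ.1, hτ.2.le⟩
        have hψ0 : 0 ≤ ψ τ := le_trans (hD0 τ) hψτ
        rw [Real.norm_eq_abs, Real.norm_eq_abs, abs_of_nonneg (mul_nonneg hLx (hD0 τ)),
          abs_of_nonneg hψ0, add_zero]
        exact mul_le_mul_of_nonneg_left hψτ hLx)
      t (right_mem_Icc.mpr ht.1)
    rw [gronwallBound_ε0, sub_zero, Real.norm_eq_abs] at hgron
    have h2 : dlt t ≤ ψ t := by
      rw [← hDeq t ht]
      exact hkey t (right_mem_Icc.mpr ht.1)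
    exact le_trans h2 (le_trans (le_abs_self _) hgron)
  exact ⟨main, fun τ hτ hΔ => le_trans (main τ hτ) hΔ⟩
end

section
/- Define the accumulated quadrature errors q_i(t) := Σ_{k∈K_t} η_{k,i} = Σ_{k∈K_t} (w_i + 1)ε_{k,i} and Q(t) := Σᵢ Mᵢ q_i(t). Then the prediction error satisfies ‖δ(t)‖_M ≤ (Q(t) + θ̂ + v̂t)·e^{L_x t} for every t ∈ [0, t_f]; consequently, ‖δ(τ)‖_M ≤ Δ for every τ ∈ [0, t_f] such that (Q(τ) + θ̂ + v̂τ)e^{L_xτ} ≤ Δ (the quadrature-error-triggering guarantee). -/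
set_option maxHeartbeats 1000000
set_option maxRecDepth 8000


open Set MeasureTheory intervalIntegral
open scoped Classical

/-- **Quadrature error triggering (QET) guarantee (Theorem 3).**
Setting: plant `x` satisfies `ẋ = f(t,x,u) + v` (integral form) on `[0, t_f]`, `f` is Lipschitz
in the state with constant `Lx ≥ 0` w.r.t. the weighted norm `‖z‖_M = ∑ i, M i * |z i|`,
`‖v t‖_M ≤ v̂`; the approximate trajectory `x̃` is continuous, C¹ on each open mesh segment with
derivative `x̃'`, and starts within `θ̂` of the plant state.  With the accumulated quadrature
errors `q_i t = ∑_{k ∈ K_t} η_{k,i}` (where `η_{k,i} = ∫_{T_k} |ε_i|` with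
`ε_i τ = x̃'_i τ - f_i (τ, x̃ τ, u τ)`) and `Q t = ∑ i, M i * q_i t`, the prediction error
`δ = x̃ - x` satisfies `‖δ t‖_M ≤ (Q t + θ̂ + v̂ t) exp (Lx t)` for all `t ∈ [0, t_f]`;
consequently `‖δ τ‖_M ≤ Δ` whenever `(Q τ + θ̂ + v̂ τ) exp (Lx τ) ≤ Δ`. -/
theorem quadrature_error_triggering_guarantee
    (n m : ℕ) (hn : 0 < n)
    (tf : ℝ) (htf : 0 < tf)
    (f : ℝ → (Fin n → ℝ) → (Fin m → ℝ) → Fin n → ℝ)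
    (u : ℝ → Fin m → ℝ) (v : ℝ → Fin n → ℝ)
    (M : Fin n → ℝ) (hM : ∀ i, 0 < M i)
    (Lx vhat θhat : ℝ) (hLx : 0 ≤ Lx)
    (hLip : ∀ t z₁ z₂ uu,
      ∑ i, M i * |f t z₁ uu i - f t z₂ uu i| ≤ Lx * ∑ i, M i * |z₁ i - z₂ i|)
    (hv : ∀ t, ∑ i, M i * |v t i| ≤ vhat)
    -- mesh with resolution h and quasi-uniformity σ
    (σ h : ℝ) (hσ0 : 0 < σ) (hσ1 : σ ≤ 1) (hh : 0 < h)
    (K : ℕ) (hK : 0 < K)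
    (s : ℕ → ℝ) (hs0 : s 0 = 0) (hsK : s K = tf)
    (hseg : ∀ k < K, σ * h ≤ s (k + 1) - s k ∧ s (k + 1) - s k ≤ h)
    -- plant trajectory: absolutely continuous Carathéodory solution of the ODE
    (x : ℝ → Fin n → ℝ)
    (hxint : ∀ i, IntervalIntegrable (fun τ => f τ (x τ) (u τ) i + v τ i) volume 0 tf)
    (hx : ∀ t ∈ Icc (0 : ℝ) tf, ∀ i,
      x t i = x 0 i + ∫ τ in (0 : ℝ)..t, (f τ (x τ) (u τ) i + v τ i))
    -- approximate (predicted) trajectory: continuous, piecewise C¹ on the mesh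
    (xt xt' : ℝ → Fin n → ℝ)
    (hxtc : ∀ i, ContinuousOn (fun t => xt t i) (Icc (0 : ℝ) tf))
    (hxtd : ∀ k < K, ∀ t ∈ Ioo (s k) (s (k + 1)), ∀ i,
      HasDerivAt (fun τ => xt τ i) (xt' t i) t)
    (hxt'int : ∀ i, IntervalIntegrable (fun τ => xt' τ i) volume 0 tf)
    (hfxtint : ∀ i, IntervalIntegrable (fun τ => f τ (xt τ) (u τ) i) volume 0 tf)
    (hxtFTC : ∀ t ∈ Icc (0 : ℝ) tf, ∀ i, xt t i = xt 0 i + ∫ τ in (0 : ℝ)..t, xt' τ i)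
    -- initialization at the noisy measurement
    (hθ : ∑ i, M i * |xt 0 i - x 0 i| ≤ θhat)
    (Δ : ℝ)
    -- the weighted accumulated quadrature error Q
    (Q : ℝ → ℝ)
    (hQ : ∀ t, Q t = ∑ i, M i *
      ∑ k ∈ (Finset.range K).filter (fun k => s k < t),
        ∫ τ in s k..s (k + 1), |xt' τ i - f τ (xt τ) (u τ) i|) :
    (∀ t ∈ Icc (0 : ℝ) tf,
      ∑ i, M i * |xt t i - x t i| ≤ (Q t + θhat + vhat * t) * Real.exp (Lx * t)) ∧
    (∀ τ ∈ Icc (0 : ℝ) tf,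
      (Q τ + θhat + vhat * τ) * Real.exp (Lx * τ) ≤ Δ →
        ∑ i, M i * |xt τ i - x τ i| ≤ Δ) := by
  have htf0 : (0:ℝ) ≤ tf := htf.le
  have hvhat : 0 ≤ vhat :=
    le_trans (Finset.sum_nonneg fun i _ => mul_nonneg (hM i).le (abs_nonneg _)) (hv 0)
  -- mesh monotonicity
  have hstep : ∀ k < K, s k ≤ s (k+1) := by
    intro k hk
    nlinarith [(hseg k hk).1, mul_pos hσ0 hh]
  have hsmono : ∀ d k, k + d ≤ K → s k ≤ s (k + d) := by
    intro d
    induction d with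
    | zero => intro k _; exact le_rfl
    | succ d ih =>
      intro k hkd
      have h1 : k + d < K := by omega
      exact (ih k h1.le).trans (hstep (k+d) h1)
  have hsle : ∀ k l : ℕ, k ≤ l → l ≤ K → s k ≤ s l := by
    intro k l hkl hlK
    have := hsmono (l - k) k (by omega)
    rwa [Nat.add_sub_cancel' hkl] at this
  have hsmem : ∀ k ≤ K, s k ∈ Icc (0:ℝ) tf := by
    intro k hk
    constructor
    · rw [← hs0]; exact hsle 0 k (Nat.zero_le _) hk
    · rw [← hsK]; exact hsle k K hk le_rfl
  -- restriction of interval integrability to subintervals of [0, tf]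
  have hsub : ∀ {a b : ℝ}, a ∈ Icc (0:ℝ) tf → b ∈ Icc (0:ℝ) tf →
      ∀ {g : ℝ → ℝ}, IntervalIntegrable g volume 0 tf → IntervalIntegrable g volume a b := by
    intro a b ha hb g hg
    apply hg.mono_set
    rw [uIcc_of_le htf0]
    exact uIcc_subset_Icc ha hb
  -- continuity of the plant state
  have hxc : ∀ i, ContinuousOn (fun r => x r i) (Icc (0:ℝ) tf) := by
    intro i
    have h1 : ContinuousOn
        (fun r => x 0 i + ∫ τ in (0:ℝ)..r, (f τ (x τ) (u τ) i + v τ i)) (Icc (0:ℝ) tf) := by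
      apply continuousOn_const.add
      have h2 := intervalIntegral.continuousOn_primitive_interval'
        (hxint i) (left_mem_uIcc (a := (0:ℝ)) (b := tf))
      rwa [uIcc_of_le htf0] at h2
    exact h1.congr fun r hr => hx r hr i
  -- the weighted prediction-error norm φ
  set φ : ℝ → ℝ := fun r => ∑ i, M i * |xt r i - x r i| with hφ
  have hφc : ContinuousOn φ (Icc (0:ℝ) tf) := by
    apply continuousOn_finset_sum
    intro i _
    exact continuousOn_const.mul ((hxtc i).sub (hxc i)).abs
  -- clamped (globally continuous) version of φ
  set c : ℝ → ℝ := fun r => max 0 (min r tf) with hc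
  have hcc : Continuous c := continuous_const.max (continuous_id.min continuous_const)
  have hcmem : ∀ r, c r ∈ Icc (0:ℝ) tf :=
    fun r => ⟨le_max_left _ _, max_le htf0 (min_le_right _ _)⟩
  have hceq : ∀ r ∈ Icc (0:ℝ) tf, c r = r := by
    intro r hr
    simp only [hc]
    rw [min_eq_left hr.2, max_eq_right hr.1]
  set φb : ℝ → ℝ := fun r => φ (c r) with hφbdef
  have hφbc : Continuous φb := hφc.comp_continuous hcc hcmem
  have hφbeq : ∀ r ∈ Icc (0:ℝ) tf, φb r = φ r := by
    intro r hr
    simp only [hφbdef, hceq r hr]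
  have hφnonneg : ∀ r, 0 ≤ φ r :=
    fun r => Finset.sum_nonneg fun i _ => mul_nonneg (hM i).le (abs_nonneg _)
  have hφbnonneg : ∀ r, 0 ≤ φb r := fun r => hφnonneg (c r)
  -- local error and Lipschitz-disturbance error
  set e : Fin n → ℝ → ℝ := fun i τ => xt' τ i - f τ (xt τ) (u τ) i with he
  set g : Fin n → ℝ → ℝ := fun i τ => f τ (xt τ) (u τ) i - (f τ (x τ) (u τ) i + v τ i) with hgdef
  have heint : ∀ i, IntervalIntegrable (e i) volume 0 tf :=
    fun i => (hxt'int i).sub (hfxtint i)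
  have hgint : ∀ i, IntervalIntegrable (g i) volume 0 tf :=
    fun i => (hfxtint i).sub (hxint i)
  have heaint : ∀ i, IntervalIntegrable (fun τ => |e i τ|) volume 0 tf := fun i => (heint i).abs
  have hgaint : ∀ i, IntervalIntegrable (fun τ => |g i τ|) volume 0 tf := fun i => (hgint i).abs
  -- the mesh quadrature covers [0, t]
  have hmesh : ∀ t ∈ Icc (0:ℝ) tf, ∀ i, (∫ τ in (0:ℝ)..t, |e i τ|) ≤
      ∑ k ∈ (Finset.range K).filter (fun k => s k < t), ∫ τ in s k..s (k+1), |e i τ| := by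
    intro t ht i
    set a : ℕ → ℝ := fun k => min (s k) t with ha
    have hamem : ∀ k ≤ K, a k ∈ Icc (0:ℝ) tf :=
      fun k hk => ⟨le_min (hsmem k hk).1 ht.1, min_le_of_left_le (hsmem k hk).2⟩
    have hadj : ∀ k < K, IntervalIntegrable (fun τ => |e i τ|) volume (a k) (a (k+1)) :=
      fun k hk => hsub (hamem k hk.le) (hamem (k+1) hk) (heaint i)
    have hsumeq : ∑ k ∈ Finset.range K, ∫ τ in a k..a (k+1), |e i τ|
        = ∫ τ in (0:ℝ)..t, |e i τ| := by
      rw [intervalIntegral.sum_integral_adjacent_intervals hadj]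
      have h0 : a 0 = 0 := by simp [ha, hs0, min_eq_left ht.1]
      have hKK : a K = t := by simp [ha, hsK, min_eq_right ht.2]
      rw [h0, hKK]
    rw [← hsumeq, Finset.sum_filter]
    apply Finset.sum_le_sum
    intro k hk
    rw [Finset.mem_range] at hk
    by_cases hkt : s k < t
    · simp only [hkt, if_true]
      apply intervalIntegral.integral_mono_interval (le_of_eq (min_eq_left hkt.le).symm)
        (min_le_min (hstep k hk) le_rfl) (min_le_left _ _)
        (Filter.Eventually.of_forall fun τ => abs_nonneg _)
        (hsub (hsmem k hk.le) (hsmem (k+1) hk) (heaint i))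
    · simp only [hkt, if_false]
      have h1 : a k = t := min_eq_right (not_lt.mp hkt)
      have h2 : a (k+1) = t := min_eq_right ((not_lt.mp hkt).trans (hstep k hk))
      rw [h1, h2, intervalIntegral.integral_same]
  have hQbound : ∀ t ∈ Icc (0:ℝ) tf, (∑ i, M i * ∫ τ in (0:ℝ)..t, |e i τ|) ≤ Q t := by
    intro t ht
    rw [hQ t]
    exact Finset.sum_le_sum fun i _ => mul_le_mul_of_nonneg_left (hmesh t ht i) (hM i).le
  -- pointwise bound on the weighted Lipschitz-disturbance error
  have hGφ : ∀ τ, (∑ i, M i * |g i τ|) ≤ Lx * φ τ + vhat := by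
    intro τ
    calc ∑ i, M i * |g i τ|
        ≤ ∑ i, (M i * |f τ (xt τ) (u τ) i - f τ (x τ) (u τ) i| + M i * |v τ i|) := by
          apply Finset.sum_le_sum
          intro i _
          rw [← mul_add]
          apply mul_le_mul_of_nonneg_left _ (hM i).le
          have h1 : g i τ = (f τ (xt τ) (u τ) i - f τ (x τ) (u τ) i) + (-(v τ i)) := by
            simp only [hgdef]; ring
          rw [h1]
          exact (abs_add_le _ _).trans (by rw [abs_neg])
      _ = (∑ i, M i * |f τ (xt τ) (u τ) i - f τ (x τ) (u τ) i|) + ∑ i, M i * |v τ i| :=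
          Finset.sum_add_distrib
      _ ≤ Lx * φ τ + vhat := add_le_add (hLip τ _ _ _) (hv τ)
  -- main Grönwall bound
  have main : ∀ t ∈ Icc (0:ℝ) tf,
      φ t ≤ (Q t + θhat + vhat * t) * Real.exp (Lx * t) := by
    rintro t ⟨ht0, httf⟩
    set Ct := Q t + θhat + vhat * t with hCt
    set ψ : ℝ → ℝ := fun r => ∫ τ in (0:ℝ)..r, φb τ with hψ
    have hψd : ∀ r : ℝ, HasDerivAt ψ (φb r) r :=
      fun r => (hφbc.integral_hasStrictDerivAt 0 r).hasDerivAt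
    have hψc : Continuous ψ := by
      have : Differentiable ℝ ψ := fun r => (hψd r).differentiableAt
      exact this.continuous
    have hψnonneg : ∀ r, 0 ≤ r → 0 ≤ ψ r :=
      fun r hr => intervalIntegral.integral_nonneg hr fun τ _ => hφbnonneg τ
    -- key integral inequality
    have key : ∀ r ∈ Icc (0:ℝ) t, φ r ≤ Ct + Lx * ψ r := by
      rintro r ⟨hr0, hrt⟩
      have hrtf : r ≤ tf := hrt.trans httf
      have hrmem : r ∈ Icc (0:ℝ) tf := ⟨hr0, hrtf⟩
      have h0mem : (0:ℝ) ∈ Icc (0:ℝ) tf := ⟨le_rfl, htf0⟩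
      have heir : ∀ i, IntervalIntegrable (e i) volume 0 r :=
        fun i => hsub h0mem hrmem (heint i)
      have hgir : ∀ i, IntervalIntegrable (g i) volume 0 r :=
        fun i => hsub h0mem hrmem (hgint i)
      have hδ : ∀ i, xt r i - x r i
          = (xt 0 i - x 0 i) + ((∫ τ in (0:ℝ)..r, e i τ) + ∫ τ in (0:ℝ)..r, g i τ) := by
        intro i
        have h4 : (∫ τ in (0:ℝ)..r, e i τ) + (∫ τ in (0:ℝ)..r, g i τ)
            = (∫ τ in (0:ℝ)..r, xt' τ i) - ∫ τ in (0:ℝ)..r, (f τ (x τ) (u τ) i + v τ i) := by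
          rw [← intervalIntegral.integral_add (heir i) (hgir i),
            ← intervalIntegral.integral_sub (hsub h0mem hrmem (hxt'int i))
              (hsub h0mem hrmem (hxint i))]
          apply intervalIntegral.integral_congr
          intro τ _
          simp only [he, hgdef]
          ring
        rw [hxtFTC r hrmem i, hx r hrmem i, h4]
        ring
      have habs : ∀ i, |xt r i - x r i|
          ≤ |xt 0 i - x 0 i| + ((∫ τ in (0:ℝ)..r, |e i τ|) + ∫ τ in (0:ℝ)..r, |g i τ|) := by
        intro i
        rw [hδ i]
        refine (abs_add_le _ _).trans (add_le_add le_rfl ((abs_add_le _ _).trans (add_le_add ?_ ?_)))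
        · exact intervalIntegral.abs_integral_le_integral_abs hr0
        · exact intervalIntegral.abs_integral_le_integral_abs hr0
      have hsum : φ r ≤ (∑ i, M i * |xt 0 i - x 0 i|)
          + ((∑ i, M i * ∫ τ in (0:ℝ)..r, |e i τ|) + ∑ i, M i * ∫ τ in (0:ℝ)..r, |g i τ|) := by
        rw [← Finset.sum_add_distrib, ← Finset.sum_add_distrib]
        apply Finset.sum_le_sum
        intro i _
        have h5 := mul_le_mul_of_nonneg_left (habs i) (hM i).le
        rw [mul_add, mul_add] at h5
        exact h5
      have hE : (∑ i, M i * ∫ τ in (0:ℝ)..r, |e i τ|) ≤ Q t := by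
        refine le_trans ?_ (hQbound t ⟨ht0, httf⟩)
        apply Finset.sum_le_sum
        intro i _
        apply mul_le_mul_of_nonneg_left _ (hM i).le
        apply intervalIntegral.integral_mono_interval le_rfl hr0 hrt
          (Filter.Eventually.of_forall fun τ => abs_nonneg _)
          (hsub h0mem ⟨ht0, httf⟩ (heaint i))
      have hG : (∑ i, M i * ∫ τ in (0:ℝ)..r, |g i τ|) ≤ Lx * ψ r + vhat * t := by
        have hswap : (∑ i, M i * ∫ τ in (0:ℝ)..r, |g i τ|)
            = ∫ τ in (0:ℝ)..r, ∑ i, M i * |g i τ| := by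
          rw [intervalIntegral.integral_finset_sum
            (fun i _ => ((hsub h0mem hrmem (hgaint i)).const_mul (M i)))]
          exact Finset.sum_congr rfl fun i _ => (intervalIntegral.integral_const_mul _ _).symm
        rw [hswap]
        have h6 : (∫ τ in (0:ℝ)..r, ∑ i, M i * |g i τ|)
            ≤ ∫ τ in (0:ℝ)..r, (Lx * φb τ + vhat) := by
          refine intervalIntegral.integral_mono_on (μ := volume)
            (f := fun τ => ∑ i, M i * |g i τ|) (g := fun τ => Lx * φb τ + vhat) hr0 ?_ ?_ ?_
          · have hS := IntervalIntegrable.sum (f := fun i τ => M i * |g i τ|) Finset.univ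
              fun i _ => (hsub h0mem hrmem (hgaint i)).const_mul (M i)
            rwa [Finset.sum_fn] at hS
          · exact ((continuous_const.mul hφbc).add continuous_const).intervalIntegrable 0 r
          · intro τ hτ
            have hτmem : τ ∈ Icc (0:ℝ) tf := ⟨hτ.1, hτ.2.trans hrtf⟩
            show (∑ i, M i * |g i τ|) ≤ Lx * φb τ + vhat
            rw [hφbeq τ hτmem]
            exact hGφ τ
        have h7 : (∫ τ in (0:ℝ)..r, (Lx * φb τ + vhat)) = Lx * ψ r + vhat * r := by
          rw [intervalIntegral.integral_add (f := fun τ => Lx * φb τ) (g := fun _ => vhat) ((continuous_const.mul hφbc).intervalIntegrable 0 r)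
            (intervalIntegrable_const), intervalIntegral.integral_const_mul,
            intervalIntegral.integral_const]
          simp [mul_comm, hψ]
        have h8 : vhat * r ≤ vhat * t := mul_le_mul_of_nonneg_left hrt hvhat
        linarith
      have := hsum
      have h9 := hθ
      simp only [hCt]
      linarith
    -- Grönwall
    have grb := norm_le_gronwallBound_of_norm_deriv_right_le (f := ψ) (f' := φb)
      (δ := 0) (K := Lx) (ε := Ct) (a := 0) (b := t) hψc.continuousOn
      (fun r _ => (hψd r).hasDerivWithinAt)
      (by simp [hψ])
      (by
        rintro r ⟨hr0, hrt⟩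
        have hrmem : r ∈ Icc (0:ℝ) tf := ⟨hr0, hrt.le.trans httf⟩
        rw [Real.norm_eq_abs, Real.norm_eq_abs, abs_of_nonneg (hφbnonneg r),
          abs_of_nonneg (hψnonneg r hr0), hφbeq r hrmem]
        have := key r ⟨hr0, hrt.le⟩
        linarith)
      t (right_mem_Icc.mpr ht0)
    rw [Real.norm_eq_abs, abs_of_nonneg (hψnonneg t ht0), sub_zero] at grb
    have hfin : φ t ≤ Ct + Lx * ψ t := key t (right_mem_Icc.mpr ht0)
    have h10 : Lx * ψ t ≤ Lx * gronwallBound 0 Lx Ct t := mul_le_mul_of_nonneg_left grb hLx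
    have h11 : Ct + Lx * gronwallBound 0 Lx Ct t ≤ Ct * Real.exp (Lx * t) := by
      rcases eq_or_lt_of_le hLx with h0 | h0
      · rw [← h0]
        rw [gronwallBound_K0]
        simp
      · rw [gronwallBound_of_K_ne_0 h0.ne']
        have hLxne : Lx ≠ 0 := h0.ne'
        field_simp
        ring_nf
        exact le_rfl
    linarith
  refine ⟨main, fun τ hτ hle => le_trans (main τ hτ) hle⟩
end

section
/- Fix s ∈ [0, t_f]. Suppose the absolute local error quadratures satisfy η_{k,i} ≤ ξ̂_i for every mesh segment k and state i, and suppose the event-triggering guarantee ‖δ(τ)‖_M ≤ Δ holds for all τ ∈ [0, s]. Let N_s := card K_s and define the radius r(s) := min{(N_s·Σᵢ Mᵢξ̂ᵢ + θ̂ + v̂s)·e^{L_x s}, Δ}. Then ‖x̃(s) − x(s)‖_M ≤ r(s). Consequently, for any closed convex set X ⊆ ℝⁿ, if the predicted state satisfies x̃(s) ∈ X ⊖ B_s, where B_s := {z ∈ ℝⁿ : ‖z‖_M ≤ r(s)} and A ⊖ B := {a ∈ ℝⁿ : a + b ∈ A for all b ∈ B} is the Pontryagin difference, then the actual state satisfies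 x(s) ∈ X. -/
open Set MeasureTheory intervalIntegral
open scoped Classical

/-- **Constraint tightening via the prediction-error ball (Lemma 1).**
Setting: plant `x` satisfies `ẋ = f(t,x,u) + v` (integral form) on `[0, t_f]`, `f` is Lipschitz
in the state with constant `Lx ≥ 0` w.r.t. the weighted norm `‖z‖_M = ∑ i, M i * |z i|`,
`‖v t‖_M ≤ v̂`; the approximate trajectory `x̃` is continuous, C¹ on each open mesh segment with
derivative `x̃'`, and starts within `θ̂` of the plant state.  Fix `s₀ ∈ [0, t_f]`, suppose the
absolute local error quadratures satisfy `η_{k,i} ≤ ξ̂ i` on every segment and that the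
event-triggering guarantee `‖δ τ‖_M ≤ Δ` holds on `[0, s₀]`.  With `N = card K_{s₀}` and
`r = min ((N ∑ᵢ Mᵢ ξ̂ᵢ + θ̂ + v̂ s₀) exp (Lx s₀)) Δ`, the prediction error satisfies
`‖x̃ s₀ - x s₀‖_M ≤ r`; consequently, for any closed convex `X`, if
`x̃ s₀ ∈ X ⊖ B_{s₀} = {a | ∀ b, ‖b‖_M ≤ r → a + b ∈ X}` then `x s₀ ∈ X`. -/
theorem constraint_tightening_prediction_error_ball
    (n m : ℕ) (hn : 0 < n)
    (tf : ℝ) (htf : 0 < tf)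
    (f : ℝ → (Fin n → ℝ) → (Fin m → ℝ) → Fin n → ℝ)
    (u : ℝ → Fin m → ℝ) (v : ℝ → Fin n → ℝ)
    (M : Fin n → ℝ) (hM : ∀ i, 0 < M i)
    (Lx vhat θhat : ℝ) (hLx : 0 ≤ Lx)
    (hLip : ∀ t z₁ z₂ uu,
      ∑ i, M i * |f t z₁ uu i - f t z₂ uu i| ≤ Lx * ∑ i, M i * |z₁ i - z₂ i|)
    (hv : ∀ t, ∑ i, M i * |v t i| ≤ vhat)
    -- mesh with resolution h and quasi-uniformity σ
    (σ h : ℝ) (hσ0 : 0 < σ) (hσ1 : σ ≤ 1) (hh : 0 < h)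
    (K : ℕ) (hK : 0 < K)
    (s : ℕ → ℝ) (hs0 : s 0 = 0) (hsK : s K = tf)
    (hseg : ∀ k < K, σ * h ≤ s (k + 1) - s k ∧ s (k + 1) - s k ≤ h)
    -- plant trajectory: absolutely continuous Carathéodory solution of the ODE
    (x : ℝ → Fin n → ℝ)
    (hxint : ∀ i, IntervalIntegrable (fun τ => f τ (x τ) (u τ) i + v τ i) volume 0 tf)
    (hx : ∀ t ∈ Icc (0 : ℝ) tf, ∀ i,
      x t i = x 0 i + ∫ τ in (0 : ℝ)..t, (f τ (x τ) (u τ) i + v τ i))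
    -- approximate (predicted) trajectory: continuous, piecewise C¹ on the mesh
    (xt xt' : ℝ → Fin n → ℝ)
    (hxtc : ∀ i, ContinuousOn (fun t => xt t i) (Icc (0 : ℝ) tf))
    (hxtd : ∀ k < K, ∀ t ∈ Ioo (s k) (s (k + 1)), ∀ i,
      HasDerivAt (fun τ => xt τ i) (xt' t i) t)
    (hxt'int : ∀ i, IntervalIntegrable (fun τ => xt' τ i) volume 0 tf)
    (hfxtint : ∀ i, IntervalIntegrable (fun τ => f τ (xt τ) (u τ) i) volume 0 tf)
    (hxtFTC : ∀ t ∈ Icc (0 : ℝ) tf, ∀ i, xt t i = xt 0 i + ∫ τ in (0 : ℝ)..t, xt' τ i)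
    -- initialization at the noisy measurement
    (hθ : ∑ i, M i * |xt 0 i - x 0 i| ≤ θhat)
    -- accuracy certificates: absolute local error quadrature bounds
    (ξhat : Fin n → ℝ)
    (hη : ∀ k < K, ∀ i,
      (∫ τ in s k..s (k + 1), |xt' τ i - f τ (xt τ) (u τ) i|) ≤ ξhat i)
    -- the fixed prediction time and the event-triggering guarantee up to it
    (s₀ : ℝ) (hs₀ : s₀ ∈ Icc (0 : ℝ) tf)
    (Δ : ℝ) (hδ : ∀ τ ∈ Icc (0 : ℝ) s₀, ∑ i, M i * |xt τ i - x τ i| ≤ Δ)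
    -- the tightening radius
    (r : ℝ)
    (hr : r = min
      (((((Finset.range K).filter (fun k => s k < s₀)).card : ℝ) * (∑ i, M i * ξhat i)
          + θhat + vhat * s₀) * Real.exp (Lx * s₀)) Δ) :
    (∑ i, M i * |xt s₀ i - x s₀ i| ≤ r) ∧
    (∀ X : Set (Fin n → ℝ), IsClosed X → Convex ℝ X →
      (∀ b : Fin n → ℝ, (∑ i, M i * |b i|) ≤ r → xt s₀ + b ∈ X) →
      x s₀ ∈ X) := by
  classical
  have htf0 : (0:ℝ) ≤ tf := le_of_lt htf
  obtain ⟨hs₀0, hs₀tf⟩ := hs₀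
  -- mesh monotonicity
  have hstep : ∀ k, k < K → s k ≤ s (k+1) := by
    intro k hk
    have h1 := (hseg k hk).1
    nlinarith [mul_pos hσ0 hh]
  have hsmono : ∀ a b : ℕ, a ≤ b → b ≤ K → s a ≤ s b := by
    intro a b hab hbK
    induction b, hab using Nat.le_induction with
    | base => exact le_rfl
    | succ b hab ih =>
      exact le_trans (ih (le_trans (Nat.le_succ b) hbK))
        (hstep b (Nat.lt_of_succ_le hbK))
  have hsnn : ∀ k, k ≤ K → (0:ℝ) ≤ s k := by
    intro k hk
    have := hsmono 0 k (Nat.zero_le k) hk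
    simpa [hs0] using this
  have hstf : ∀ k, k ≤ K → s k ≤ tf := by
    intro k hk
    have := hsmono k K hk le_rfl
    simpa [hsK] using this
  -- the number of segments intersecting (0, s₀)
  have hex : ∃ k, K ≤ k ∨ s₀ ≤ s k := ⟨K, Or.inl le_rfl⟩
  set N' : ℕ := Nat.find hex with hN'def
  have hN'le : N' ≤ K := Nat.find_le (Or.inl le_rfl)
  have hs₀leN' : s₀ ≤ s N' := by
    rcases Nat.find_spec hex with hca | hca
    · have : N' = K := le_antisymm hN'le hca
      rw [this, hsK]; exact hs₀tf
    · exact hca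
  have hfilter : (Finset.range K).filter (fun k => s k < s₀) = Finset.range N' := by
    ext j
    simp only [Finset.mem_filter, Finset.mem_range]
    constructor
    · rintro ⟨hjK, hj⟩
      by_contra hc
      push_neg at hc
      rcases Nat.find_spec hex with hca | hca
      · exact absurd (le_trans hca hc) (Nat.not_le.mpr hjK)
      · exact absurd (le_trans hca (hsmono N' j hc (le_of_lt hjK))) (not_le.mpr hj)
    · intro hj
      have := Nat.find_min hex hj
      push_neg at this
      exact ⟨this.1, this.2⟩
  -- integrability transfer to subintervals of [0, tf]
  have hsub : ∀ a b : ℝ, a ∈ Icc (0:ℝ) tf → b ∈ Icc (0:ℝ) tf →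
      uIcc a b ⊆ uIcc (0:ℝ) tf := by
    intro a b ha hb
    refine uIcc_subset_uIcc ?_ ?_ <;> rw [uIcc_of_le htf0]
    exacts [ha, hb]
  have hmonoI : ∀ (g : ℝ → ℝ), IntervalIntegrable g volume 0 tf →
      ∀ a b : ℝ, a ∈ Icc (0:ℝ) tf → b ∈ Icc (0:ℝ) tf →
      IntervalIntegrable g volume a b := by
    intro g hg a b ha hb
    exact hg.mono_set (hsub a b ha hb)
  -- continuity of the plant state
  have hxc : ∀ i, ContinuousOn (fun t => x t i) (Icc (0:ℝ) tf) := by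
    intro i
    have hprim : ContinuousOn
        (fun t => x 0 i + ∫ τ in (0:ℝ)..t, (f τ (x τ) (u τ) i + v τ i))
        (Icc (0:ℝ) tf) := by
      have := continuousOn_primitive_interval' (hxint i) (left_mem_uIcc)
      rw [uIcc_of_le htf0] at this
      exact continuousOn_const.add this
    exact hprim.congr (fun t ht => hx t ht i)
  -- the prediction error
  set δf : ℝ → ℝ := fun t => ∑ i, M i * |xt t i - x t i| with hδfdef
  have hδc : ContinuousOn δf (Icc (0:ℝ) tf) := by
    apply continuousOn_finset_sum
    intro i _
    exact continuousOn_const.mul (((hxtc i).sub (hxc i)).abs)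
  have hδnn : ∀ t, 0 ≤ δf t :=
    fun t => Finset.sum_nonneg fun i _ => mul_nonneg (hM i).le (abs_nonneg _)
  have hδint : ∀ a b : ℝ, a ∈ Icc (0:ℝ) tf → b ∈ Icc (0:ℝ) tf →
      IntervalIntegrable δf volume a b := by
    intro a b ha hb
    exact (hδc.mono ((hsub a b ha hb).trans (by rw [uIcc_of_le htf0]))).intervalIntegrable
  set g : ℝ → ℝ := fun t => ∫ τ in (0:ℝ)..t, δf τ with hgdef
  -- integrable building blocks
  have hq : ∀ i, IntervalIntegrable (fun τ => xt' τ i - f τ (xt τ) (u τ) i) volume 0 tf :=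
    fun i => (hxt'int i).sub (hfxtint i)
  have hw : ∀ i, IntervalIntegrable
      (fun τ => f τ (xt τ) (u τ) i - (f τ (x τ) (u τ) i + v τ i)) volume 0 tf :=
    fun i => (hfxtint i).sub (hxint i)
  have hp : ∀ i, IntervalIntegrable
      (fun τ => xt' τ i - (f τ (x τ) (u τ) i + v τ i)) volume 0 tf :=
    fun i => (hxt'int i).sub (hxint i)
  have hs₀mem : s₀ ∈ Icc (0:ℝ) tf := ⟨hs₀0, hs₀tf⟩
  have h0mem : (0:ℝ) ∈ Icc (0:ℝ) tf := ⟨le_rfl, htf0⟩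
  -- Step A : quadrature bound
  have hA : ∀ i, (∫ τ in (0:ℝ)..s₀, |xt' τ i - f τ (xt τ) (u τ) i|) ≤ (N':ℝ) * ξhat i := by
    intro i
    have hN'mem : s N' ∈ Icc (0:ℝ) tf := ⟨hsnn N' hN'le, hstf N' hN'le⟩
    have h1 : (∫ τ in (0:ℝ)..s₀, |xt' τ i - f τ (xt τ) (u τ) i|)
        ≤ ∫ τ in (0:ℝ)..s N', |xt' τ i - f τ (xt τ) (u τ) i| := by
      apply intervalIntegral.integral_mono_interval le_rfl hs₀0 hs₀leN'
        (Filter.Eventually.of_forall fun τ => abs_nonneg _)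
      exact hmonoI _ (hq i).abs 0 (s N') h0mem hN'mem
    have h2 : (∫ τ in (0:ℝ)..s N', |xt' τ i - f τ (xt τ) (u τ) i|)
        = ∑ k ∈ Finset.range N', ∫ τ in s k..s (k+1), |xt' τ i - f τ (xt τ) (u τ) i| := by
      rw [intervalIntegral.sum_integral_adjacent_intervals, hs0]
      intro k hk
      have hk1 : k + 1 ≤ K := Nat.succ_le_of_lt (lt_of_lt_of_le hk hN'le)
      exact hmonoI _ (hq i).abs (s k) (s (k+1))
        ⟨hsnn k (le_of_lt (lt_of_lt_of_le hk hN'le)), hstf k (le_of_lt (lt_of_lt_of_le hk hN'le))⟩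
        ⟨hsnn (k+1) hk1, hstf (k+1) hk1⟩
    have h3 : (∑ k ∈ Finset.range N', ∫ τ in s k..s (k+1), |xt' τ i - f τ (xt τ) (u τ) i|)
        ≤ (N':ℝ) * ξhat i := by
      have := Finset.sum_le_card_nsmul (Finset.range N')
        (fun k => ∫ τ in s k..s (k+1), |xt' τ i - f τ (xt τ) (u τ) i|) (ξhat i)
        (fun k hk => hη k (lt_of_lt_of_le (Finset.mem_range.mp hk) hN'le) i)
      simpa [nsmul_eq_mul] using this
    linarith
  -- nonnegativity of the constants
  have hvhat : 0 ≤ vhat :=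
    le_trans (Finset.sum_nonneg fun i _ => mul_nonneg (hM i).le (abs_nonneg _)) (hv 0)
  have hθhat : 0 ≤ θhat :=
    le_trans (Finset.sum_nonneg fun i _ => mul_nonneg (hM i).le (abs_nonneg _)) hθ
  have hξnn : ∀ i, 0 ≤ ξhat i := by
    intro i
    refine le_trans ?_ (hη 0 hK i)
    exact intervalIntegral.integral_nonneg (hstep 0 hK) (fun τ _ => abs_nonneg _)
  set C : ℝ := (N':ℝ) * (∑ i, M i * ξhat i) + θhat + vhat * s₀ with hCdef
  have hC : 0 ≤ C := by
    have : 0 ≤ ∑ i, M i * ξhat i :=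
      Finset.sum_nonneg fun i _ => mul_nonneg (hM i).le (hξnn i)
    have hN'nn : (0:ℝ) ≤ (N':ℝ) := Nat.cast_nonneg N'
    nlinarith
  -- Step B : pointwise integral inequality
  have hkey : ∀ t ∈ Icc (0:ℝ) s₀, δf t ≤ C + Lx * g t := by
    intro t ht
    obtain ⟨ht0, hts₀⟩ := ht
    have htmem : t ∈ Icc (0:ℝ) tf := ⟨ht0, le_trans hts₀ hs₀tf⟩
    have hrep : ∀ i, xt t i - x t i = (xt 0 i - x 0 i)
        + ∫ τ in (0:ℝ)..t, (xt' τ i - (f τ (x τ) (u τ) i + v τ i)) := by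
      intro i
      have h1 := hxtFTC t htmem i
      have h2 := hx t htmem i
      have h3 : (∫ τ in (0:ℝ)..t, (xt' τ i - (f τ (x τ) (u τ) i + v τ i)))
          = (∫ τ in (0:ℝ)..t, xt' τ i) - ∫ τ in (0:ℝ)..t, (f τ (x τ) (u τ) i + v τ i) :=
        intervalIntegral.integral_sub (hmonoI _ (hxt'int i) 0 t h0mem htmem)
          (hmonoI _ (hxint i) 0 t h0mem htmem)
      rw [h1, h2, h3]; ring
    have hterm : ∀ i, |xt t i - x t i| ≤ |xt 0 i - x 0 i|
        + (∫ τ in (0:ℝ)..t, |xt' τ i - f τ (xt τ) (u τ) i|)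
        + ∫ τ in (0:ℝ)..t, |f τ (xt τ) (u τ) i - (f τ (x τ) (u τ) i + v τ i)| := by
      intro i
      rw [hrep i]
      refine le_trans (abs_add_le _ _) ?_
      have h4 : |∫ τ in (0:ℝ)..t, (xt' τ i - (f τ (x τ) (u τ) i + v τ i))|
          ≤ ∫ τ in (0:ℝ)..t, |xt' τ i - (f τ (x τ) (u τ) i + v τ i)| :=
        intervalIntegral.abs_integral_le_integral_abs ht0
      have h5 : (∫ τ in (0:ℝ)..t, |xt' τ i - (f τ (x τ) (u τ) i + v τ i)|)
          ≤ (∫ τ in (0:ℝ)..t, |xt' τ i - f τ (xt τ) (u τ) i|)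
            + ∫ τ in (0:ℝ)..t, |f τ (xt τ) (u τ) i - (f τ (x τ) (u τ) i + v τ i)| := by
        rw [← intervalIntegral.integral_add
          (hmonoI _ (hq i).abs 0 t h0mem htmem) (hmonoI _ (hw i).abs 0 t h0mem htmem)]
        apply intervalIntegral.integral_mono_on ht0
          (hmonoI _ (hp i).abs 0 t h0mem htmem)
          ((hmonoI _ (hq i).abs 0 t h0mem htmem).add (hmonoI _ (hw i).abs 0 t h0mem htmem))
        intro τ _
        have : xt' τ i - (f τ (x τ) (u τ) i + v τ i)
            = (xt' τ i - f τ (xt τ) (u τ) i)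
              + (f τ (xt τ) (u τ) i - (f τ (x τ) (u τ) i + v τ i)) := by ring
        rw [this]
        exact abs_add_le _ _
      linarith
    have hsum1 : δf t ≤ (∑ i, M i * |xt 0 i - x 0 i|)
        + (∑ i, M i * ∫ τ in (0:ℝ)..t, |xt' τ i - f τ (xt τ) (u τ) i|)
        + ∑ i, M i * ∫ τ in (0:ℝ)..t, |f τ (xt τ) (u τ) i - (f τ (x τ) (u τ) i + v τ i)| := by
      rw [← Finset.sum_add_distrib, ← Finset.sum_add_distrib]
      refine Finset.sum_le_sum fun i _ => ?_
      have := mul_le_mul_of_nonneg_left (hterm i) (hM i).le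
      linarith [this]
    -- second summand
    have hsum2 : (∑ i, M i * ∫ τ in (0:ℝ)..t, |xt' τ i - f τ (xt τ) (u τ) i|)
        ≤ (N':ℝ) * ∑ i, M i * ξhat i := by
      have h6 : ∀ i, (∫ τ in (0:ℝ)..t, |xt' τ i - f τ (xt τ) (u τ) i|)
          ≤ (N':ℝ) * ξhat i := by
        intro i
        refine le_trans ?_ (hA i)
        apply intervalIntegral.integral_mono_interval le_rfl ht0 hts₀
          (Filter.Eventually.of_forall fun τ => abs_nonneg _)
        exact hmonoI _ (hq i).abs 0 s₀ h0mem hs₀mem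
      calc (∑ i, M i * ∫ τ in (0:ℝ)..t, |xt' τ i - f τ (xt τ) (u τ) i|)
          ≤ ∑ i, M i * ((N':ℝ) * ξhat i) :=
            Finset.sum_le_sum fun i _ => mul_le_mul_of_nonneg_left (h6 i) (hM i).le
        _ = (N':ℝ) * ∑ i, M i * ξhat i := by
            rw [Finset.mul_sum]
            exact Finset.sum_congr rfl fun i _ => by ring
    -- third summand
    have hsum3 : (∑ i, M i * ∫ τ in (0:ℝ)..t,
          |f τ (xt τ) (u τ) i - (f τ (x τ) (u τ) i + v τ i)|)
        ≤ Lx * g t + vhat * s₀ := by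
      have hswap : (∑ i, M i * ∫ τ in (0:ℝ)..t,
            |f τ (xt τ) (u τ) i - (f τ (x τ) (u τ) i + v τ i)|)
          = ∫ τ in (0:ℝ)..t, ∑ i, M i *
            |f τ (xt τ) (u τ) i - (f τ (x τ) (u τ) i + v τ i)| := by
        rw [intervalIntegral.integral_finset_sum]
        · exact Finset.sum_congr rfl fun i _ =>
            (intervalIntegral.integral_const_mul (M i) _).symm
        · intro i _
          exact (hmonoI _ (hw i).abs 0 t h0mem htmem).const_mul (M i)
      rw [hswap]
      have hptwise : ∀ τ, (∑ i, M i *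
          |f τ (xt τ) (u τ) i - (f τ (x τ) (u τ) i + v τ i)|)
          ≤ Lx * δf τ + vhat := by
        intro τ
        have h7 : ∀ i, |f τ (xt τ) (u τ) i - (f τ (x τ) (u τ) i + v τ i)|
            ≤ |f τ (xt τ) (u τ) i - f τ (x τ) (u τ) i| + |v τ i| := by
          intro i
          have : f τ (xt τ) (u τ) i - (f τ (x τ) (u τ) i + v τ i)
              = (f τ (xt τ) (u τ) i - f τ (x τ) (u τ) i) - v τ i := by ring
          rw [this]
          exact abs_sub _ _
        calc (∑ i, M i * |f τ (xt τ) (u τ) i - (f τ (x τ) (u τ) i + v τ i)|)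
            ≤ ∑ i, (M i * |f τ (xt τ) (u τ) i - f τ (x τ) (u τ) i| + M i * |v τ i|) :=
              Finset.sum_le_sum fun i _ => by
                have := mul_le_mul_of_nonneg_left (h7 i) (hM i).le
                linarith [this]
          _ = (∑ i, M i * |f τ (xt τ) (u τ) i - f τ (x τ) (u τ) i|)
              + ∑ i, M i * |v τ i| := Finset.sum_add_distrib
          _ ≤ Lx * δf τ + vhat := add_le_add (hLip τ (xt τ) (x τ) (u τ)) (hv τ)
      have h8 : (∫ τ in (0:ℝ)..t, ∑ i, M i *
            |f τ (xt τ) (u τ) i - (f τ (x τ) (u τ) i + v τ i)|)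
          ≤ ∫ τ in (0:ℝ)..t, (Lx * δf τ + vhat) := by
        have hWint : IntervalIntegrable (fun τ => ∑ i, M i *
            |f τ (xt τ) (u τ) i - (f τ (x τ) (u τ) i + v τ i)|) volume 0 t := by
          have h11 := IntervalIntegrable.sum (μ := volume) (a := (0:ℝ)) (b := t) Finset.univ
            (f := fun i τ => M i * |f τ (xt τ) (u τ) i - (f τ (x τ) (u τ) i + v τ i)|)
            (fun i _ => (hmonoI _ (hw i).abs 0 t h0mem htmem).const_mul (M i))
          have h12 : (∑ i : Fin n, fun τ => M i *
              |f τ (xt τ) (u τ) i - (f τ (x τ) (u τ) i + v τ i)|)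
              = fun τ => ∑ i, M i * |f τ (xt τ) (u τ) i - (f τ (x τ) (u τ) i + v τ i)| := by
            funext τ
            simp
          rwa [h12] at h11
        exact intervalIntegral.integral_mono_on ht0 hWint
          (((hδint 0 t h0mem htmem).const_mul Lx).add intervalIntegrable_const)
          (fun τ _ => hptwise τ)
      have h9 : (∫ τ in (0:ℝ)..t, (Lx * δf τ + vhat)) = Lx * g t + vhat * t := by
        rw [intervalIntegral.integral_add ((hδint 0 t h0mem htmem).const_mul Lx)
          intervalIntegrable_const, intervalIntegral.integral_const_mul,
          intervalIntegral.integral_const]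
        simp [hgdef, smul_eq_mul, mul_comm]
      have h10 : vhat * t ≤ vhat * s₀ := mul_le_mul_of_nonneg_left hts₀ hvhat
      linarith
    linarith [hsum1, hsum2, hsum3, hθ, hCdef]
  -- Step C : Grönwall
  have hgc : ContinuousOn g (Icc (0:ℝ) s₀) := by
    have := continuousOn_primitive_interval' (hδint 0 s₀ h0mem hs₀mem) left_mem_uIcc
    rwa [uIcc_of_le hs₀0] at this
  have hgd : ∀ t ∈ Ico (0:ℝ) s₀, HasDerivWithinAt g (δf t) (Ici t) t := by
    intro t ht
    obtain ⟨ht0, hts₀⟩ := ht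
    have httf : t < tf := lt_of_lt_of_le hts₀ hs₀tf
    have htmem : t ∈ Icc (0:ℝ) tf := ⟨ht0, le_of_lt httf⟩
    have hIcc : Icc (0:ℝ) tf ∈ nhdsWithin t (Ioi t) := by
      rw [mem_nhdsWithin]
      exact ⟨Iio tf, isOpen_Iio, httf, fun y hy => ⟨le_trans ht0 (le_of_lt hy.2), le_of_lt hy.1⟩⟩
    have hmeas : StronglyMeasurableAtFilter δf (nhdsWithin t (Ioi t)) volume :=
      ⟨Icc 0 tf, hIcc, (hδc.aestronglyMeasurable measurableSet_Icc)⟩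
    have hcont : ContinuousWithinAt δf (Ioi t) t :=
      (hδc t htmem).mono_of_mem_nhdsWithin hIcc
    exact intervalIntegral.integral_hasDerivWithinAt_right
      (hδint 0 t h0mem htmem) hmeas hcont
  have hgron := norm_le_gronwallBound_of_norm_deriv_right_le (E := ℝ) (δ := 0) (K := Lx) (ε := C) hgc hgd
    (by simp [hgdef, intervalIntegral.integral_same]) (fun t ht => by
      have h1 := hkey t (Ico_subset_Icc_self ht)
      have h2 : 0 ≤ g t := intervalIntegral.integral_nonneg ht.1 (fun τ _ => hδnn τ)
      rw [Real.norm_eq_abs, Real.norm_eq_abs, abs_of_nonneg (hδnn t), abs_of_nonneg h2]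
      linarith) s₀ ⟨hs₀0, le_rfl⟩
  rw [Real.norm_eq_abs, sub_zero] at hgron
  have hgs₀nn : 0 ≤ g s₀ := intervalIntegral.integral_nonneg hs₀0 (fun τ _ => hδnn τ)
  rw [abs_of_nonneg hgs₀nn] at hgron
  have hfinal : δf s₀ ≤ C * Real.exp (Lx * s₀) := by
    have h1 := hkey s₀ ⟨hs₀0, le_rfl⟩
    rcases eq_or_lt_of_le hLx with hLx0 | hLx0
    · rw [← hLx0] at h1 hgron ⊢
      rw [gronwallBound_K0] at hgron
      simp only [zero_mul, Real.exp_zero, mul_one, zero_add, add_zero] at h1 hgron ⊢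
      linarith
    · rw [gronwallBound_of_K_ne_0 (ne_of_gt hLx0)] at hgron
      simp only [zero_mul, zero_add] at hgron
      have h2 : Lx * g s₀ ≤ Lx * (C / Lx * (Real.exp (Lx * s₀) - 1)) :=
        mul_le_mul_of_nonneg_left hgron (le_of_lt hLx0)
      have h3 : Lx * (C / Lx * (Real.exp (Lx * s₀) - 1))
          = C * Real.exp (Lx * s₀) - C := by
        field_simp
      calc δf s₀ ≤ C + Lx * g s₀ := h1
        _ ≤ C + (C * Real.exp (Lx * s₀) - C) := add_le_add_right (h3 ▸ h2) C
        _ = C * Real.exp (Lx * s₀) := by ring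
  have hfirst : δf s₀ ≤ r := by
    rw [hr, hfilter]
    refine le_min ?_ (hδ s₀ ⟨hs₀0, le_rfl⟩)
    simpa [Finset.card_range, hCdef] using hfinal
  refine ⟨hfirst, ?_⟩
  intro X _ _ hX
  have hb : (∑ i, M i * |(x s₀ - xt s₀) i|) ≤ r := by
    have : ∀ i, |(x s₀ - xt s₀) i| = |xt s₀ i - x s₀ i| := by
      intro i; rw [Pi.sub_apply, abs_sub_comm]
    calc (∑ i, M i * |(x s₀ - xt s₀) i|) = ∑ i, M i * |xt s₀ i - x s₀ i| :=
          Finset.sum_congr rfl fun i _ => by rw [this i]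
      _ ≤ r := hfirst
  have := hX (x s₀ - xt s₀) hb
  simpa using this
end

section
/- Let ‖·‖ be any norm on ℝⁿ, let X ⊆ ℝⁿ be closed with nonempty complement, let r > 0, and let B̄_r := {z ∈ ℝⁿ : ‖z‖ ≤ r}. If a point x ∈ ℝⁿ satisfies infDist(x, Xᶜ) ≥ r, then infDist(x, (X ⊖ B̄_r)ᶜ) = infDist(x, Xᶜ) − r: eroding the set by a ball of radius r reduces the distance from an interior point to the complement by exactly r. -/
open Set Metric

/-- **Erosion by a norm ball shifts the distance to the complement by exactly the radius.**
In a real normed vector space (e.g. `ℝⁿ` equipped with an arbitrary norm), let `X` be closed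
with nonempty complement and `r > 0`, and let `X ⊖ B̄_r = {a | ∀ b, ‖b‖ ≤ r → a + b ∈ X}` be
the Pontryagin difference of `X` and the closed ball of radius `r`.  If a point `x` satisfies
`infDist x Xᶜ ≥ r`, then `infDist x (X ⊖ B̄_r)ᶜ = infDist x Xᶜ - r`. -/
theorem infDist_compl_pontryagin_diff_closedBall
    {E : Type*} [NormedAddCommGroup E] [NormedSpace ℝ E]
    (X : Set E) (hX : IsClosed X) (hXc : Xᶜ.Nonempty)
    (r : ℝ) (hr : 0 < r)
    (x : E) (hx : r ≤ infDist x Xᶜ) :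
    infDist x ({a : E | ∀ b : E, ‖b‖ ≤ r → a + b ∈ X}ᶜ) = infDist x Xᶜ - r := by
  set Y : Set E := {a : E | ∀ b : E, ‖b‖ ≤ r → a + b ∈ X} with hYdef
  obtain ⟨w, hw⟩ := hXc
  have hYc : Yᶜ.Nonempty := by
    refine ⟨w, fun h => hw ?_⟩
    simpa using h 0 (by simp [hr.le])
  have hXcne : Xᶜ.Nonempty := ⟨w, hw⟩
  apply le_antisymm
  · -- upper bound
    refine le_of_forall_pos_le_add fun ε hε => ?_
    obtain ⟨z, hz, hzd⟩ := (infDist_lt_iff hXcne).mp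
      (show infDist x Xᶜ < infDist x Xᶜ + ε by linarith)
    have hD : r ≤ dist x z := le_trans hx (infDist_le_dist_of_mem hz)
    have hD0 : (0:ℝ) < dist x z := lt_of_lt_of_le hr hD
    set a : E := z + (r / dist x z) • (x - z) with ha
    have hnorm : ‖(r / dist x z) • (x - z)‖ = r := by
      rw [norm_smul, Real.norm_eq_abs, abs_of_nonneg (by positivity), ← dist_eq_norm x z]
      field_simp
    have hza : z - a = -((r / dist x z) • (x - z)) := by rw [ha]; abel
    have haY : a ∈ Yᶜ := by
      intro h
      exact hz (by simpa using h (z - a) (by rw [hza, norm_neg, hnorm]))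
    have hxa : dist x a = dist x z - r := by
      have hxma : x - a = (1 - r / dist x z) • (x - z) := by
        rw [ha, sub_smul, one_smul]; abel
      rw [dist_eq_norm, hxma, norm_smul, Real.norm_eq_abs,
        abs_of_nonneg (by rw [sub_nonneg]; exact div_le_one_of_le₀ hD hD0.le),
        ← dist_eq_norm x z]
      field_simp
    calc infDist x Yᶜ ≤ dist x a := infDist_le_dist_of_mem haY
      _ = dist x z - r := hxa
      _ ≤ infDist x Xᶜ - r + ε := by linarith
  · -- lower bound
    rw [← not_lt]
    intro hlt
    obtain ⟨a, haY, hda⟩ := (infDist_lt_iff hYc).mp hlt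
    obtain ⟨b, hbr, hab⟩ := by
      simpa [hYdef, not_forall] using haY
    have h1 : infDist x Xᶜ ≤ infDist a Xᶜ + dist x a := infDist_le_infDist_add_dist
    have h2 : infDist a Xᶜ ≤ ‖b‖ := by
      have := infDist_le_dist_of_mem (x := a) (show a + b ∈ Xᶜ from hab)
      simpa [dist_eq_norm] using this
    linarith
end

section
/- Assume ‖f(t, z, u)‖_M ≤ L_f for all t, z, u, that η_{k,i} ≤ ξ̂_i for all segments k and states i, and that the event-triggering guarantee ‖δ(τ)‖_M ≤ Δ holds for all τ ∈ [0, t_f]. Let Ξ := Σᵢ Mᵢξ̂ᵢ, N_s := card K_s, and r(s) := min{(N_s·Ξ + θ̂ + v̂s)·e^{L_x s}, Δ} (a nondecreasing function of s), and assume r(s) > 0 for all s ∈ [0, t_f]. Let X ⊆ ℝⁿ be closed and convex with nonempty complement such that X ⊖ B̄_Δ is nonempty, where B̄_ρ := {z : ‖z‖_M ≤ ρ}; set the tightened sets X_s := X ⊖ B̄_{r(s)}, the signed distance d_A(y) := infDist(y, A) − infDist(y, Aᶜ) with respect to ‖·‖_M, and g(s, s′) := r(s′) − r(s) for s ≤ s′.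 Suppose for each segment k ∈ {1, …, K} that α_k ≥ Ξ + L_f·(s_k − s_{k−1}) + g(s_{k−1}, s_k) and that the predicted trajectory satisfies the tightened discrete-time constraints d_{X_{s_{k−1}}}(x̃(s_{k−1})) ≤ −α_k. Then d_{X_s}(x̃(s)) ≤ 0 (equivalently x̃(s) ∈ X_s) for all s ∈ [0, t_f], and the actual state satisfies x(s) ∈ X for all s ∈ [0, t_f]. -/
open Set MeasureTheory intervalIntegral
open scoped Classical

/-- The weighted norm `‖z‖_M = ∑ i, M i * |z i|` associated with the positive diagonal
weighting `M`. -/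
noncomputable def wnorm {n : ℕ} (M : Fin n → ℝ) (z : Fin n → ℝ) : ℝ :=
  ∑ i, M i * |z i|

/-- The Pontryagin difference `X ⊖ B̄_ρ` of a set `X ⊆ ℝⁿ` and the closed `‖·‖_M`-ball of
radius `ρ`: `{a | ∀ b, ‖b‖_M ≤ ρ → a + b ∈ X}`. -/
def pontryaginDiffBall {n : ℕ} (M : Fin n → ℝ) (X : Set (Fin n → ℝ)) (ρ : ℝ) :
    Set (Fin n → ℝ) :=
  {a | ∀ b : Fin n → ℝ, wnorm M b ≤ ρ → a + b ∈ X}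

/-- The distance (in the weighted norm `‖·‖_M`) from a point `y` to a set `S`:
`infDist(y, S) = inf_{z ∈ S} ‖y - z‖_M` (with the convention `inf ∅ = 0` via `sInf`). -/
noncomputable def winfDist {n : ℕ} (M : Fin n → ℝ) (y : Fin n → ℝ)
    (S : Set (Fin n → ℝ)) : ℝ :=
  sInf ((fun z => wnorm M (y - z)) '' S)

/-- The signed distance `d_A(y) = infDist(y, A) - infDist(y, Aᶜ)` w.r.t. `‖·‖_M`. -/
noncomputable def wsdist {n : ℕ} (M : Fin n → ℝ) (y : Fin n → ℝ)
    (A : Set (Fin n → ℝ)) : ℝ :=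
  winfDist M y A - winfDist M y Aᶜ

section Helpers

variable {n : ℕ} {M : Fin n → ℝ}

lemma wnorm_nonneg (hM : ∀ i, 0 < M i) (z : Fin n → ℝ) : 0 ≤ wnorm M z :=
  Finset.sum_nonneg fun i _ => mul_nonneg (hM i).le (abs_nonneg _)

lemma wnorm_zero : wnorm M (0 : Fin n → ℝ) = 0 := by simp [wnorm]

lemma wnorm_neg (z : Fin n → ℝ) : wnorm M (-z) = wnorm M z := by simp [wnorm]

lemma wnorm_add_le (hM : ∀ i, 0 < M i) (a b : Fin n → ℝ) :
    wnorm M (a + b) ≤ wnorm M a + wnorm M b := by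
  rw [wnorm, wnorm, wnorm, ← Finset.sum_add_distrib]
  refine Finset.sum_le_sum fun i _ => ?_
  rw [← mul_add]
  exact mul_le_mul_of_nonneg_left (by simpa using abs_add_le (a i) (b i)) (hM i).le

lemma wnorm_smul (c : ℝ) (z : Fin n → ℝ) : wnorm M (c • z) = |c| * wnorm M z := by
  simp only [wnorm, Finset.mul_sum, Pi.smul_apply, smul_eq_mul, abs_mul]
  exact Finset.sum_congr rfl fun i _ => by ring

lemma wnorm_le_zero (hM : ∀ i, 0 < M i) {z : Fin n → ℝ} (h : wnorm M z ≤ 0) : z = 0 := by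
  have h0 : wnorm M z = 0 := le_antisymm h (wnorm_nonneg hM z)
  funext i
  have := (Finset.sum_eq_zero_iff_of_nonneg
    (fun i _ => mul_nonneg (hM i).le (abs_nonneg _))).1 h0 i (Finset.mem_univ i)
  have hz : |z i| = 0 := by
    rcases mul_eq_zero.1 this with h' | h'
    · exact absurd h' (hM i).ne'
    · exact h'
  simpa [abs_eq_zero] using hz

lemma winfDist_nonneg (hM : ∀ i, 0 < M i) (y : Fin n → ℝ) (S : Set (Fin n → ℝ)) :
    0 ≤ winfDist M y S :=
  Real.sInf_nonneg (by rintro _ ⟨z, _, rfl⟩; exact wnorm_nonneg hM _)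

lemma winfDist_le (hM : ∀ i, 0 < M i) {z : Fin n → ℝ} {S : Set (Fin n → ℝ)}
    (y : Fin n → ℝ) (hz : z ∈ S) : winfDist M y S ≤ wnorm M (y - z) :=
  csInf_le ⟨0, by rintro _ ⟨w, _, rfl⟩; exact wnorm_nonneg hM _⟩ ⟨z, hz, rfl⟩

lemma mem_of_winfDist_nonpos (hM : ∀ i, 0 < M i) {S : Set (Fin n → ℝ)}
    (hS : IsClosed S) (hne : S.Nonempty) {y : Fin n → ℝ}
    (h : winfDist M y S ≤ 0) : y ∈ S := by
  have himg : ((fun z => wnorm M (y - z)) '' S).Nonempty := hne.image _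
  have hz : ∀ j : ℕ, ∃ z ∈ S, wnorm M (y - z) < 1 / (j + 1) := by
    intro j
    have hpos : (0 : ℝ) < 1 / (j + 1) := by positivity
    have : sInf ((fun z => wnorm M (y - z)) '' S) < 1 / (j + 1) :=
      lt_of_le_of_lt h hpos
    obtain ⟨_, ⟨z, hzS, rfl⟩, hlt⟩ := exists_lt_of_csInf_lt himg this
    exact ⟨z, hzS, hlt⟩
  choose z hzS hzlt using hz
  have hzt : Filter.Tendsto z Filter.atTop (nhds y) := by
    rw [tendsto_pi_nhds]
    intro i
    have key : ∀ j : ℕ, |z j i - y i| ≤ (M i)⁻¹ * (1 / (j + 1)) := by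
      intro j
      have h1 : M i * |y i - z j i| ≤ wnorm M (y - z j) := by
        have := Finset.single_le_sum (f := fun i => M i * |(y - z j) i|)
          (fun i _ => mul_nonneg (hM i).le (abs_nonneg _)) (Finset.mem_univ i)
        simpa [wnorm] using this
      have h2 : M i * |y i - z j i| ≤ 1 / (j + 1) := h1.trans (hzlt j).le
      rw [abs_sub_comm]
      rw [← mul_le_mul_iff_right₀ (hM i)]
      calc M i * |y i - z j i| ≤ 1 / (j + 1) := h2
        _ = M i * ((M i)⁻¹ * (1 / (j+1))) := by
            rw [← mul_assoc, mul_inv_cancel₀ (hM i).ne', one_mul]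
    have hlim : Filter.Tendsto (fun j : ℕ => (M i)⁻¹ * (1 / (j + 1) : ℝ))
        Filter.atTop (nhds 0) := by
      have := tendsto_one_div_add_atTop_nhds_zero_nat (𝕜 := ℝ)
      simpa using (this.const_mul (M i)⁻¹)
    have hz0 : Filter.Tendsto (fun j => z j i - y i) Filter.atTop (nhds 0) := by
      refine squeeze_zero_norm ?_ hlim
      intro j; simpa [Real.norm_eq_abs] using key j
    have := hz0.add_const (y i)
    simpa using this
  exact hS.mem_of_tendsto hzt (Filter.Eventually.of_forall hzS)

lemma mem_closed_of_wsdist (hM : ∀ i, 0 < M i) {A : Set (Fin n → ℝ)}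
    (hA : IsClosed A) (hne : A.Nonempty) {y w : Fin n → ℝ} {β : ℝ}
    (hd : wsdist M y A ≤ -β) (hw : wnorm M w ≤ β) : y + w ∈ A := by
  have hβ0 : 0 ≤ β := (wnorm_nonneg hM w).trans hw
  have hc : β ≤ winfDist M y Aᶜ := by
    have h1 := winfDist_nonneg hM y A
    have h2 : winfDist M y A - winfDist M y Aᶜ ≤ -β := hd
    linarith
  by_cases hw0 : wnorm M w ≤ 0
  · have hwz : w = 0 := wnorm_le_zero hM hw0
    subst hwz
    rw [add_zero]
    by_contra hy
    have hyc : y ∈ Aᶜ := hy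
    have h0 : winfDist M y Aᶜ ≤ 0 := by
      have := winfDist_le hM y hyc
      simpa [wnorm_zero] using this
    have hA0 : winfDist M y A ≤ 0 := by
      have h2 : winfDist M y A - winfDist M y Aᶜ ≤ -β := hd
      linarith
    exact hy (mem_of_winfDist_nonpos hM hA hne hA0)
  · push_neg at hw0
    have key : ∀ θ ∈ Ico (0 : ℝ) 1, y + θ • w ∈ A := by
      intro θ hθ
      by_contra hmem
      have hmem' : y + θ • w ∈ Aᶜ := hmem
      have h1 : winfDist M y Aᶜ ≤ wnorm M (y - (y + θ • w)) := winfDist_le hM y hmem'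
      have h2 : wnorm M (y - (y + θ • w)) = θ * wnorm M w := by
        have hy' : y - (y + θ • w) = -(θ • w) := by abel
        rw [hy', wnorm_neg, wnorm_smul, abs_of_nonneg hθ.1]
      have h3 : θ * wnorm M w < wnorm M w := by
        nlinarith [hθ.2, hw0]
      have : winfDist M y Aᶜ < β := by
        rw [h2] at h1
        linarith [h3.trans_le hw]
      linarith
    have htend : Filter.Tendsto (fun θ : ℝ => y + θ • w) (nhdsWithin 1 (Iio 1))
        (nhds (y + w)) := by
      have hcont : Continuous (fun θ : ℝ => y + θ • w) :=
        continuous_const.add (continuous_id.smul continuous_const)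
      have := hcont.tendsto 1
      rw [one_smul] at this
      exact this.mono_left nhdsWithin_le_nhds
    refine hA.mem_of_tendsto htend ?_
    filter_upwards [Ico_mem_nhdsLT_of_mem (by norm_num : (1:ℝ) ∈ Ioc (0:ℝ) 1)] with θ hθ
    exact key θ hθ

lemma pontryagin_closed {X : Set (Fin n → ℝ)} (hX : IsClosed X) (ρ : ℝ) :
    IsClosed (pontryaginDiffBall M X ρ) := by
  have hrw : pontryaginDiffBall M X ρ =
      ⋂ b ∈ {b : Fin n → ℝ | wnorm M b ≤ ρ}, (fun a => a + b) ⁻¹' X := by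
    ext a; simp [pontryaginDiffBall]
  rw [hrw]
  exact isClosed_biInter fun b _ => hX.preimage (continuous_id.add continuous_const)

lemma pontryagin_anti {X : Set (Fin n → ℝ)} {ρ ρ' : ℝ} (h : ρ ≤ ρ') :
    pontryaginDiffBall M X ρ' ⊆ pontryaginDiffBall M X ρ :=
  fun _ ha b hb => ha b (hb.trans h)

lemma wnorm_decomp (hM : ∀ i, 0 < M i) {b : Fin n → ℝ} {ρ g : ℝ}
    (hρ : 0 ≤ ρ) (hg : 0 ≤ g) (hb : wnorm M b ≤ ρ + g) :
    ∃ b₁ b₂ : Fin n → ℝ, b = b₁ + b₂ ∧ wnorm M b₁ ≤ ρ ∧ wnorm M b₂ ≤ g := by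
  by_cases h : wnorm M b ≤ ρ
  · exact ⟨b, 0, by simp, h, by simp [wnorm_zero, hg]⟩
  · push_neg at h
    have hpos : 0 < wnorm M b := hρ.trans_lt h
    set c : ℝ := ρ / wnorm M b with hc
    have hc0 : 0 ≤ c := div_nonneg hρ hpos.le
    have hc1 : c ≤ 1 := by
      rw [hc, div_le_one hpos]; exact h.le
    refine ⟨c • b, (1 - c) • b, ?_, ?_, ?_⟩
    · ext i; simp [Pi.smul_apply]; ring
    · rw [wnorm_smul, abs_of_nonneg hc0, hc, div_mul_cancel₀ _ hpos.ne']
    · rw [wnorm_smul, abs_of_nonneg (by linarith), sub_mul, one_mul, hc,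
        div_mul_cancel₀ _ hpos.ne']
      linarith

end Helpers

lemma gron_aux {K ε x : ℝ} (hK : 0 ≤ K) (hε : 0 ≤ ε) :
    ε + K * gronwallBound 0 K ε x ≤ ε * Real.exp (K * x) := by
  rcases eq_or_lt_of_le hK with h0 | hpos
  · rw [← h0]
    simp [gronwallBound_K0, Real.exp_zero]
  · rw [gronwallBound_of_K_ne_0 hpos.ne']
    have hne : K ≠ 0 := hpos.ne'
    have hexp := Real.exp_pos (K * x)
    have : K * ((0:ℝ) * Real.exp (K * x) + ε / K * (Real.exp (K * x) - 1))
        = ε * (Real.exp (K * x) - 1) := by field_simp; ring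
    rw [this]
    nlinarith

/-- **Discrete constraint tightening guarantees continuous-time constraint satisfaction
(Theorem 4).**  Setting: plant `x` satisfies `ẋ = f(t,x,u) + v` (integral form) on `[0, t_f]`,
`f` is Lipschitz in the state with constant `Lx ≥ 0` w.r.t. `‖·‖_M` and uniformly bounded by
`L_f` in `‖·‖_M`, `‖v t‖_M ≤ v̂`; the approximate trajectory `x̃` is continuous, piecewise C¹
on the mesh `0 = p 0 < … < p K = t_f`, starts within `θ̂` of the plant state, its absolute
local error quadratures satisfy `η_{k,i} ≤ ξ̂ i`, and the event-triggering guarantee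
`‖δ τ‖_M ≤ Δ` holds on `[0, t_f]`.  With `Ξ = ∑ i, M i * ξ̂ i`, `N_s = card K_s`,
`r s = min ((N_s Ξ + θ̂ + v̂ s) exp (Lx s)) Δ > 0`, tightened sets `X_s = X ⊖ B̄_{r s}` of a
closed convex `X` (with `X ⊖ B̄_Δ` nonempty and `Xᶜ` nonempty), `g(s, s') = r s' - r s`, and
signed distance `d_A(y) = infDist(y, A) - infDist(y, Aᶜ)` w.r.t. `‖·‖_M`:  if for each segment
`α k ≥ Ξ + L_f (p (k+1) - p k) + g (p k) (p (k+1))` and the tightened discrete-time constraints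
`d_{X_{p k}}(x̃ (p k)) ≤ -α k` hold, then `d_{X_s}(x̃ s) ≤ 0` (equivalently `x̃ s ∈ X_s`) for
all `s ∈ [0, t_f]`, and the actual state satisfies `x s ∈ X` for all `s ∈ [0, t_f]`. -/
theorem discrete_tightening_implies_continuous_constraint_satisfaction
    (n m : ℕ) (hn : 0 < n)
    (tf : ℝ) (htf : 0 < tf)
    (f : ℝ → (Fin n → ℝ) → (Fin m → ℝ) → Fin n → ℝ)
    (u : ℝ → Fin m → ℝ) (v : ℝ → Fin n → ℝ)
    (M : Fin n → ℝ) (hM : ∀ i, 0 < M i)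
    (Lx Lf vhat θhat : ℝ) (hLx : 0 ≤ Lx)
    (hLip : ∀ t z₁ z₂ uu,
      ∑ i, M i * |f t z₁ uu i - f t z₂ uu i| ≤ Lx * ∑ i, M i * |z₁ i - z₂ i|)
    (hfb : ∀ t z uu, ∑ i, M i * |f t z uu i| ≤ Lf)
    (hv : ∀ t, ∑ i, M i * |v t i| ≤ vhat)
    -- mesh with resolution h and quasi-uniformity σ
    (σ h : ℝ) (hσ0 : 0 < σ) (hσ1 : σ ≤ 1) (hh : 0 < h)
    (K : ℕ) (hK : 0 < K)
    (p : ℕ → ℝ) (hp0 : p 0 = 0) (hpK : p K = tf)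
    (hseg : ∀ k < K, σ * h ≤ p (k + 1) - p k ∧ p (k + 1) - p k ≤ h)
    -- plant trajectory: absolutely continuous Carathéodory solution of the ODE
    (x : ℝ → Fin n → ℝ)
    (hxint : ∀ i, IntervalIntegrable (fun τ => f τ (x τ) (u τ) i + v τ i) volume 0 tf)
    (hx : ∀ t ∈ Icc (0 : ℝ) tf, ∀ i,
      x t i = x 0 i + ∫ τ in (0 : ℝ)..t, (f τ (x τ) (u τ) i + v τ i))
    -- approximate (predicted) trajectory: continuous, piecewise C¹ on the mesh
    (xt xt' : ℝ → Fin n → ℝ)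
    (hxtc : ∀ i, ContinuousOn (fun t => xt t i) (Icc (0 : ℝ) tf))
    (hxtd : ∀ k < K, ∀ t ∈ Ioo (p k) (p (k + 1)), ∀ i,
      HasDerivAt (fun τ => xt τ i) (xt' t i) t)
    (hxt'int : ∀ i, IntervalIntegrable (fun τ => xt' τ i) volume 0 tf)
    (hfxtint : ∀ i, IntervalIntegrable (fun τ => f τ (xt τ) (u τ) i) volume 0 tf)
    (hxtFTC : ∀ t ∈ Icc (0 : ℝ) tf, ∀ i, xt t i = xt 0 i + ∫ τ in (0 : ℝ)..t, xt' τ i)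
    -- initialization at the noisy measurement
    (hθ : ∑ i, M i * |xt 0 i - x 0 i| ≤ θhat)
    -- accuracy certificates: absolute local error quadrature bounds
    (ξhat : Fin n → ℝ)
    (hη : ∀ k < K, ∀ i,
      (∫ τ in p k..p (k + 1), |xt' τ i - f τ (xt τ) (u τ) i|) ≤ ξhat i)
    -- event-triggering guarantee over the whole horizon
    (Δ : ℝ) (hδ : ∀ τ ∈ Icc (0 : ℝ) tf, ∑ i, M i * |xt τ i - x τ i| ≤ Δ)
    -- the tightening radius
    (Ξ : ℝ) (hΞ : Ξ = ∑ i, M i * ξhat i)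
    (r : ℝ → ℝ)
    (hr : ∀ t : ℝ, r t = min
      (((((Finset.range K).filter (fun k => p k < t)).card : ℝ) * Ξ
          + θhat + vhat * t) * Real.exp (Lx * t)) Δ)
    (hrpos : ∀ t ∈ Icc (0 : ℝ) tf, 0 < r t)
    -- the constraint set
    (X : Set (Fin n → ℝ)) (hXcl : IsClosed X) (hXconv : Convex ℝ X) (hXc : Xᶜ.Nonempty)
    (hXΔ : (pontryaginDiffBall M X Δ).Nonempty)
    -- the discrete-time tightened constraints at the mesh points
    (α : ℕ → ℝ)
    (hα : ∀ k < K, Ξ + Lf * (p (k + 1) - p k) + (r (p (k + 1)) - r (p k)) ≤ α k)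
    (hdisc : ∀ k < K,
      wsdist M (xt (p k)) (pontryaginDiffBall M X (r (p k))) ≤ -(α k)) :
    (∀ t ∈ Icc (0 : ℝ) tf,
      wsdist M (xt t) (pontryaginDiffBall M X (r t)) ≤ 0 ∧
        xt t ∈ pontryaginDiffBall M X (r t)) ∧
    (∀ t ∈ Icc (0 : ℝ) tf, x t ∈ X) := by
  classical
  -- mesh basics
  have hstep : ∀ k < K, p k < p (k + 1) := by
    intro k hk
    have h1 := (hseg k hk).1
    nlinarith [mul_pos hσ0 hh]
  have hmono : ∀ j k : ℕ, j ≤ k → k ≤ K → p j ≤ p k := by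
    intro j k hjk hkK
    induction k with
    | zero => simp_all
    | succ k ih =>
      rcases Nat.lt_or_ge j (k+1) with hlt | hge
      · have hjk' : j ≤ k := by omega
        exact (ih hjk' (by omega)).trans (hstep k (by omega)).le
      · have : j = k + 1 := by omega
        simp [this]
  have hpnn : ∀ k, k ≤ K → 0 ≤ p k := fun k hk => by
    have := hmono 0 k (Nat.zero_le k) hk; rw [hp0] at this; exact this
  have hple : ∀ k, k ≤ K → p k ≤ tf := fun k hk => by
    have := hmono k K hk le_rfl; rw [hpK] at this; exact this
  have hpmem : ∀ k, k ≤ K → p k ∈ Icc (0:ℝ) tf := fun k hk => ⟨hpnn k hk, hple k hk⟩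
  -- nonnegativity of constants
  have hsum_nonneg : ∀ (z : Fin n → ℝ), 0 ≤ ∑ i, M i * |z i| :=
    fun z => Finset.sum_nonneg fun i _ => mul_nonneg (hM i).le (abs_nonneg _)
  have hvhat : 0 ≤ vhat := le_trans (hsum_nonneg (v 0)) (hv 0)
  have hθhat : 0 ≤ θhat := le_trans (hsum_nonneg _) hθ
  have hLf : 0 ≤ Lf := le_trans (hsum_nonneg _) (hfb 0 (x 0) (u 0))
  have hξ : ∀ i, 0 ≤ ξhat i := by
    intro i
    refine le_trans ?_ (hη 0 hK i)
    exact intervalIntegral.integral_nonneg (hstep 0 hK).le (fun τ _ => abs_nonneg _)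
  have hΞ0 : 0 ≤ Ξ := by
    rw [hΞ]; exact Finset.sum_nonneg fun i _ => mul_nonneg (hM i).le (hξ i)
  -- counting function and monotone radius
  have hNmono : ∀ s t : ℝ, s ≤ t →
      (((Finset.range K).filter (fun k => p k < s)).card : ℝ) ≤
      (((Finset.range K).filter (fun k => p k < t)).card : ℝ) := by
    intro s t hst
    exact_mod_cast Finset.card_le_card
      (Finset.monotone_filter_right _ (fun k _ hk => lt_of_lt_of_le hk hst))
  have hrmono : ∀ s t : ℝ, 0 ≤ s → s ≤ t → r s ≤ r t := by
    intro s t hs hst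
    rw [hr s, hr t]
    refine min_le_min ?_ le_rfl
    have hN := hNmono s t hst
    have h1 : (((Finset.range K).filter (fun k => p k < s)).card : ℝ) * Ξ + θhat + vhat * s ≤
        (((Finset.range K).filter (fun k => p k < t)).card : ℝ) * Ξ + θhat + vhat * t := by
      have := mul_le_mul_of_nonneg_right hN hΞ0
      nlinarith
    have h2 : Real.exp (Lx * s) ≤ Real.exp (Lx * t) :=
      Real.exp_le_exp.2 (mul_le_mul_of_nonneg_left hst hLx)
    have h3 : 0 ≤ (((Finset.range K).filter (fun k => p k < s)).card : ℝ) * Ξ + θhat + vhat * s := by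
      have : (0:ℝ) ≤ (((Finset.range K).filter (fun k => p k < s)).card : ℝ) * Ξ :=
        mul_nonneg (Nat.cast_nonneg _) hΞ0
      nlinarith
    exact mul_le_mul h1 h2 (Real.exp_pos _).le (h3.trans h1)
  -- bracketing
  have hexist_k : ∀ t, 0 < t → t ≤ tf → ∃ k < K, p k < t ∧ t ≤ p (k + 1) ∧
      ((Finset.range K).filter (fun j => p j < t)).card = k + 1 := by
    intro t ht htf'
    set S : Finset ℕ := (Finset.range K).filter (fun j => p j < t) with hS
    have h0S : 0 ∈ S := by
      simp only [hS, Finset.mem_filter, Finset.mem_range]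
      exact ⟨hK, by rw [hp0]; exact ht⟩
    have hSne : S.Nonempty := ⟨0, h0S⟩
    set k := S.max' hSne with hk
    have hkS : k ∈ S := S.max'_mem hSne
    have hkK : k < K := (Finset.mem_filter.1 hkS).1 |> Finset.mem_range.1
    have hpk : p k < t := by
      have := (Finset.mem_filter.1 hkS).2; simpa using this
    have hub : t ≤ p (k + 1) := by
      by_contra hlt
      push_neg at hlt
      rcases Nat.lt_or_ge (k+1) K with h1 | h1
      · have : k + 1 ∈ S := by
          simp only [hS, Finset.mem_filter, Finset.mem_range]
          exact ⟨h1, hlt⟩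
        have := S.le_max' _ this
        omega
      · have hkk : k + 1 = K := by omega
        rw [hkk, hpK] at hlt
        linarith
    have hcard : S.card = k + 1 := by
      have : S = Finset.range (k + 1) := by
        ext j
        simp only [hS, Finset.mem_filter, Finset.mem_range]
        constructor
        · rintro ⟨hj, hpj⟩
          have := S.le_max' j (by simp [hS, Finset.mem_filter, Finset.mem_range]; exact ⟨hj, hpj⟩)
          omega
        · intro hj
          have hjk : j ≤ k := by omega
          refine ⟨by omega, lt_of_le_of_lt ?_ hpk⟩
          exact hmono j k hjk hkK.le
      rw [this, Finset.card_range]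
    exact ⟨k, hkK, hpk, hub, hcard⟩
  have hbracket : ∀ t ∈ Icc (0:ℝ) tf, ∃ k < K, p k ≤ t ∧ t ≤ p (k + 1) := by
    intro t ht
    rcases eq_or_lt_of_le ht.1 with h0 | h0
    · exact ⟨0, hK, by rw [hp0, ← h0], by rw [← h0, ← hp0]; exact (hstep 0 hK).le⟩
    · obtain ⟨k, hkK, h1, h2, _⟩ := hexist_k t h0 ht.2
      exact ⟨k, hkK, h1.le, h2⟩
  -- integrability of local error and helper integrands
  have huIcc : ∀ a b : ℝ, a ∈ Icc (0:ℝ) tf → b ∈ Icc (0:ℝ) tf → uIcc a b ⊆ uIcc (0:ℝ) tf := by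
    intro a b ha hb
    rw [uIcc_of_le htf.le]
    exact uIcc_subset_Icc ha hb
  have heint : ∀ i, ∀ a ∈ Icc (0:ℝ) tf, ∀ b ∈ Icc (0:ℝ) tf,
      IntervalIntegrable (fun τ => |xt' τ i - f τ (xt τ) (u τ) i|) volume a b := by
    intro i a ha b hb
    have := ((hxt'int i).sub (hfxtint i)).abs
    exact this.mono_set (by rw [uIcc_of_le htf.le] at *; exact huIcc a b ha hb)
  have hgint : ∀ i, ∀ a ∈ Icc (0:ℝ) tf, ∀ b ∈ Icc (0:ℝ) tf,
      IntervalIntegrable (fun τ => f τ (xt τ) (u τ) i - (f τ (x τ) (u τ) i + v τ i))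
        volume a b := by
    intro i a ha b hb
    exact ((hfxtint i).sub (hxint i)).mono_set (huIcc a b ha hb)
  -- continuity of x
  have hxc : ∀ i, ContinuousOn (fun t => x t i) (Icc (0:ℝ) tf) := by
    intro i
    have hprim : ContinuousOn (fun t => x 0 i + ∫ τ in (0:ℝ)..t, (f τ (x τ) (u τ) i + v τ i))
        (Icc (0:ℝ) tf) := by
      have := intervalIntegral.continuousOn_primitive_interval' (hxint i)
        (left_mem_uIcc (a := (0:ℝ)) (b := tf))
      rw [uIcc_of_le htf.le] at this
      exact continuousOn_const.add this
    exact hprim.congr (fun t ht => hx t ht i)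
  -- the prediction error in the weighted norm
  set φ : ℝ → ℝ := fun t => ∑ i, M i * |xt t i - x t i| with hφ
  have hφc : ContinuousOn φ (Icc (0:ℝ) tf) := by
    apply continuousOn_finset_sum
    intro i _
    exact continuousOn_const.mul (((hxtc i).sub (hxc i)).abs)
  have hφint : ∀ a ∈ Icc (0:ℝ) tf, ∀ b ∈ Icc (0:ℝ) tf, IntervalIntegrable φ volume a b := by
    intro a ha b hb
    have hsub := huIcc a b ha hb
    rw [uIcc_of_le htf.le] at hsub
    exact (hφc.mono hsub).intervalIntegrable
  set F : ℝ → ℝ := fun t => ∫ τ in (0:ℝ)..t, φ τ with hF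
  have hFc : ContinuousOn F (Icc (0:ℝ) tf) := by
    have := intervalIntegral.continuousOn_primitive_interval'
      (hφint 0 (left_mem_Icc.2 htf.le) tf (right_mem_Icc.2 htf.le))
      (left_mem_uIcc (a := (0:ℝ)) (b := tf))
    rw [uIcc_of_le htf.le] at this
    exact this
  have hs0tf : (0:ℝ) ∈ Icc (0:ℝ) tf := ⟨le_rfl, htf.le⟩
  -- key pointwise integral inequality
  have hkey : ∀ s ∈ Icc (0:ℝ) tf,
      φ s ≤ θhat + (∑ i, M i * ∫ τ in (0:ℝ)..s, |xt' τ i - f τ (xt τ) (u τ) i|)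
        + (vhat * s + Lx * F s) := by
    intro s hs
    have hdiff : ∀ i, xt s i - x s i = (xt 0 i - x 0 i)
        + ((∫ τ in (0:ℝ)..s, (xt' τ i - f τ (xt τ) (u τ) i))
          + (∫ τ in (0:ℝ)..s, (f τ (xt τ) (u τ) i - (f τ (x τ) (u τ) i + v τ i)))) := by
      intro i
      have h1 := hxtFTC s hs i
      have h2 := hx s hs i
      have hint1 : IntervalIntegrable (fun τ => xt' τ i) volume 0 s :=
        (hxt'int i).mono_set (huIcc 0 s hs0tf hs)
      have hint2 : IntervalIntegrable (fun τ => f τ (x τ) (u τ) i + v τ i) volume 0 s :=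
        (hxint i).mono_set (huIcc 0 s hs0tf hs)
      have hint3 : IntervalIntegrable (fun τ => f τ (xt τ) (u τ) i) volume 0 s :=
        (hfxtint i).mono_set (huIcc 0 s hs0tf hs)
      have hsplit : (∫ τ in (0:ℝ)..s, xt' τ i) - ∫ τ in (0:ℝ)..s, (f τ (x τ) (u τ) i + v τ i)
          = (∫ τ in (0:ℝ)..s, (xt' τ i - f τ (xt τ) (u τ) i))
            + (∫ τ in (0:ℝ)..s, (f τ (xt τ) (u τ) i - (f τ (x τ) (u τ) i + v τ i))) := by
        rw [← intervalIntegral.integral_add (hint1.sub hint3) (hint3.sub hint2),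
          ← intervalIntegral.integral_sub hint1 hint2]
        congr 1
        funext τ
        ring
      have hgoal : xt s i - x s i = (xt 0 i - x 0 i)
          + ((∫ τ in (0:ℝ)..s, xt' τ i) - ∫ τ in (0:ℝ)..s, (f τ (x τ) (u τ) i + v τ i)) := by
        rw [h1, h2]; ring
      rw [hgoal, hsplit]
    have habs : ∀ i, |xt s i - x s i| ≤ |xt 0 i - x 0 i|
        + ((∫ τ in (0:ℝ)..s, |xt' τ i - f τ (xt τ) (u τ) i|)
          + |∫ τ in (0:ℝ)..s, (f τ (xt τ) (u τ) i - (f τ (x τ) (u τ) i + v τ i))|) := by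
      intro i
      rw [hdiff i]
      have t1 := abs_add_le (xt 0 i - x 0 i)
        ((∫ τ in (0:ℝ)..s, (xt' τ i - f τ (xt τ) (u τ) i))
          + (∫ τ in (0:ℝ)..s, (f τ (xt τ) (u τ) i - (f τ (x τ) (u τ) i + v τ i))))
      have t2 := abs_add_le (∫ τ in (0:ℝ)..s, (xt' τ i - f τ (xt τ) (u τ) i))
        (∫ τ in (0:ℝ)..s, (f τ (xt τ) (u τ) i - (f τ (x τ) (u τ) i + v τ i)))
      have t3 := intervalIntegral.abs_integral_le_integral_abs (μ := volume) hs.1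
        (f := fun τ => xt' τ i - f τ (xt τ) (u τ) i)
      linarith
    have hGptwise : ∀ τ : ℝ,
        (∑ i, M i * |f τ (xt τ) (u τ) i - (f τ (x τ) (u τ) i + v τ i)|) ≤ Lx * φ τ + vhat := by
      intro τ
      have h2 : ∀ i ∈ Finset.univ,
          M i * |f τ (xt τ) (u τ) i - (f τ (x τ) (u τ) i + v τ i)| ≤
          M i * |f τ (xt τ) (u τ) i - f τ (x τ) (u τ) i| + M i * |v τ i| := by
        intro i _
        rw [← mul_add]
        refine mul_le_mul_of_nonneg_left ?_ (hM i).le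
        have hr1 : f τ (xt τ) (u τ) i - (f τ (x τ) (u τ) i + v τ i)
            = (f τ (xt τ) (u τ) i - f τ (x τ) (u τ) i) + (- v τ i) := by ring
        rw [hr1]
        exact (abs_add_le _ _).trans (by rw [abs_neg])
      calc (∑ i, M i * |f τ (xt τ) (u τ) i - (f τ (x τ) (u τ) i + v τ i)|)
          ≤ ∑ i, (M i * |f τ (xt τ) (u τ) i - f τ (x τ) (u τ) i| + M i * |v τ i|) :=
            Finset.sum_le_sum h2
        _ = (∑ i, M i * |f τ (xt τ) (u τ) i - f τ (x τ) (u τ) i|) + ∑ i, M i * |v τ i| :=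
            Finset.sum_add_distrib
        _ ≤ Lx * φ τ + vhat := add_le_add (hLip τ (xt τ) (x τ) (u τ)) (hv τ)
    have hφs : IntervalIntegrable φ volume 0 s := hφint 0 hs0tf s hs
    have hGint : IntervalIntegrable
        (fun τ => ∑ i, M i * |f τ (xt τ) (u τ) i - (f τ (x τ) (u τ) i + v τ i)|) volume 0 s := by
      have := IntervalIntegrable.sum Finset.univ
        (f := fun i τ => M i * |f τ (xt τ) (u τ) i - (f τ (x τ) (u τ) i + v τ i)|)
        (fun i _ => ((hgint i 0 hs0tf s hs).abs.const_mul (M i)))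
      have heq : (∑ i : Fin n, fun τ => M i * |f τ (xt τ) (u τ) i - (f τ (x τ) (u τ) i + v τ i)|)
          = fun τ => ∑ i, M i * |f τ (xt τ) (u τ) i - (f τ (x τ) (u τ) i + v τ i)| := by
        funext τ; simp [Finset.sum_apply]
      rwa [heq] at this
    have hsum_g : (∑ i, M i * |∫ τ in (0:ℝ)..s, (f τ (xt τ) (u τ) i - (f τ (x τ) (u τ) i + v τ i))|)
        ≤ Lx * F s + vhat * s := by
      calc (∑ i, M i * |∫ τ in (0:ℝ)..s, (f τ (xt τ) (u τ) i - (f τ (x τ) (u τ) i + v τ i))|)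
          ≤ ∑ i, M i * ∫ τ in (0:ℝ)..s, |f τ (xt τ) (u τ) i - (f τ (x τ) (u τ) i + v τ i)| := by
            refine Finset.sum_le_sum fun i _ => mul_le_mul_of_nonneg_left ?_ (hM i).le
            exact intervalIntegral.abs_integral_le_integral_abs hs.1
        _ = ∫ τ in (0:ℝ)..s, ∑ i, M i * |f τ (xt τ) (u τ) i - (f τ (x τ) (u τ) i + v τ i)| := by
            rw [intervalIntegral.integral_finset_sum
              (fun i _ => (hgint i 0 hs0tf s hs).abs.const_mul (M i))]
            exact Finset.sum_congr rfl fun i _ => (intervalIntegral.integral_const_mul _ _).symm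
        _ ≤ ∫ τ in (0:ℝ)..s, (Lx * φ τ + vhat) := by
            refine intervalIntegral.integral_mono_on hs.1 hGint
              ((hφs.const_mul Lx).add intervalIntegrable_const) ?_
            exact fun τ _ => hGptwise τ
        _ = Lx * F s + vhat * s := by
            rw [intervalIntegral.integral_add (hφs.const_mul Lx) intervalIntegrable_const,
              intervalIntegral.integral_const_mul, intervalIntegral.integral_const]
            simp [hF]
            ring
    calc φ s ≤ ∑ i, M i * (|xt 0 i - x 0 i|
        + ((∫ τ in (0:ℝ)..s, |xt' τ i - f τ (xt τ) (u τ) i|)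
          + |∫ τ in (0:ℝ)..s, (f τ (xt τ) (u τ) i - (f τ (x τ) (u τ) i + v τ i))|)) :=
          Finset.sum_le_sum fun i _ => mul_le_mul_of_nonneg_left (habs i) (hM i).le
      _ = (∑ i, M i * |xt 0 i - x 0 i|)
          + ((∑ i, M i * ∫ τ in (0:ℝ)..s, |xt' τ i - f τ (xt τ) (u τ) i|)
            + ∑ i, M i * |∫ τ in (0:ℝ)..s, (f τ (xt τ) (u τ) i - (f τ (x τ) (u τ) i + v τ i))|) := by
          simp only [mul_add]
          rw [Finset.sum_add_distrib, Finset.sum_add_distrib]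
      _ ≤ θhat + (∑ i, M i * ∫ τ in (0:ℝ)..s, |xt' τ i - f τ (xt τ) (u τ) i|)
          + (vhat * s + Lx * F s) := by
          have := hsum_g
          linarith [hθ]
  -- bound on accumulated local error
  have hE : ∀ s ∈ Icc (0:ℝ) tf,
      (∑ i, M i * ∫ τ in (0:ℝ)..s, |xt' τ i - f τ (xt τ) (u τ) i|) ≤
        (((Finset.range K).filter (fun k => p k < s)).card : ℝ) * Ξ := by
    intro s hs
    rcases eq_or_lt_of_le hs.1 with h0 | h0
    · rw [← h0]
      simp only [intervalIntegral.integral_same, mul_zero, Finset.sum_const_zero]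
      exact mul_nonneg (Nat.cast_nonneg _) hΞ0
    · obtain ⟨k, hkK, hpk, hub, hcard⟩ := hexist_k s h0 hs.2
      rw [hcard]
      have hpkm := hpmem k hkK.le
      have hib : ∀ i, (∫ τ in (0:ℝ)..s, |xt' τ i - f τ (xt τ) (u τ) i|)
          ≤ ((k:ℝ) + 1) * ξhat i := by
        intro i
        have hsplit := intervalIntegral.integral_add_adjacent_intervals
          (heint i 0 hs0tf (p k) hpkm) (heint i (p k) hpkm s hs)
        have hsum := intervalIntegral.sum_integral_adjacent_intervals (μ := volume) (a := p)
          (n := k) (f := fun τ => |xt' τ i - f τ (xt τ) (u τ) i|)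
          (fun j hj => heint i (p j) (hpmem j (by omega)) (p (j+1)) (hpmem (j+1) (by omega)))
        have h2 : (∫ τ in (0:ℝ)..p k, |xt' τ i - f τ (xt τ) (u τ) i|) ≤ (k:ℝ) * ξhat i := by
          rw [← hp0, ← hsum]
          calc (∑ j ∈ Finset.range k, ∫ τ in p j..p (j+1), |xt' τ i - f τ (xt τ) (u τ) i|)
              ≤ ∑ _j ∈ Finset.range k, ξhat i :=
                Finset.sum_le_sum fun j hj => hη j (by
                  have := Finset.mem_range.1 hj; omega) i
            _ = (k:ℝ) * ξhat i := by
                rw [Finset.sum_const, Finset.card_range, nsmul_eq_mul]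
        have h3 : (∫ τ in p k..s, |xt' τ i - f τ (xt τ) (u τ) i|) ≤ ξhat i := by
          refine le_trans ?_ (hη k hkK i)
          refine intervalIntegral.integral_mono_interval le_rfl hpk.le hub ?_
            (heint i (p k) hpkm (p (k+1)) (hpmem (k+1) hkK))
          exact Filter.Eventually.of_forall fun τ => abs_nonneg _
        have : (∫ τ in (0:ℝ)..s, |xt' τ i - f τ (xt τ) (u τ) i|)
            = (∫ τ in (0:ℝ)..p k, |xt' τ i - f τ (xt τ) (u τ) i|)
              + ∫ τ in p k..s, |xt' τ i - f τ (xt τ) (u τ) i| := hsplit.symm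
        rw [this]
        linarith
      calc (∑ i, M i * ∫ τ in (0:ℝ)..s, |xt' τ i - f τ (xt τ) (u τ) i|)
          ≤ ∑ i, M i * (((k:ℝ) + 1) * ξhat i) :=
            Finset.sum_le_sum fun i _ => mul_le_mul_of_nonneg_left (hib i) (hM i).le
        _ = ((k:ℝ) + 1) * Ξ := by
            rw [hΞ, Finset.mul_sum]
            exact Finset.sum_congr rfl fun i _ => by ring
        _ = ((k + 1 : ℕ) : ℝ) * Ξ := by push_cast; ring
  -- Grönwall: the continuous-time error bound (Theorem 3)
  have hgr : ∀ t ∈ Icc (0:ℝ) tf,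
      φ t ≤ ((((Finset.range K).filter (fun k => p k < t)).card : ℝ) * Ξ
        + θhat + vhat * t) * Real.exp (Lx * t) := by
    intro T hT
    set C : ℝ := (((Finset.range K).filter (fun k => p k < T)).card : ℝ) * Ξ
      + θhat + vhat * T with hC
    have hC0 : 0 ≤ C := by
      have h1 : (0:ℝ) ≤ (((Finset.range K).filter (fun k => p k < T)).card : ℝ) * Ξ :=
        mul_nonneg (Nat.cast_nonneg _) hΞ0
      have h2 : 0 ≤ vhat * T := mul_nonneg hvhat hT.1
      rw [hC]; linarith
    have hCbound : ∀ s ∈ Icc (0:ℝ) T, φ s ≤ Lx * F s + C := by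
      intro s hs
      have hs' : s ∈ Icc (0:ℝ) tf := ⟨hs.1, hs.2.trans hT.2⟩
      have h1 := hkey s hs'
      have h2 := hE s hs'
      have h3 : (((Finset.range K).filter (fun k => p k < s)).card : ℝ) * Ξ ≤
          (((Finset.range K).filter (fun k => p k < T)).card : ℝ) * Ξ :=
        mul_le_mul_of_nonneg_right (hNmono s T hs.2) hΞ0
      have h4 : vhat * s ≤ vhat * T := mul_le_mul_of_nonneg_left hs.2 hvhat
      rw [hC]; linarith
    have hderiv : ∀ s ∈ Ico (0:ℝ) T, HasDerivWithinAt F (φ s) (Ici s) s := by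
      intro s hs
      have hs' : s ∈ Ico (0:ℝ) tf := ⟨hs.1, hs.2.trans_le hT.2⟩
      have hmemn : Icc (0:ℝ) tf ∈ nhdsWithin s (Ioi s) := Icc_mem_nhdsGT_of_mem hs'
      exact intervalIntegral.integral_hasDerivWithinAt_right
        (hφint 0 hs0tf s ⟨hs'.1, hs'.2.le⟩)
        ⟨Icc (0:ℝ) tf, hmemn, hφc.aestronglyMeasurable measurableSet_Icc⟩
        ((hφc s ⟨hs'.1, hs'.2.le⟩).mono_of_mem_nhdsWithin hmemn)
    have hF0 : F 0 = 0 := intervalIntegral.integral_same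
    have hgron := le_gronwallBound_of_liminf_deriv_right_le (f := F) (f' := φ) (δ := 0)
      (K := Lx) (ε := C) (a := 0) (b := T)
      (hFc.mono (Icc_subset_Icc le_rfl hT.2))
      (fun s hs rr hr => by
        have hfr := (hderiv s hs).liminf_right_slope_le hr
        refine hfr.mono fun z hz => ?_
        rwa [slope_def_field, div_eq_inv_mul] at hz)
      (by rw [hF0])
      (fun s hs => hCbound s ⟨hs.1, hs.2.le⟩)
    have hFT : F T ≤ gronwallBound 0 Lx C T := by
      have := hgron T ⟨hT.1, le_rfl⟩
      rwa [sub_zero] at this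
    have h5 : φ T ≤ Lx * F T + C := hCbound T ⟨hT.1, le_rfl⟩
    have h6 : Lx * F T ≤ Lx * gronwallBound 0 Lx C T := mul_le_mul_of_nonneg_left hFT hLx
    have h7 := gron_aux (x := T) hLx hC0
    calc φ T ≤ Lx * F T + C := h5
      _ ≤ C + Lx * gronwallBound 0 Lx C T := by linarith
      _ ≤ C * Real.exp (Lx * T) := h7
  -- the predicted trajectory satisfies the tightened constraints at all times
  have hclaimA : ∀ t ∈ Icc (0:ℝ) tf, xt t ∈ pontryaginDiffBall M X (r t) := by
    intro t ht
    obtain ⟨k, hkK, hpkt, hub⟩ := hbracket t ht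
    have hpkm := hpmem k hkK.le
    have hpk1m := hpmem (k+1) hkK
    have hAne : (pontryaginDiffBall M X (r (p k))).Nonempty :=
      hXΔ.mono (pontryagin_anti (by rw [hr (p k)]; exact min_le_right _ _))
    have hAcl : IsClosed (pontryaginDiffBall M X (r (p k))) := pontryagin_closed hXcl _
    have hdisc' : wsdist M (xt (p k)) (pontryaginDiffBall M X (r (p k)))
        ≤ -(Ξ + Lf * (p (k+1) - p k) + (r (p (k+1)) - r (p k))) :=
      le_trans (hdisc k hkK) (neg_le_neg (hα k hkK))
    -- displacement bound on the segment
    have hDbound : wnorm M (xt t - xt (p k)) ≤ Ξ + Lf * (p (k+1) - p k) := by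
      have hD : ∀ i, xt t i - xt (p k) i
          = (∫ τ in p k..t, (xt' τ i - f τ (xt τ) (u τ) i))
            + ∫ τ in p k..t, f τ (xt τ) (u τ) i := by
        intro i
        have h1 := hxtFTC t ht i
        have h2 := hxtFTC (p k) hpkm i
        have hi1 : IntervalIntegrable (fun τ => xt' τ i) volume (p k) t :=
          (hxt'int i).mono_set (huIcc _ _ hpkm ht)
        have hi3 : IntervalIntegrable (fun τ => f τ (xt τ) (u τ) i) volume (p k) t :=
          (hfxtint i).mono_set (huIcc _ _ hpkm ht)
        have hadd := intervalIntegral.integral_add_adjacent_intervals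
          ((hxt'int i).mono_set (huIcc _ _ hs0tf hpkm)) hi1
        have hstep1 : xt t i - xt (p k) i = ∫ τ in p k..t, xt' τ i := by
          rw [h1, h2, ← hadd]; ring
        rw [hstep1, ← intervalIntegral.integral_add (hi1.sub hi3) hi3]
        congr 1
        funext τ
        ring
      have habs : ∀ i, |xt t i - xt (p k) i|
          ≤ (∫ τ in p k..t, |xt' τ i - f τ (xt τ) (u τ) i|)
            + |∫ τ in p k..t, f τ (xt τ) (u τ) i| := by
        intro i
        rw [hD i]
        have t1 := abs_add_le (∫ τ in p k..t, (xt' τ i - f τ (xt τ) (u τ) i))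
          (∫ τ in p k..t, f τ (xt τ) (u τ) i)
        have t2 := intervalIntegral.abs_integral_le_integral_abs (μ := volume) hpkt
          (f := fun τ => xt' τ i - f τ (xt τ) (u τ) i)
        linarith
      have hterm1 : (∑ i, M i * ∫ τ in p k..t, |xt' τ i - f τ (xt τ) (u τ) i|) ≤ Ξ := by
        rw [hΞ]
        refine Finset.sum_le_sum fun i _ => mul_le_mul_of_nonneg_left ?_ (hM i).le
        refine le_trans ?_ (hη k hkK i)
        refine intervalIntegral.integral_mono_interval le_rfl hpkt hub ?_
          (heint i (p k) hpkm (p (k+1)) hpk1m)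
        exact Filter.Eventually.of_forall fun τ => abs_nonneg _
      have hfabsint : ∀ i, IntervalIntegrable (fun τ => |f τ (xt τ) (u τ) i|) volume (p k) t :=
        fun i => ((hfxtint i).mono_set (huIcc _ _ hpkm ht)).abs
      have hterm2 : (∑ i, M i * |∫ τ in p k..t, f τ (xt τ) (u τ) i|)
          ≤ Lf * (p (k+1) - p k) := by
        have hsumint : IntervalIntegrable (fun τ => ∑ i, M i * |f τ (xt τ) (u τ) i|)
            volume (p k) t := by
          have := IntervalIntegrable.sum Finset.univ
            (f := fun i τ => M i * |f τ (xt τ) (u τ) i|)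
            (fun i _ => (hfabsint i).const_mul (M i))
          have heq : (∑ i : Fin n, fun τ => M i * |f τ (xt τ) (u τ) i|)
              = fun τ => ∑ i, M i * |f τ (xt τ) (u τ) i| := by
            funext τ; simp [Finset.sum_apply]
          rwa [heq] at this
        calc (∑ i, M i * |∫ τ in p k..t, f τ (xt τ) (u τ) i|)
            ≤ ∑ i, M i * ∫ τ in p k..t, |f τ (xt τ) (u τ) i| := by
              refine Finset.sum_le_sum fun i _ => mul_le_mul_of_nonneg_left ?_ (hM i).le
              exact intervalIntegral.abs_integral_le_integral_abs hpkt
          _ = ∫ τ in p k..t, ∑ i, M i * |f τ (xt τ) (u τ) i| := by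
              rw [intervalIntegral.integral_finset_sum
                (fun i _ => (hfabsint i).const_mul (M i))]
              exact Finset.sum_congr rfl fun i _ => (intervalIntegral.integral_const_mul _ _).symm
          _ ≤ ∫ τ in p k..t, Lf := by
              refine intervalIntegral.integral_mono_on hpkt hsumint intervalIntegrable_const ?_
              exact fun τ _ => hfb τ (xt τ) (u τ)
          _ = Lf * (t - p k) := by
              rw [intervalIntegral.integral_const, smul_eq_mul]; ring
          _ ≤ Lf * (p (k+1) - p k) := by
              have : t - p k ≤ p (k+1) - p k := by linarith
              exact mul_le_mul_of_nonneg_left this hLf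
      calc wnorm M (xt t - xt (p k))
          = ∑ i, M i * |xt t i - xt (p k) i| := by
            simp only [wnorm]
            exact Finset.sum_congr rfl fun i _ => by rw [Pi.sub_apply]
        _ ≤ ∑ i, M i * ((∫ τ in p k..t, |xt' τ i - f τ (xt τ) (u τ) i|)
              + |∫ τ in p k..t, f τ (xt τ) (u τ) i|) :=
            Finset.sum_le_sum fun i _ => mul_le_mul_of_nonneg_left (habs i) (hM i).le
        _ = (∑ i, M i * ∫ τ in p k..t, |xt' τ i - f τ (xt τ) (u τ) i|)
              + ∑ i, M i * |∫ τ in p k..t, f τ (xt τ) (u τ) i| := by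
            simp only [mul_add]
            rw [Finset.sum_add_distrib]
        _ ≤ Ξ + Lf * (p (k+1) - p k) := add_le_add hterm1 hterm2
    -- now the actual constraint membership
    intro b hb
    have hrt : r t ≤ r (p (k+1)) := hrmono t (p (k+1)) ht.1 hub
    have hg0 : 0 ≤ r (p (k+1)) - r (p k) := by
      have := hrmono (p k) (p (k+1)) hpkm.1 (hstep k hkK).le
      linarith
    have hρ0 : 0 ≤ r (p k) := (hrpos _ hpkm).le
    obtain ⟨b₁, b₂, hbeq, hb1, hb2⟩ := wnorm_decomp hM hρ0 hg0 (hb.trans (by linarith))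
    have hw : wnorm M ((xt t - xt (p k)) + b₂)
        ≤ Ξ + Lf * (p (k+1) - p k) + (r (p (k+1)) - r (p k)) := by
      have := wnorm_add_le hM (xt t - xt (p k)) b₂
      linarith
    have hmemA : xt (p k) + ((xt t - xt (p k)) + b₂) ∈ pontryaginDiffBall M X (r (p k)) :=
      mem_closed_of_wsdist hM hAcl hAne hdisc' hw
    have hfin := hmemA b₁ hb1
    have heq2 : xt (p k) + (xt t - xt (p k) + b₂) + b₁ = xt t + b := by
      rw [hbeq]; abel
    rwa [heq2] at hfin
  -- assembling
  have hδr : ∀ t ∈ Icc (0:ℝ) tf, wnorm M (x t - xt t) ≤ r t := by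
    intro t ht
    rw [hr t]
    refine le_min ?_ ?_
    · have h1 := hgr t ht
      have : wnorm M (x t - xt t) = φ t := by
        rw [hφ]; simp only [wnorm]
        exact Finset.sum_congr rfl fun i _ => by rw [Pi.sub_apply, abs_sub_comm]
      rw [this]; exact h1
    · have := hδ t ht
      have heq : wnorm M (x t - xt t) = ∑ i, M i * |xt t i - x t i| := by
        simp only [wnorm]
        exact Finset.sum_congr rfl fun i _ => by rw [Pi.sub_apply, abs_sub_comm]
      rw [heq]; exact this
  constructor
  · intro t ht
    have hmem := hclaimA t ht
    refine ⟨?_, hmem⟩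
    have h1 : winfDist M (xt t) (pontryaginDiffBall M X (r t)) ≤ 0 := by
      have := winfDist_le hM (xt t) hmem
      simpa [wnorm_zero] using this
    have h2 : 0 ≤ winfDist M (xt t) (pontryaginDiffBall M X (r t))ᶜ :=
      winfDist_nonneg hM _ _
    unfold wsdist
    linarith
  · intro t ht
    have hmem := hclaimA t ht
    have := hmem (x t - xt t) (hδr t ht)
    simpa using this
end
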